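/- arXiv:1603.01043 — 8 statements merged into one kernel-verified Lean document; each statement's English description precedes it below -/
import Mathlib

section
/- If G is a K_r-divisible r-partite graph on vertex classes V_1,...,V_r, then for all pairs of distinct indices (j_1,j_2) and (j_3,j_4) with j_1≠j_2 and j_3≠j_4, the number of edges between V_{j_1} and V_{j_2} equals the number of edges between V_{j_3} and V_{j_4}; in particular, the total number of edges of G is divisible by C(r,2). -/
open Finset

/-- The degree of `v` into the vertex set `A`. -/
noncomputable def fdeg {β : Type*} (G : SimpleGraph β) (v : β) (A : Finset β) : ℕ :=
  ((A : Set β) ∩ G.neighborSet v).ncard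

lemma fdeg_eq {β : Type*} (G : SimpleGraph β) (v : β) (A : Finset β)
    [DecidablePred (G.Adj v)] :
    fdeg G v A = (A.filter (fun w => G.Adj v w)).card := by
  rw [fdeg, ← Set.ncard_coe_finset]
  congr 1
  ext w
  simp [SimpleGraph.mem_neighborSet]

lemma sum_fdeg_comm {β : Type*} (G : SimpleGraph β) (A B : Finset β) :
    ∑ x ∈ A, fdeg G x B = ∑ y ∈ B, fdeg G y A := by
  classical
  simp_rw [fdeg_eq, Finset.card_filter]
  rw [Finset.sum_comm]
  apply Finset.sum_congr rfl; intro y _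
  apply Finset.sum_congr rfl; intro x _
  rw [SimpleGraph.adj_comm]

/-- If `G` is a `K_r`-divisible `r`-partite graph on vertex classes `V 0, ..., V (r-1)`, then
for all pairs of distinct indices `(j₁,j₂)` and `(j₃,j₄)`, the number of edges between
`V j₁` and `V j₂` equals the number of edges between `V j₃` and `V j₄`; in particular
`e(G)` is divisible by `C(r,2)`. -/
theorem stmt0 {β : Type*} [Fintype β] [DecidableEq β] {r : ℕ}
    (V : Fin r → Finset β) (G : SimpleGraph β)
    (hdisj : ∀ j₁ j₂ : Fin r, j₁ ≠ j₂ → Disjoint (V j₁) (V j₂))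
    (hpartite : ∀ x y : β, G.Adj x y → ∃ j₁ j₂ : Fin r, j₁ ≠ j₂ ∧ x ∈ V j₁ ∧ y ∈ V j₂)
    (hdiv : ∀ j₁ j₂ : Fin r, ∀ v : β, v ∉ V j₁ → v ∉ V j₂ →
      fdeg G v (V j₁) = fdeg G v (V j₂)) :
    (∀ j₁ j₂ j₃ j₄ : Fin r, j₁ ≠ j₂ → j₃ ≠ j₄ →
      (∑ x ∈ V j₁, fdeg G x (V j₂)) = ∑ x ∈ V j₃, fdeg G x (V j₄)) ∧
    r.choose 2 ∣ G.edgeSet.ncard := by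
  classical
  -- notation
  set e : Fin r → Fin r → ℕ := fun a b => ∑ x ∈ V a, fdeg G x (V b) with he
  -- membership in V a means not in V b for b ≠ a
  have hnot : ∀ (a b : Fin r), b ≠ a → ∀ x ∈ V a, x ∉ V b := by
    intro a b hba x hx hxb
    exact (Finset.disjoint_left.1 (hdisj b a hba)) hxb hx
  -- key lemma
  have key : ∀ a b c : Fin r, b ≠ a → c ≠ a → e a b = e a c := by
    intro a b c hb hc
    apply Finset.sum_congr rfl
    intro x hx
    exact hdiv b c x (hnot a b hb x hx) (hnot a c hc x hx)
  have sym : ∀ a b : Fin r, e a b = e b a := fun a b => sum_fdeg_comm G (V a) (V b)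
  have main : ∀ j₁ j₂ j₃ j₄ : Fin r, j₁ ≠ j₂ → j₃ ≠ j₄ → e j₁ j₂ = e j₃ j₄ := by
    intro j₁ j₂ j₃ j₄ h12 h34
    by_cases h31 : j₃ = j₁
    · subst h31
      exact key j₃ j₂ j₄ (Ne.symm h12) (Ne.symm h34)
    · by_cases h32 : j₃ = j₂
      · subst h32
        rw [sym]
        exact key j₃ j₁ j₄ h12 (Ne.symm h34)
      · calc e j₁ j₂ = e j₁ j₃ := key j₁ j₂ j₃ (Ne.symm h12) h31
          _ = e j₃ j₁ := sym _ _
          _ = e j₃ j₄ := key j₃ j₁ j₄ (fun h => h31 h.symm) (Ne.symm h34)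
  refine ⟨main, ?_⟩
  by_cases hr : r ≤ 1
  · have hG : G = ⊥ := by
      ext x y
      simp only [SimpleGraph.bot_adj, iff_false]
      intro hadj
      obtain ⟨a, b, hab, _, _⟩ := hpartite x y hadj
      exact hab (Fin.ext (by omega))
    simp [hG]
  · push_neg at hr
    have h0 : (0 : ℕ) < r := by omega
    have h1 : (1 : ℕ) < r := hr
    set a0 : Fin r := ⟨0, h0⟩
    set a1 : Fin r := ⟨1, h1⟩
    have ha01 : a0 ≠ a1 := by simp [a0, a1, Fin.ext_iff]
    set e0 : ℕ := e a0 a1 with he0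
    -- per-vertex: degree splits over classes
    have hvert : ∀ v : β, fdeg G v Finset.univ = ∑ b, fdeg G v (V b) := by
      intro v
      simp_rw [fdeg_eq]
      rw [← Finset.card_biUnion]
      · congr 1
        ext w
        simp only [Finset.mem_filter, Finset.mem_univ, true_and, Finset.mem_biUnion]
        constructor
        · intro hadj
          obtain ⟨j₁, j₂, hne, _, hw⟩ := hpartite v w hadj
          exact ⟨j₂, hw, hadj⟩
        · rintro ⟨b, -, h⟩
          exact h
      · intro b _ c _ hbc
        exact Finset.disjoint_filter_filter (hdisj b c hbc)
    -- diagonal is zero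
    have hdiag : ∀ b : Fin r, e b b = 0 := by
      intro b
      apply Finset.sum_eq_zero
      intro x hx
      rw [fdeg_eq]
      simp only [Finset.card_eq_zero, Finset.filter_eq_empty_iff]
      intro w hw hadj
      obtain ⟨j₁, j₂, hne, hx', hw'⟩ := hpartite x w hadj
      have hj₁ : j₁ = b := by
        by_contra h
        exact (Finset.disjoint_left.1 (hdisj j₁ b h)) hx' hx
      have hj₂ : j₂ = b := by
        by_contra h
        exact (Finset.disjoint_left.1 (hdisj j₂ b h)) hw' hw
      exact hne (hj₁.trans hj₂.symm)
    -- off-diagonal all equal e0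
    have hoff : ∀ a b : Fin r, a ≠ b → e a b = e0 := fun a b hab =>
      main a b a0 a1 hab ha01
    -- handshake
    have hsum : ∑ v, G.degree v = ∑ b : Fin r, ∑ a : Fin r, e b a := by
      have hdeg : ∀ v : β, G.degree v = fdeg G v Finset.univ := by
        intro v
        rw [fdeg_eq, SimpleGraph.degree]
        congr 1
        ext w
        simp [SimpleGraph.mem_neighborFinset]
      calc ∑ v, G.degree v = ∑ v, ∑ b, fdeg G v (V b) := by
            simp_rw [← hvert]; exact Finset.sum_congr rfl fun v _ => hdeg v
        _ = ∑ b, ∑ v, fdeg G v (V b) := Finset.sum_comm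
        _ = ∑ b, ∑ w ∈ V b, fdeg G w Finset.univ := by
            exact Finset.sum_congr rfl fun b _ => sum_fdeg_comm G Finset.univ (V b)
        _ = ∑ b, ∑ w ∈ V b, ∑ a, fdeg G w (V a) := by
            exact Finset.sum_congr rfl fun b _ =>
              Finset.sum_congr rfl fun w _ => hvert w
        _ = ∑ b : Fin r, ∑ a : Fin r, e b a := by
            exact Finset.sum_congr rfl fun b _ => Finset.sum_comm
    have hrow : ∀ b : Fin r, ∑ a : Fin r, e b a = (r - 1) * e0 := by
      intro b
      rw [← Finset.add_sum_erase _ _ (Finset.mem_univ b), hdiag b, zero_add]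
      rw [Finset.sum_congr rfl
        (fun a ha => hoff b a (Ne.symm (Finset.ne_of_mem_erase ha)))]
      rw [Finset.sum_const, Finset.card_erase_of_mem (Finset.mem_univ b)]
      simp [Fintype.card_fin, Nat.smul_one_eq_cast]
    have htot : ∑ v, G.degree v = r * ((r - 1) * e0) := by
      rw [hsum, Finset.sum_congr rfl fun b _ => hrow b, Finset.sum_const]
      simp [Fintype.card_fin]
    have hchoose : 2 * r.choose 2 = r * (r - 1) := by
      rw [Nat.choose_two_right, Nat.mul_div_cancel']
      exact (Nat.even_mul_pred_self r).two_dvd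
    have hE : G.edgeSet.ncard = G.edgeFinset.card := Set.ncard_eq_toFinset_card' _
    have h2 : 2 * G.edgeFinset.card = 2 * (r.choose 2 * e0) := by
      rw [← SimpleGraph.sum_degrees_eq_twice_card_edges, htot, ← mul_assoc,
        ← hchoose, mul_assoc]
    have := Nat.eq_of_mul_eq_mul_left (by norm_num) h2
    rw [hE, this]
    exact Dvd.intro _ rfl
end

section
/- For r≥3, m∈ℕ, n=(r-1)m, and 1≤q≤m, let G_q be the graph obtained from G_0 (the intersection of the complete r-partite graph on classes of size n with the complete (r-1)-partite graph on classes U^1,...,U^{r-1} of the type described) by adding, inside each U^i, a q-regular bipartite graph between U^i_{j_1} and U^i_{j_2} for each pair 1≤j_1<j_2≤r. Then G_q is K_r-divisible and every vertex v∉V_j satisfies d(v,V_j)=(r-2)m+q. -/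
open Finset

/-- For `r ≥ 3`, `n = (r-1)m` and `1 ≤ q ≤ m`, the graph `G_q = G₀ ⊔ H` obtained from the
extremal construction `G₀` by adding inside each `U i` a `q`-regular bipartite graph between
`U i ∩ V j₁` and `U i ∩ V j₂` for each pair `j₁ ≠ j₂` is `K_r`-divisible, and every vertex
`v ∉ V j` satisfies `d(v, V j) = (r-2)m + q`. -/
theorem stmt2 {β : Type*} [Fintype β] [DecidableEq β] {r m q n : ℕ}
    (hr : 3 ≤ r) (hn : n = (r - 1) * m) (hq1 : 1 ≤ q) (hqm : q ≤ m)
    (V : Fin r → Finset β) (U : Fin (r - 1) → Finset β)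
    (hVdisj : ∀ j₁ j₂ : Fin r, j₁ ≠ j₂ → Disjoint (V j₁) (V j₂))
    (hUdisj : ∀ i₁ i₂ : Fin (r - 1), i₁ ≠ i₂ → Disjoint (U i₁) (U i₂))
    (hVcov : ∀ x : β, ∃ j, x ∈ V j) (hUcov : ∀ x : β, ∃ i, x ∈ U i)
    (hV : ∀ j, (V j).card = n)
    (hUV : ∀ (i : Fin (r - 1)) (j : Fin r), ((U i) ∩ (V j)).card = m)
    (G₀ H : SimpleGraph β)
    (hG₀ : ∀ x y : β, G₀.Adj x y ↔ x ≠ y ∧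
      (∃ j₁ j₂ : Fin r, j₁ ≠ j₂ ∧ x ∈ V j₁ ∧ y ∈ V j₂) ∧
      (∃ i₁ i₂ : Fin (r - 1), i₁ ≠ i₂ ∧ x ∈ U i₁ ∧ y ∈ U i₂))
    (hH : ∀ x y : β, H.Adj x y →
      ∃ (i : Fin (r - 1)) (j₁ j₂ : Fin r), j₁ ≠ j₂ ∧ x ∈ U i ∩ V j₁ ∧ y ∈ U i ∩ V j₂)
    (hreg : ∀ (i : Fin (r - 1)) (j₁ j₂ : Fin r), j₁ ≠ j₂ →
      ∀ v ∈ U i ∩ V j₁, fdeg H v (U i ∩ V j₂) = q) :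
    (∀ (j : Fin r) (v : β), v ∉ V j → fdeg (G₀ ⊔ H) v (V j) = (r - 2) * m + q) ∧
    (∀ j₁ j₂ : Fin r, ∀ v : β, v ∉ V j₁ → v ∉ V j₂ →
      fdeg (G₀ ⊔ H) v (V j₁) = fdeg (G₀ ⊔ H) v (V j₂)) := by

  have key : ∀ (j : Fin r) (v : β), v ∉ V j → fdeg (G₀ ⊔ H) v (V j) = (r - 2) * m + q := by
    intro j v hvj
    obtain ⟨j', hvj'⟩ := hVcov v
    have hjj : j' ≠ j := fun h => hvj (h ▸ hvj')
    obtain ⟨i, hvi⟩ := hUcov v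
    have hUuniq : ∀ (x : β) (i₁ i₂ : Fin (r-1)), x ∈ U i₁ → x ∈ U i₂ → i₁ = i₂ := by
      intro x i₁ i₂ h1 h2
      by_contra hne
      exact Finset.disjoint_left.mp (hUdisj i₁ i₂ hne) h1 h2
    have hset : (V j : Set β) ∩ (G₀ ⊔ H).neighborSet v
        = ((V j \ U i : Finset β) : Set β) ∪
          (((U i ∩ V j : Finset β) : Set β) ∩ H.neighborSet v) := by
      ext y
      simp only [Set.mem_inter_iff, SimpleGraph.mem_neighborSet, SimpleGraph.sup_adj,
        Set.mem_union, Finset.coe_sdiff, Set.mem_diff, Finset.mem_coe, Finset.coe_inter,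
        Finset.mem_inter]
      constructor
      · rintro ⟨hyV, hadj | hadj⟩
        · left
          obtain ⟨hne, -, i₁, i₂, hi12, hvi₁, hyi₂⟩ := (hG₀ v y).mp hadj
          have hi1 : i₁ = i := hUuniq v i₁ i hvi₁ hvi
          refine ⟨hyV, fun hyU => hi12 ?_⟩
          rw [hi1]
          exact hUuniq y i i₂ hyU hyi₂
        · right
          obtain ⟨i', j₁, j₂, hj12, hv2, hy2⟩ := hH v y hadj
          obtain ⟨hvU, -⟩ := Finset.mem_inter.mp hv2
          obtain ⟨hyU, -⟩ := Finset.mem_inter.mp hy2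
          have hii : i' = i := hUuniq v i' i hvU hvi
          subst hii
          exact ⟨⟨hyU, hyV⟩, hadj⟩
      · rintro (⟨hyV, hyU⟩ | ⟨⟨-, hyV⟩, hadj⟩)
        · refine ⟨hyV, Or.inl ?_⟩
          obtain ⟨i₂, hyi₂⟩ := hUcov y
          have hi2 : i₂ ≠ i := fun h => hyU (h ▸ hyi₂)
          refine (hG₀ v y).mpr ⟨fun h => hvj (h ▸ hyV), ⟨j', j, hjj, hvj', hyV⟩,
            ⟨i, i₂, fun h => hi2 h.symm, hvi, hyi₂⟩⟩
        · exact ⟨hyV, Or.inr hadj⟩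
    have hdisj : Disjoint ((V j \ U i : Finset β) : Set β)
        (((U i ∩ V j : Finset β) : Set β) ∩ H.neighborSet v) := by
      rw [Set.disjoint_left]
      rintro y hy ⟨hy2, -⟩
      simp only [Finset.coe_sdiff, Set.mem_diff, Finset.mem_coe] at hy
      simp only [Finset.coe_inter, Set.mem_inter_iff, Finset.mem_coe] at hy2
      exact hy.2 hy2.1
    have hq : (((U i ∩ V j : Finset β) : Set β) ∩ H.neighborSet v).ncard = q :=
      hreg i j' j hjj v (Finset.mem_inter.mpr ⟨hvi, hvj'⟩)
    have hc : (V j \ U i).card + (V j ∩ U i).card = (V j).card :=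
      Finset.card_sdiff_add_card_inter _ _
    rw [Finset.inter_comm, hUV i j, hV j] at hc
    have hnm : n - m = (r - 2) * m := by
      have h1 : r - 1 = (r - 2) + 1 := by omega
      rw [hn, h1, add_mul, one_mul]
      omega
    have hcard : (V j \ U i).card = (r - 2) * m := by omega
    rw [fdeg, hset, Set.ncard_union_eq hdisj (Set.toFinite _) (Set.toFinite _),
      Set.ncard_coe_finset, hcard, hq]
  exact ⟨key, fun j₁ j₂ v h1 h2 => by rw [key j₁ v h1, key j₂ v h2]⟩
end

section
/- Let W = (W_1,...,W_r) be finite disjoint vertex sets. There exists N = N(W) such that every irreducible K_r-divisible multigraph on W has edge multiplicity at most N. -/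
open Finset

/-- A multigraph (given by its multiplicity function `μ`) on the vertex classes
`W 0, ..., W (r-1)` is `K_r`-divisible if every vertex outside two classes has the same
total multiplicity of edges into each of them. -/
def MGDivisible {β : Type*} [Fintype β] {r : ℕ} (W : Fin r → Finset β) (μ : β → β → ℕ) : Prop :=
  ∀ j₁ j₂ : Fin r, ∀ v : β, v ∉ W j₁ → v ∉ W j₂ →
    (∑ w ∈ W j₁, μ v w) = ∑ w ∈ W j₂, μ v w

/-- A `K_r`-divisible multigraph is irreducible if it has no non-trivial proper
`K_r`-divisible submultigraph. -/
def MGIrreducible {β : Type*} [Fintype β] {r : ℕ} (W : Fin r → Finset β) (μ : β → β → ℕ) : Prop :=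
  ∀ ν : β → β → ℕ, (∀ a b, ν a b ≤ μ a b) → (∀ a b, ν a b = ν b a) →
    MGDivisible W ν → (∃ a b, ν a b ≠ 0) → ν = μ

theorem Set.Finite.exists_forall_apply_le {ι κ α : Type*} [Finite ι] [Finite κ]
    [SemilatticeSup α] [Nonempty α] {S : Set (ι → κ → α)} (hS : S.Finite) :
    ∃ N : α, ∀ μ ∈ S, ∀ a b, μ a b ≤ N := by
  obtain ⟨M, hM⟩ := hS.bddAbove
  obtain ⟨N, hN⟩ := Finite.bddAbove_range (Function.uncurry M)
  exact ⟨N, fun μ hμ a b => (hM hμ a b).trans (hN ⟨(a, b), rfl⟩)⟩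

theorem isAntichain_setOf_mgIrreducible {β : Type*} [Fintype β] {r : ℕ} (W : Fin r → Finset β) :
    IsAntichain (· ≤ ·) {μ : β → β → ℕ | (∀ a b, μ a b = μ b a) ∧ MGDivisible W μ ∧
      MGIrreducible W μ ∧ ∃ a b, μ a b ≠ 0} :=
  fun _ ⟨hsymm, hdiv, _, hne⟩ _ ⟨_, _, hirr, _⟩ hμν hle =>
    hμν (hirr _ hle hsymm hdiv hne)

/- The irreducible multigraphs form an antichain for the pointwise order, which is a
well-quasi-order on `β → β → ℕ` by Dickson's lemma; so there are only finitely many. -/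
theorem stmt4_general {β : Type*} [Fintype β] {r : ℕ} (W : Fin r → Finset β) :
    ∃ N : ℕ, ∀ μ : β → β → ℕ,
      (∀ a b, μ a b = μ b a) → (∀ a, μ a a = 0) →
      (∀ a b, μ a b ≠ 0 → ∃ j₁ j₂ : Fin r, j₁ ≠ j₂ ∧ a ∈ W j₁ ∧ b ∈ W j₂) →
      MGDivisible W μ → MGIrreducible W μ →
      ∀ a b, μ a b ≤ N := by
  obtain ⟨N, hN⟩ := (WellQuasiOrderedLE.finite_of_isAntichain
    (isAntichain_setOf_mgIrreducible W)).exists_forall_apply_le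
  refine ⟨N, fun μ hsymm _ _ hdiv hirr a b => ?_⟩
  by_cases hμ : ∃ a b, μ a b ≠ 0
  · exact hN μ ⟨hsymm, hdiv, hirr, hμ⟩ a b
  · push Not at hμ
    simp [hμ a b]

/-- For fixed disjoint vertex classes `W = (W 1, ..., W r)` there exists `N = N(W)` such that
every irreducible `K_r`-divisible multigraph on `W` has edge multiplicity at most `N`. -/
theorem stmt4 {β : Type*} [Fintype β] [DecidableEq β] {r : ℕ} (W : Fin r → Finset β)
    (hdisj : ∀ j₁ j₂ : Fin r, j₁ ≠ j₂ → Disjoint (W j₁) (W j₂)) :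
    ∃ N : ℕ, ∀ μ : β → β → ℕ,
      (∀ a b, μ a b = μ b a) → (∀ a, μ a a = 0) →
      (∀ a b, μ a b ≠ 0 → ∃ j₁ j₂ : Fin r, j₁ ≠ j₂ ∧ a ∈ W j₁ ∧ b ∈ W j₂) →
      MGDivisible W μ → MGIrreducible W μ →
      ∀ a b, μ a b ≤ N :=
  stmt4_general W
end

section
/- Suppose 1/n ≪ α ≪ ξ ≪ 1. Let G be a bipartite graph on (A,B) with |A|=|B|=n and minimum degree δ(G) ≥ (1/2+4ξ)n. For each vertex v let n_v ∈ ℕ satisfy (ξ-α)n ≤ n_v ≤ (ξ+α)n, and suppose Σ_{a∈A} n_a = Σ_{b∈B} n_b. Then G contains a spanning subgraph G' with d_{G'}(v) = n_v for every vertex v. -/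
/-!
Split every vertex `v` into `n_v` copies and every edge `ab` of `G` into a left and a right copy;
join the left copy of `ab` to its right copy and to the copies of `b`, and the right copy to the
copies of `a`.  Hall's condition for matching all copies of vertices of `A` and all left copies
of edges is the cut condition `∑_{a ∈ P} n_a ≤ e(P, T) + ∑_{b ∉ T} n_b` for `P ⊆ A`, `T ⊆ B`.
In such a matching, the edges whose left copy goes to a copy of a vertex of `B` give every `a`
at least `n_a` and every `b` at most `n_b` neighbours, hence exactly that many since
`∑ n_a = ∑ n_b`.

The minimum degree gives `e(P, T) ≥ |P| (|T| - (1/2 - 4ξ) n)` and the symmetric bound.  If `|T|`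
or `|P|` is at least `(1/2 - 3ξ + α) n`, these bounds pay for `∑_{a ∈ P} n_a`; otherwise
`|P| (ξ + α) ≤ (n - |T|) (ξ - α)` as soon as `α ≤ ξ²`, and the demand outside `T` pays for it.
-/

open Finset

namespace Finset

variable {V W : Type*} [DecidableEq V] [DecidableEq W]

theorem card_filter_fst_eq [Fintype W] (F : Finset (V × W)) (a : V) :
    #{x ∈ F | x.1 = a} = #{b | (a, b) ∈ F} :=
  card_nbij' Prod.snd (Prod.mk a) (fun x hx => by grind) (fun b hb => by simp_all)
    (fun x hx => by grind) (fun b _ => rfl)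

theorem card_filter_snd_eq [Fintype V] (F : Finset (V × W)) (b : W) :
    #{x ∈ F | x.2 = b} = #{a | (a, b) ∈ F} :=
  card_nbij' Prod.fst (·, b) (fun x hx => by grind) (fun a ha => by simp_all)
    (fun x hx => by grind) (fun a _ => rfl)

theorem card_add_card_filter_le [Fintype W] (T : Finset W) (r : W → Prop) [DecidablePred r] :
    #T + #{b | r b} ≤ #{b ∈ T | r b} + Fintype.card W := by
  rw [← card_union_add_card_inter T, inter_filter, inter_univ, add_comm]
  gcongr
  exact card_le_univ _

theorem ncard_sep_coe_eq_card_filter {β : Type*} (B : Finset β) (r : β → Prop)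
    [DecidablePred r] : {w ∈ (B : Set β) | r w}.ncard = #{b : B | r b} := by
  rw [show {w ∈ (B : Set β) | r w} = ↑(B.filter r) by ext; simp, Set.ncard_coe_finset,
    univ_eq_attach, filter_attach, card_map, card_attach]

end Finset

section CutCondition

variable {V W : Type*} [DecidableEq V] [DecidableEq W] (E : Finset (V × W)) (p : V → ℕ)
  (q : W → ℕ)

def CutCondition [Fintype W] : Prop :=
  ∀ (P : Finset V) (T : Finset W), ∑ a ∈ P, p a ≤ #{x ∈ P ×ˢ T | x ∈ E} + ∑ b ∈ Tᶜ, q b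

def splitNbhd [Fintype W] : (Σ a, Fin (p a)) ⊕ E → Finset (E ⊕ Σ b, Fin (q b))
  | .inl x => ({e : E | e.1.1 = x.1} : Finset E).disjSum ∅
  | .inr e => ({e} : Finset E).disjSum {y | y.1 = e.1.2}

theorem card_le_card_biUnion_splitNbhd [Fintype W] (hcut : CutCondition E p q)
    (S : Finset ((Σ a, Fin (p a)) ⊕ E)) : #S ≤ #(S.biUnion (splitNbhd E p q)) := by
  -- The neighbourhood of `S` contains the edges of `E` from `P` to `Qᶜ`, the edges in `S` and
  -- all copies of vertices of `Q`; the cut condition for `(P, Qᶜ)` says that this is enough.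
  set N := S.biUnion (splitNbhd E p q)
  set P : Finset V := S.toLeft.image Sigma.fst
  set Q : Finset W := S.toRight.image fun e => e.1.2
  have hSP : #S.toLeft ≤ ∑ a ∈ P, p a :=
    calc #S.toLeft ≤ #(P.sigma fun a => (univ : Finset (Fin (p a)))) :=
          card_le_card fun x hx => mem_sigma.2 ⟨mem_image_of_mem _ hx, mem_univ _⟩
      _ = ∑ a ∈ P, p a := by simp [card_sigma]
  have hQN : ∑ b ∈ Q, q b ≤ #N.toRight :=
    calc ∑ b ∈ Q, q b = #(Q.sigma fun b => (univ : Finset (Fin (q b)))) := by simp [card_sigma]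
      _ ≤ #N.toRight := card_le_card fun y hy => by
          obtain ⟨e, he, hey⟩ := mem_image.1 (mem_sigma.1 hy).1
          refine mem_toRight.2 (mem_biUnion.2 ⟨.inr e, mem_toRight.1 he, ?_⟩)
          simp [splitNbhd, hey]
  have hPN : #((P ×ˢ Qᶜ).subtype (· ∈ E)) + #S.toRight ≤ #N.toLeft := by
    rw [← card_union_of_disjoint]
    · refine card_le_card fun e he => mem_toLeft.2 (mem_biUnion.2 ?_)
      rcases mem_union.1 he with he | he
      · obtain ⟨x, hx, hxe⟩ := mem_image.1 (mem_product.1 (mem_subtype.1 he)).1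
        exact ⟨.inl x, mem_toLeft.1 hx, by simp [splitNbhd, hxe]⟩
      · exact ⟨.inr e, mem_toRight.1 he, by simp [splitNbhd]⟩
    · refine disjoint_left.2 fun e he he' => ?_
      exact (mem_compl.1 (mem_product.1 (mem_subtype.1 he)).2) (mem_image_of_mem _ he')
  have hcutPQ := hcut P Qᶜ
  rw [compl_compl, ← card_subtype] at hcutPQ
  rw [← card_toLeft_add_card_toRight (u := S), ← card_toLeft_add_card_toRight (u := N)]
  omega

variable {E p q}

def matchedEdges (f : (Σ a, Fin (p a)) ⊕ E → E ⊕ Σ b, Fin (q b)) : Finset E :=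
  {e | f (.inr e) ≠ .inl e}

variable [Fintype W] {f : (Σ a, Fin (p a)) ⊕ E → E ⊕ Σ b, Fin (q b)}

theorem le_card_matchedEdges_fst (hf : f.Injective) (hfN : ∀ x, f x ∈ splitNbhd E p q x)
    (a : V) : p a ≤ #{e ∈ matchedEdges f | e.1.1 = a} :=
  calc p a = #(univ : Finset (Fin (p a))) := by simp
    _ ≤ #(({e ∈ matchedEdges f | e.1.1 = a} : Finset E).disjSum (∅ : Finset (Σ b, Fin (q b)))) := by
      refine card_le_card_of_injOn (fun j => f (.inl ⟨a, j⟩)) (fun j _ => ?_)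
        (fun j _ j' _ h => by simpa using hf h)
      have hj := hfN (.inl ⟨a, j⟩)
      rcases h : f (.inl ⟨a, j⟩) with e | y
      · simp only [splitNbhd, h, inl_mem_disjSum, mem_filter, mem_univ, true_and] at hj
        simp only [mem_coe, h, inl_mem_disjSum, mem_filter]
        refine ⟨mem_filter.2 ⟨mem_univ _, fun he => ?_⟩, hj⟩
        exact Sum.inl_ne_inr (hf (h.trans he.symm))
      · simp [splitNbhd, h] at hj
    _ = #{e ∈ matchedEdges f | e.1.1 = a} := by simp

theorem card_matchedEdges_snd_le (hf : f.Injective) (hfN : ∀ x, f x ∈ splitNbhd E p q x)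
    (b : W) : #{e ∈ matchedEdges f | e.1.2 = b} ≤ q b :=
  calc #{e ∈ matchedEdges f | e.1.2 = b}
    _ ≤ #((∅ : Finset E).disjSum
          (({b} : Finset W).sigma fun b => (univ : Finset (Fin (q b))))) := by
      refine card_le_card_of_injOn (fun e => f (.inr e)) (fun e he => ?_)
        (fun e _ e' _ h => by simpa using hf h)
      obtain ⟨heF, rfl⟩ := mem_filter.1 he
      have he := hfN (.inr e)
      rcases h : f (.inr e) with e' | y
      · simp only [splitNbhd, h, inl_mem_disjSum, mem_singleton] at he
        subst he
        exact absurd h (mem_filter.1 heF).2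
      · simp only [splitNbhd, h, inr_mem_disjSum, mem_filter, mem_univ, true_and] at he
        simp only [mem_coe, h, inr_mem_disjSum, mem_sigma, mem_singleton, he, mem_univ, and_self]
    _ = q b := by simp

theorem exists_subset_card_eq_of_cutCondition [Fintype V] (hsum : ∑ a, p a = ∑ b, q b)
    (hcut : CutCondition E p q) :
    ∃ F ⊆ E, (∀ a, #{b | (a, b) ∈ F} = p a) ∧ ∀ b, #{a | (a, b) ∈ F} = q b := by
  obtain ⟨f, hf, hfN⟩ := (all_card_le_biUnion_card_iff_exists_injective _).1
    (card_le_card_biUnion_splitNbhd E p q hcut)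
  have hV := le_card_matchedEdges_fst hf hfN
  have hW := card_matchedEdges_snd_le hf hfN
  have hfiber : ∑ a, #{e ∈ matchedEdges f | e.1.1 = a}
      = ∑ b, #{e ∈ matchedEdges f | e.1.2 = b} := by
    rw [← card_eq_sum_card_fiberwise (fun _ _ => mem_univ _),
      ← card_eq_sum_card_fiberwise (fun _ _ => mem_univ _)]
  have hsumV : ∑ a, p a = ∑ a, #{e ∈ matchedEdges f | e.1.1 = a} :=
    le_antisymm (sum_le_sum fun a _ => hV a) (hfiber ▸ hsum ▸ sum_le_sum fun b _ => hW b)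
  have hsumW : ∑ b, #{e ∈ matchedEdges f | e.1.2 = b} = ∑ b, q b := hfiber ▸ hsum ▸ hsumV.symm
  refine ⟨(matchedEdges f).map (.subtype _), fun x hx => ?_, fun a => ?_, fun b => ?_⟩
  · obtain ⟨e, -, rfl⟩ := mem_map.1 hx
    exact e.2
  · rw [← card_filter_fst_eq, filter_map, card_map]
    exact ((sum_eq_sum_iff_of_le fun a _ => hV a).1 hsumV a (mem_univ _)).symm
  · rw [← card_filter_snd_eq, filter_map, card_map]
    exact (sum_eq_sum_iff_of_le fun b _ => hW b).1 hsumW b (mem_univ _)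

end CutCondition

section MinDegree

variable {V W : Type*} [DecidableEq V] [DecidableEq W] (E : Finset (V × W))

theorem card_cut_eq_sum_left (P : Finset V) (T : Finset W) :
    #{x ∈ P ×ˢ T | x ∈ E} = ∑ a ∈ P, #{b ∈ T | (a, b) ∈ E} := by
  simp only [card_filter, sum_product]

theorem card_cut_eq_sum_right (P : Finset V) (T : Finset W) :
    #{x ∈ P ×ˢ T | x ∈ E} = ∑ b ∈ T, #{a ∈ P | (a, b) ∈ E} := by
  simp only [card_filter, sum_product_right]

theorem mul_le_card_cut_left [Fintype W] {δ : ℝ} (hdeg : ∀ a, δ ≤ #{b | (a, b) ∈ E})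
    (P : Finset V) (T : Finset W) :
    #P * (#T + δ - Fintype.card W) ≤ (#{x ∈ P ×ˢ T | x ∈ E} : ℝ) := by
  rw [card_cut_eq_sum_left, ← nsmul_eq_mul]
  push_cast
  refine card_nsmul_le_sum _ _ _ fun a _ => ?_
  have h : (#T + #{b | (a, b) ∈ E} : ℝ) ≤ #{b ∈ T | (a, b) ∈ E} + Fintype.card W := by
    exact_mod_cast card_add_card_filter_le T fun b => (a, b) ∈ E
  linarith [hdeg a]

theorem mul_le_card_cut_right [Fintype V] {δ : ℝ} (hdeg : ∀ b, δ ≤ #{a | (a, b) ∈ E})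
    (P : Finset V) (T : Finset W) :
    #T * (#P + δ - Fintype.card V) ≤ (#{x ∈ P ×ˢ T | x ∈ E} : ℝ) := by
  rw [card_cut_eq_sum_right, ← nsmul_eq_mul]
  push_cast
  refine card_nsmul_le_sum _ _ _ fun b _ => ?_
  have h : (#P + #{a | (a, b) ∈ E} : ℝ) ≤ #{a ∈ P | (a, b) ∈ E} + Fintype.card V := by
    exact_mod_cast card_add_card_filter_le P fun a => (a, b) ∈ E
  linarith [hdeg b]

theorem le_cut_add_of_minDegree {ξ α n x y e sP sT sTc : ℝ} (hξ : 0 ≤ ξ) (hξ1 : ξ ≤ 1)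
    (hα : 0 ≤ α) (hαξ : α ≤ ξ ^ 2) (hx : 0 ≤ x) (hy : 0 ≤ y) (hyn : y ≤ n) (he : 0 ≤ e)
    (hex : x * (y + (1 / 2 + 4 * ξ) * n - n) ≤ e) (hey : y * (x + (1 / 2 + 4 * ξ) * n - n) ≤ e)
    (hsP : sP ≤ x * ((ξ + α) * n)) (hsT : sT ≤ y * ((ξ + α) * n))
    (hsTc : (n - y) * ((ξ - α) * n) ≤ sTc) (hsplit : sP ≤ sT + sTc) :
    sP ≤ e + sTc := by
  have hαξ' : α ≤ ξ := hαξ.trans (by nlinarith)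
  have hξα : 0 ≤ (ξ - α) * n := mul_nonneg (by linarith) (by linarith)
  rcases le_or_gt ((1 / 2 - 3 * ξ + α) * n) y with hy' | hy'
  · have h : (ξ + α) * n ≤ y + (1 / 2 + 4 * ξ) * n - n := by linarith
    nlinarith [mul_le_mul_of_nonneg_left h hx]
  rcases le_or_gt ((1 / 2 - 3 * ξ + α) * n) x with hx' | hx'
  · have h : (ξ + α) * n ≤ x + (1 / 2 + 4 * ξ) * n - n := by linarith
    nlinarith [mul_le_mul_of_nonneg_left h hy]
  have hpoly : (1 / 2 - 3 * ξ + α) * (ξ + α) ≤ (1 / 2 + 3 * ξ - α) * (ξ - α) := by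
    nlinarith [mul_le_mul_of_nonneg_right hαξ' hξ]
  calc sP ≤ x * ((ξ + α) * n) := hsP
    _ ≤ (1 / 2 - 3 * ξ + α) * n * ((ξ + α) * n) := by gcongr; nlinarith
    _ = (1 / 2 - 3 * ξ + α) * (ξ + α) * n ^ 2 := by ring
    _ ≤ (1 / 2 + 3 * ξ - α) * (ξ - α) * n ^ 2 := by gcongr
    _ = (n - (1 / 2 - 3 * ξ + α) * n) * ((ξ - α) * n) := by ring
    _ ≤ (n - y) * ((ξ - α) * n) := by gcongr
    _ ≤ e + sTc := by linarith

theorem cutCondition_of_minDegree [Fintype V] [Fintype W] {n : ℕ} (hV : Fintype.card V = n)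
    (hW : Fintype.card W = n) {ξ α : ℝ} (hξ : 0 ≤ ξ) (hξ1 : ξ ≤ 1) (hα : 0 ≤ α)
    (hαξ : α ≤ ξ ^ 2) (hdegV : ∀ a, (1 / 2 + 4 * ξ) * n ≤ #{b | (a, b) ∈ E})
    (hdegW : ∀ b, (1 / 2 + 4 * ξ) * n ≤ #{a | (a, b) ∈ E})
    {p : V → ℕ} {q : W → ℕ} (hp : ∀ a, p a ≤ (ξ + α) * n)
    (hq : ∀ b, (ξ - α) * n ≤ q b ∧ q b ≤ (ξ + α) * n) (hsum : ∑ a, p a = ∑ b, q b) :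
    CutCondition E p q := by
  intro P T
  have hex := mul_le_card_cut_left E hdegV P T
  have hey := mul_le_card_cut_right E hdegW P T
  rw [hW] at hex
  rw [hV] at hey
  have hTc : (#Tᶜ : ℝ) = n - #T := by rw [card_compl, hW, Nat.cast_sub (hW ▸ card_le_univ T)]
  have hsP : (∑ a ∈ P, p a : ℝ) ≤ #P * ((ξ + α) * n) := by
    rw [← nsmul_eq_mul]; exact sum_le_card_nsmul _ _ _ fun a _ => hp a
  have hsT : (∑ b ∈ T, q b : ℝ) ≤ #T * ((ξ + α) * n) := by
    rw [← nsmul_eq_mul]; exact sum_le_card_nsmul _ _ _ fun b _ => (hq b).2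
  have hsTc : (n - #T) * ((ξ - α) * n) ≤ (∑ b ∈ Tᶜ, q b : ℝ) := by
    rw [← hTc, ← nsmul_eq_mul]; exact card_nsmul_le_sum _ _ _ fun b _ => (hq b).1
  have hsplit : ∑ a ∈ P, p a ≤ ∑ b ∈ T, q b + ∑ b ∈ Tᶜ, q b := by
    rw [sum_add_sum_compl, ← hsum]
    exact sum_le_univ_sum_of_nonneg fun _ => Nat.zero_le _
  have hTn : (#T : ℝ) ≤ n := by exact_mod_cast hW ▸ card_le_univ T
  exact_mod_cast le_cut_add_of_minDegree hξ hξ1 hα hαξ (Nat.cast_nonneg _) (Nat.cast_nonneg _)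
    hTn (Nat.cast_nonneg _) hex hey hsP hsT hsTc (by exact_mod_cast hsplit)

end MinDegree

namespace SimpleGraph

variable {β : Type*} {A B : Finset β}

theorem IsBipartiteWith.ncard_neighborSet {G : SimpleGraph β} [DecidableRel G.Adj]
    (h : G.IsBipartiteWith A B) {v : β} (hv : v ∈ A) :
    (G.neighborSet v).ncard = #{b : B | G.Adj v b} := by
  rw [isBipartiteWith_neighborSet h hv, ncard_sep_coe_eq_card_filter]

theorem IsBipartiteWith.ncard_neighborSet' {G : SimpleGraph β} [DecidableRel G.Adj]
    (h : G.IsBipartiteWith A B) {w : β} (hw : w ∈ B) :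
    (G.neighborSet w).ncard = #{a : A | G.Adj a w} := by
  rw [isBipartiteWith_neighborSet' h hw, ncard_sep_coe_eq_card_filter]

def fromPairs (F : Finset (A × B)) : SimpleGraph β :=
  fromRel fun x y => ∃ e ∈ F, ↑e.1 = x ∧ ↑e.2 = y

variable {F : Finset (A × B)}

theorem fromPairs_le {G : SimpleGraph β} (hF : ∀ e ∈ F, G.Adj e.1 e.2) : fromPairs F ≤ G := by
  rintro x y ⟨-, ⟨e, he, rfl, rfl⟩ | ⟨e, he, rfl, rfl⟩⟩
  · exact hF e he
  · exact (hF e he).symm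

theorem isBipartiteWith_fromPairs (hAB : Disjoint A B) : (fromPairs F).IsBipartiteWith A B where
  disjoint := disjoint_coe.2 hAB
  mem_of_adj := by
    rintro x y ⟨-, ⟨e, -, rfl, rfl⟩ | ⟨e, -, rfl, rfl⟩⟩
    · exact .inl ⟨e.1.2, e.2.2⟩
    · exact .inr ⟨e.2.2, e.1.2⟩

theorem fromPairs_adj_coe (hAB : Disjoint A B) {a : A} {b : B} :
    (fromPairs F).Adj a b ↔ (a, b) ∈ F := by
  refine ⟨fun h => ?_, fun h => ⟨?_, .inl ⟨_, h, rfl, rfl⟩⟩⟩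
  · obtain ⟨-, ⟨e, he, h1, h2⟩ | ⟨e, -, h1, -⟩⟩ := h
    · rwa [← Subtype.ext h1, ← Subtype.ext h2]
    · exact absurd (h1 ▸ e.1.2) (Finset.disjoint_right.1 hAB b.2)
  · exact fun hab => Finset.disjoint_left.1 hAB a.2 (hab ▸ b.2)

end SimpleGraph

/-- Suppose `1/n ≪ α ≪ ξ ≪ 1`.  If `G` is a bipartite graph on `(A,B)` with `|A| = |B| = n`
and `δ(G) ≥ (1/2 + 4ξ)n`, and `n_v ∈ ℕ` satisfy `(ξ-α)n ≤ n_v ≤ (ξ+α)n` for every vertex `v`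
with `Σ_{a∈A} n_a = Σ_{b∈B} n_b`, then `G` contains a spanning subgraph `G'` with
`d_{G'}(v) = n_v` for every vertex `v`. -/
theorem stmt5 :
    ∀ ξ : ℝ, 0 < ξ → ξ < 1 →
    ∃ α₀ : ℝ, 0 < α₀ ∧ ∀ α : ℝ, 0 < α → α ≤ α₀ →
    ∃ n₀ : ℕ, ∀ n : ℕ, n₀ ≤ n →
    ∀ (β : Type) [Fintype β] [DecidableEq β],
    ∀ (A B : Finset β) (G : SimpleGraph β),
      Disjoint A B → A.card = n → B.card = n →
      (∀ x y : β, G.Adj x y → (x ∈ A ∧ y ∈ B) ∨ (x ∈ B ∧ y ∈ A)) →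
      (∀ v ∈ A ∪ B, ((1 : ℝ)/2 + 4*ξ) * n ≤ ((G.neighborSet v).ncard : ℝ)) →
      ∀ nv : β → ℕ,
        (∀ v ∈ A ∪ B, (ξ - α) * n ≤ (nv v : ℝ) ∧ (nv v : ℝ) ≤ (ξ + α) * n) →
        ((∑ a ∈ A, nv a) = ∑ b ∈ B, nv b) →
        ∃ G' : SimpleGraph β, G' ≤ G ∧ ∀ v ∈ A ∪ B, (G'.neighborSet v).ncard = nv v := by
  intro ξ hξ hξ1
  refine ⟨ξ ^ 2, by positivity, fun α hα hαξ => ⟨0, fun n _ β _ _ A B G hAB hA hB hbip hdeg nv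
    hnv hsum => ?_⟩⟩
  classical
  have hG : G.IsBipartiteWith A B := ⟨disjoint_coe.2 hAB, hbip⟩
  let E : Finset (A × B) := {e | G.Adj e.1 e.2}
  have hsum' : ∑ a : A, nv a = ∑ b : B, nv b := by simpa only [sum_coe_sort] using hsum
  have hcut := cutCondition_of_minDegree E (by simp [hA]) (by simp [hB]) hξ.le hξ1.le hα.le hαξ
    (fun a => by simpa [E, hG.ncard_neighborSet a.2] using hdeg a (mem_union_left _ a.2))
    (fun b => by simpa [E, hG.ncard_neighborSet' b.2] using hdeg b (mem_union_right _ b.2))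
    (fun a => (hnv a (mem_union_left _ a.2)).2) (fun b => hnv b (mem_union_right _ b.2)) hsum'
  obtain ⟨F, hFE, hFA, hFB⟩ := exists_subset_card_eq_of_cutCondition hsum' hcut
  have hG' := SimpleGraph.isBipartiteWith_fromPairs (F := F) hAB
  refine ⟨.fromPairs F, SimpleGraph.fromPairs_le fun e he => by simpa [E] using hFE he,
    fun v hv => ?_⟩
  rcases mem_union.1 hv with hv | hv
  · rw [hG'.ncard_neighborSet hv, ← hFA ⟨v, hv⟩]
    exact congrArg card (filter_congr fun b _ => SimpleGraph.fromPairs_adj_coe (a := ⟨v, hv⟩) hAB)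
  · rw [hG'.ncard_neighborSet' hv, ← hFB ⟨v, hv⟩]
    exact congrArg card (filter_congr fun a _ => SimpleGraph.fromPairs_adj_coe (b := ⟨v, hv⟩) hAB)
end

section
/- Let 1/n ≪ α ≪ γ ≪ 1/r. Let G be an r-partite graph on (V_1,...,V_r) with all classes of size n, with every vertex v∉V_j satisfying d(v,V_j) ≥ (1/2+2γ/r)n, and suppose |d_G(v,V_{j_1}) - d_G(v,V_{j_2})| < αn for all j_1,j_2 and all v∉V_{j_1}∪V_{j_2}. Then there exists a subgraph H ⊆ G with maximum degree Δ(H) ≤ γn such that G−H is K_r-divisible. -/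
/-!
Let `m v` be the least degree of `v` into another part, so that all degrees of `v` into other
parts lie in `[m v, m v + A]` with `A = ⌈αn⌉`. Double counting the edges between two parts shows
that the sums of `m` over different parts differ by at most `An`; hence lowering every `m v` by
`T` plus a share of at most `A` of this difference gives targets `c v` with the same sum over
every part, at least `T` and at most `T + 2A` below each degree of `v` into another part.

Between two parts an exact `c`-factor then exists: take a minimal subgraph with all degrees at
least `c`. If some degree were larger, so would be one on the other side (the sums agree). An edge
with both ends in excess could be deleted; otherwise all neighbours of the two excess vertices
are tight, and since both have more than `n/2` neighbours, counting the missing edges yields a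
missing edge between the two neighbourhoods, and exchanging two edges for it gives a smaller
subgraph. Keeping these factors, every vertex loses at most `T + 2A ≤ γn / r` edges towards each
part, and keeps exactly `c v` edges towards every other part.
-/

open Finset

namespace Finset

variable {α γ : Type*} [DecidableEq α] [DecidableEq γ]

lemma card_filter_erase_add {s : Finset α} {a : α} (ha : a ∈ s) (f : α → γ) (c : γ) :
    #{x ∈ s.erase a | f x = c} + (if f a = c then 1 else 0) = #{x ∈ s | f x = c} := by
  rw [filter_erase]
  split_ifs with h
  · exact card_erase_add_one (mem_filter.2 ⟨ha, h⟩)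
  · rw [erase_eq_of_notMem (by simp [h]), add_zero]

lemma card_filter_insert_of_notMem {s : Finset α} {a : α} (ha : a ∉ s) (f : α → γ) (c : γ) :
    #{x ∈ insert a s | f x = c} = #{x ∈ s | f x = c} + if f a = c then 1 else 0 := by
  rw [filter_insert]
  split_ifs with h
  · exact card_insert_of_notMem (by simp [ha])
  · rfl

lemma card_filter_exchange_add {s : Finset α} {a b q : α} (ha : a ∈ s) (hb : b ∈ s) (hab : a ≠ b)
    (hq : q ∉ s) {f : α → γ} (hfq : f q = f b) (c : γ) :
    #{x ∈ insert q ((s.erase a).erase b) | f x = c} + (if f a = c then 1 else 0) =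
      #{x ∈ s | f x = c} := by
  have hb' : b ∈ s.erase a := mem_erase.2 ⟨hab.symm, hb⟩
  have hq' : q ∉ (s.erase a).erase b := fun h => hq (mem_of_mem_erase (mem_of_mem_erase h))
  rw [card_filter_insert_of_notMem hq', hfq, ← card_filter_erase_add ha f c,
    ← card_filter_erase_add hb' f c]

lemma card_filter_sdiff_add {s t : Finset α} (h : t ⊆ s) (p : α → Prop) [DecidablePred p] :
    #{x ∈ s \ t | p x} + #{x ∈ t | p x} = #{x ∈ s | p x} := by
  rw [show {x ∈ s \ t | p x} = {x ∈ s | p x} \ {x ∈ t | p x} by ext; simp; tauto]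
  exact card_sdiff_add_card_eq_card (filter_subset_filter p h)

lemma card_insert_erase_erase_lt {s : Finset α} {a b : α} (ha : a ∈ s) (hb : b ∈ s) (hab : a ≠ b)
    (q : α) : #(insert q ((s.erase a).erase b)) < #s := by
  have h₁ := card_erase_add_one ha
  have h₂ := card_erase_add_one (mem_erase.2 ⟨hab.symm, hb⟩)
  have := card_insert_le q ((s.erase a).erase b)
  omega

lemma exists_sum_eq_of_le_mul_card (s : Finset α) {B N : ℕ} (h : N ≤ B * #s) :
    ∃ t : α → ℕ, ∑ i ∈ s, t i = N ∧ ∀ i ∈ s, t i ≤ B := by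
  induction s using Finset.induction_on generalizing N with
  | empty => exact ⟨0, by simp_all, by simp⟩
  | insert a s ha ih =>
    rw [card_insert_of_notMem ha, mul_add_one] at h
    obtain ⟨t, hsum, hle⟩ := ih (N := N - min B N) (by omega)
    refine ⟨Function.update t a (min B N), ?_, fun i hi => ?_⟩
    · rw [sum_insert ha, sum_update_of_notMem ha, Function.update_self, hsum]
      omega
    · rcases eq_or_ne i a with rfl | hia
      · simp
      · rw [Function.update_of_ne hia]
        exact hle i (mem_of_mem_insert_of_ne hi hia)

variable {β : Type*} [DecidableEq β]

lemma card_filter_fst_eq_s6 {E : Finset (α × β)} {t : Finset β} (hE : ∀ p ∈ E, p.2 ∈ t) (a : α) :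
    #{p ∈ E | p.1 = a} = #{b ∈ t | (a, b) ∈ E} := by
  refine card_nbij' Prod.snd (a, ·) ?_ ?_ ?_ ?_
  · rintro ⟨a', b⟩ hp
    obtain ⟨hpE, rfl⟩ := mem_filter.1 (mem_coe.1 hp)
    exact mem_filter.2 ⟨hE _ hpE, hpE⟩
  · intro b hb
    simpa using (mem_filter.1 hb).2
  · rintro ⟨a', b⟩ hp
    obtain ⟨-, rfl⟩ := mem_filter.1 (mem_coe.1 hp)
    rfl
  · intro b _
    rfl

lemma card_filter_snd_eq_s6 {E : Finset (α × β)} {s : Finset α} (hE : ∀ p ∈ E, p.1 ∈ s) (b : β) :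
    #{p ∈ E | p.2 = b} = #{a ∈ s | (a, b) ∈ E} := by
  refine card_nbij' Prod.fst (·, b) ?_ ?_ ?_ ?_
  · rintro ⟨a, b'⟩ hp
    obtain ⟨hpE, rfl⟩ := mem_filter.1 (mem_coe.1 hp)
    exact mem_filter.2 ⟨hE _ hpE, hpE⟩
  · intro a ha
    simpa using (mem_filter.1 ha).2
  · rintro ⟨a, b'⟩ hp
    obtain ⟨-, rfl⟩ := mem_filter.1 (mem_coe.1 hp)
    rfl
  · intro a _
    rfl

end Finset

section BipartiteFactor

variable {α β : Type*} [DecidableEq α] [DecidableEq β] {X : Finset α} {Y : Finset β}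
  {E E₀ : Finset (α × β)} {f : α → ℕ} {g : β → ℕ} {K K' D : ℕ}

def DegreesAtLeast (X : Finset α) (Y : Finset β) (f : α → ℕ) (g : β → ℕ)
    (E : Finset (α × β)) : Prop :=
  (∀ x ∈ X, f x ≤ #{p ∈ E | p.1 = x}) ∧ ∀ y ∈ Y, g y ≤ #{p ∈ E | p.2 = y}

lemma DegreesAtLeast.forall_eq_iff (h : DegreesAtLeast X Y f g E) (hE : E ⊆ X ×ˢ Y)
    (hsum : ∑ x ∈ X, f x = ∑ y ∈ Y, g y) :
    (∀ x ∈ X, f x = #{p ∈ E | p.1 = x}) ↔ ∀ y ∈ Y, g y = #{p ∈ E | p.2 = y} := by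
  have hX : ∑ x ∈ X, #{p ∈ E | p.1 = x} = #E :=
    (card_eq_sum_card_fiberwise fun p hp => (mem_product.1 (hE hp)).1).symm
  have hY : ∑ y ∈ Y, #{p ∈ E | p.2 = y} = #E :=
    (card_eq_sum_card_fiberwise fun p hp => (mem_product.1 (hE hp)).2).symm
  rw [← sum_eq_sum_iff_of_le h.1, ← sum_eq_sum_iff_of_le h.2, hX, hY, hsum]

lemma DegreesAtLeast.erase (h : DegreesAtLeast X Y f g E) {p : α × β} (hp : p ∈ E)
    (h₁ : f p.1 < #{q ∈ E | q.1 = p.1}) (h₂ : g p.2 < #{q ∈ E | q.2 = p.2}) :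
    DegreesAtLeast X Y f g (E.erase p) := by
  refine ⟨fun x hx => ?_, fun y hy => ?_⟩
  · have key := card_filter_erase_add hp Prod.fst x
    split_ifs at key with hpx
    · subst hpx
      omega
    · have := h.1 x hx
      omega
  · have key := card_filter_erase_add hp Prod.snd y
    split_ifs at key with hpy
    · subst hpy
      omega
    · have := h.2 y hy
      omega

lemma DegreesAtLeast.exchange (h : DegreesAtLeast X Y f g E) {x₀ x : α} {y₀ y : β}
    (h₀ : (x₀, y) ∈ E) (h₁ : (x, y₀) ∈ E) (hxy : (x, y) ∉ E) (hx : x ≠ x₀)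
    (hx₀ : f x₀ < #{p ∈ E | p.1 = x₀}) (hy₀ : g y₀ < #{p ∈ E | p.2 = y₀}) :
    DegreesAtLeast X Y f g (insert (x, y) ((E.erase (x₀, y)).erase (x, y₀))) := by
  have hne : (x₀, y) ≠ (x, y₀) := fun he => hx (congrArg Prod.fst he).symm
  refine ⟨fun z hz => ?_, fun w hw => ?_⟩
  · have key := card_filter_exchange_add h₀ h₁ hne hxy (f := Prod.fst) rfl z
    split_ifs at key with hz₀
    · obtain rfl : x₀ = z := hz₀
      omega
    · have := h.1 z hz
      omega
  · have key := card_filter_exchange_add h₁ h₀ hne.symm hxy (f := Prod.snd) rfl w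
    rw [erase_right_comm] at key
    split_ifs at key with hw₀
    · obtain rfl : y₀ = w := hw₀
      omega
    · have := h.2 w hw
      omega

/-- Each of the more than `D` tight `E`-neighbours `y` of `x₀` has at least `K` edges of `E₀ \ E`,
while the fewer than `#X - D` vertices outside the `E`-neighbourhood of `y₀` have at most `K'` each;
so some edge of `E₀ \ E` joins the two neighbourhoods. -/
lemma DegreesAtLeast.exists_exchange (h : DegreesAtLeast X Y f g E) (hE₀ : E₀ ⊆ X ×ˢ Y)
    (hEE₀ : E ⊆ E₀) (hupX : ∀ x ∈ X, #{p ∈ E₀ | p.1 = x} ≤ f x + K')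
    (hlowY : ∀ y ∈ Y, g y + K ≤ #{p ∈ E₀ | p.2 = y}) (hnum : K' * (#X - D) < K * (D + 1))
    {x₀ : α} {y₀ : β} (hx₀ : D < #{p ∈ E | p.1 = x₀}) (hy₀ : D < #{p ∈ E | p.2 = y₀})
    (htight : ∀ y, (x₀, y) ∈ E → #{p ∈ E | p.2 = y} = g y) :
    ∃ x y, (x, y) ∈ E₀ \ E ∧ (x₀, y) ∈ E ∧ (x, y₀) ∈ E := by
  by_contra! hno
  have hEXY : E ⊆ X ×ˢ Y := hEE₀.trans hE₀
  set T : Finset β := {y ∈ Y | (x₀, y) ∈ E}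
  set S : Finset α := {x ∈ X | (x, y₀) ∈ E}
  have hT : #T = #{p ∈ E | p.1 = x₀} :=
    (card_filter_fst_eq_s6 (fun p hp => (mem_product.1 (hEXY hp)).2) x₀).symm
  have hS : #S = #{p ∈ E | p.2 = y₀} :=
    (card_filter_snd_eq_s6 (fun p hp => (mem_product.1 (hEXY hp)).1) y₀).symm
  have hinto : K * #T ≤ #{p ∈ E₀ \ E | p.2 ∈ T} := by
    rw [← sum_card_fiberwise_eq_card_filter _ _ Prod.snd, mul_comm, ← smul_eq_mul]
    refine card_nsmul_le_sum (N := ℕ) _ _ _ fun y hy => ?_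
    obtain ⟨hyY, hy⟩ := mem_filter.1 hy
    have := card_filter_sdiff_add hEE₀ (·.2 = y)
    have := htight y hy
    have := hlowY y hyY
    omega
  have hfrom : #{p ∈ E₀ \ E | p.1 ∈ X \ S} ≤ K' * #(X \ S) := by
    rw [← sum_card_fiberwise_eq_card_filter _ _ Prod.fst, mul_comm, ← smul_eq_mul]
    refine sum_le_card_nsmul (N := ℕ) _ _ _ fun x hx => ?_
    have hxX := (mem_sdiff.1 hx).1
    have := card_filter_sdiff_add hEE₀ (·.1 = x)
    have := h.1 x hxX
    have := hupX x hxX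
    omega
  have hsub : {p ∈ E₀ \ E | p.2 ∈ T} ⊆ {p ∈ E₀ \ E | p.1 ∈ X \ S} := by
    intro p hp
    obtain ⟨hpF, hpT⟩ := mem_filter.1 hp
    refine mem_filter.2 ⟨hpF, mem_sdiff.2 ⟨(mem_product.1 (hE₀ (mem_sdiff.1 hpF).1)).1, ?_⟩⟩
    exact fun hpS => hno p.1 p.2 hpF (mem_filter.1 hpT).2 (mem_filter.1 hpS).2
  have hXS : #(X \ S) + #S = #X := card_sdiff_add_card_eq_card (filter_subset _ _)
  have : K * (D + 1) ≤ K' * (#X - D) :=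
    calc K * (D + 1) ≤ K * #T := Nat.mul_le_mul_left _ (by omega)
      _ ≤ K' * #(X \ S) := hinto.trans ((card_le_card hsub).trans hfrom)
      _ ≤ K' * (#X - D) := Nat.mul_le_mul_left _ (by omega)
  omega

lemma DegreesAtLeast.exists_card_lt (h : DegreesAtLeast X Y f g E) (hE₀ : E₀ ⊆ X ×ˢ Y)
    (hEE₀ : E ⊆ E₀) (hsum : ∑ x ∈ X, f x = ∑ y ∈ Y, g y)
    (hupX : ∀ x ∈ X, #{p ∈ E₀ | p.1 = x} ≤ f x + K')
    (hlowY : ∀ y ∈ Y, g y + K ≤ #{p ∈ E₀ | p.2 = y}) (hfD : ∀ x ∈ X, D ≤ f x)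
    (hgD : ∀ y ∈ Y, D ≤ g y) (hnum : K' * (#X - D) < K * (D + 1)) {x₀ : α} (hx₀X : x₀ ∈ X)
    (hx₀ : f x₀ < #{p ∈ E | p.1 = x₀}) :
    ∃ E' ⊆ E₀, DegreesAtLeast X Y f g E' ∧ #E' < #E := by
  obtain ⟨y₀, hy₀Y, hy₀⟩ : ∃ y₀ ∈ Y, g y₀ < #{p ∈ E | p.2 = y₀} := by
    by_contra! hY
    have := (h.forall_eq_iff (hEE₀.trans hE₀) hsum).2 fun y hy => le_antisymm (h.2 y hy) (hY y hy)
    exact hx₀.ne (this x₀ hx₀X)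
  by_cases hboth : ∃ p ∈ E, f p.1 < #{q ∈ E | q.1 = p.1} ∧ g p.2 < #{q ∈ E | q.2 = p.2}
  · obtain ⟨p, hp, h₁, h₂⟩ := hboth
    exact ⟨E.erase p, (erase_subset _ _).trans hEE₀, h.erase hp h₁ h₂, card_erase_lt_of_mem hp⟩
  push Not at hboth
  have htight : ∀ y, (x₀, y) ∈ E → #{p ∈ E | p.2 = y} = g y := fun y hy =>
    le_antisymm (hboth _ hy hx₀) (h.2 y (mem_product.1 (hE₀ (hEE₀ hy))).2)
  obtain ⟨x, y, hxy, h₀, h₁⟩ := h.exists_exchange (y₀ := y₀) hE₀ hEE₀ hupX hlowY hnum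
    (by have := hfD x₀ hx₀X; omega) (by have := hgD y₀ hy₀Y; omega) htight
  have hx : x ≠ x₀ := by
    rintro rfl
    exact absurd hy₀ (not_lt.2 (hboth _ h₁ hx₀))
  refine ⟨_, insert_subset (mem_sdiff.1 hxy).1
    (((erase_subset _ _).trans (erase_subset _ _)).trans hEE₀),
    h.exchange h₀ h₁ (mem_sdiff.1 hxy).2 hx hx₀ hy₀,
    card_insert_erase_erase_lt h₀ h₁ (fun he => hx (congrArg Prod.fst he).symm) _⟩

theorem exists_subset_card_filter_eq (hE₀ : E₀ ⊆ X ×ˢ Y)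
    (hsum : ∑ x ∈ X, f x = ∑ y ∈ Y, g y)
    (hlowX : ∀ x ∈ X, f x ≤ #{p ∈ E₀ | p.1 = x}) (hupX : ∀ x ∈ X, #{p ∈ E₀ | p.1 = x} ≤ f x + K')
    (hlowY : ∀ y ∈ Y, g y + K ≤ #{p ∈ E₀ | p.2 = y}) (hfD : ∀ x ∈ X, D ≤ f x)
    (hgD : ∀ y ∈ Y, D ≤ g y) (hnum : K' * (#X - D) < K * (D + 1)) :
    ∃ E ⊆ E₀, (∀ x ∈ X, #{p ∈ E | p.1 = x} = f x) ∧ ∀ y ∈ Y, #{p ∈ E | p.2 = y} = g y := by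
  classical
  have hE₀deg : DegreesAtLeast X Y f g E₀ :=
    ⟨hlowX, fun y hy => (Nat.le_add_right _ _).trans (hlowY y hy)⟩
  obtain ⟨E, hE, hmin⟩ := exists_min_image {E ∈ E₀.powerset | DegreesAtLeast X Y f g E} card
    ⟨E₀, mem_filter.2 ⟨mem_powerset_self _, hE₀deg⟩⟩
  obtain ⟨hEE₀, h⟩ := mem_filter.1 hE
  have hX : ∀ x ∈ X, f x = #{p ∈ E | p.1 = x} := by
    refine fun x hx => (h.1 x hx).eq_of_not_lt fun hlt => ?_
    obtain ⟨E', hE'E₀, h', hcard⟩ :=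
      h.exists_card_lt hE₀ (mem_powerset.1 hEE₀) hsum hupX hlowY hfD hgD hnum hx hlt
    exact absurd hcard (not_lt.2 (hmin E' (mem_filter.2 ⟨mem_powerset.2 hE'E₀, h'⟩)))
  have hY := (h.forall_eq_iff ((mem_powerset.1 hEE₀).trans hE₀) hsum).1 hX
  exact ⟨E, mem_powerset.1 hEE₀, fun x hx => (hX x hx).symm, fun y hy => (hY y hy).symm⟩

end BipartiteFactor

section Balancing

variable {β : Type*} {r n A T D : ℕ} {V : Fin r → Finset β} {cl : β → Fin r}

lemma exists_base_degree (hr : 2 ≤ r) (d : β → Fin r → ℕ) (hD : ∀ v j, cl v ≠ j → D ≤ d v j)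
    (hA : ∀ v j₁ j₂, cl v ≠ j₁ → cl v ≠ j₂ → d v j₁ ≤ d v j₂ + A) :
    ∃ m : β → ℕ, ∀ v, D ≤ m v ∧ ∀ j, cl v ≠ j → m v ≤ d v j ∧ d v j ≤ m v + A := by
  have hne : ∀ v, (univ.erase (cl v)).Nonempty := fun v => by
    rw [← card_pos, card_erase_of_mem (mem_univ _), card_univ, Fintype.card_fin]
    omega
  choose k hk hkmin using fun v => exists_min_image _ (d v) (hne v)
  have hkv : ∀ v, cl v ≠ k v := fun v => Ne.symm (ne_of_mem_erase (hk v))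
  exact ⟨fun v => d v (k v), fun v => ⟨hD v _ (hkv v), fun j hj =>
    ⟨hkmin v j (mem_erase.2 ⟨Ne.symm hj, mem_univ _⟩), hA v j (k v) hj (hkv v)⟩⟩⟩

lemma sum_le_sum_add_mul (hV : ∀ v j, v ∈ V j ↔ cl v = j) (hcard : ∀ j, #(V j) = n)
    (d : β → Fin r → ℕ) (hsym : ∀ i j, i ≠ j → ∑ v ∈ V i, d v j = ∑ w ∈ V j, d w i)
    {m : β → ℕ} (hm : ∀ v j, cl v ≠ j → m v ≤ d v j ∧ d v j ≤ m v + A) (i j : Fin r) :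
    ∑ v ∈ V i, m v ≤ ∑ v ∈ V j, m v + A * n := by
  rcases eq_or_ne i j with rfl | hij
  · omega
  have hcl : ∀ {v k}, v ∈ V k → cl v = k := fun hv => (hV _ _).1 hv
  calc ∑ v ∈ V i, m v ≤ ∑ v ∈ V i, d v j := sum_le_sum fun v hv => (hm v j (by rwa [hcl hv])).1
    _ = ∑ w ∈ V j, d w i := hsym i j hij
    _ ≤ ∑ w ∈ V j, (m w + A) := sum_le_sum fun w hw => (hm w i (by rw [hcl hw]; exact hij.symm)).2
    _ = ∑ w ∈ V j, m w + A * n := by rw [sum_add_distrib, sum_const, hcard, smul_eq_mul, mul_comm]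

lemma exists_sum_eq_of_sum_le_sum_add_mul (hr : 0 < r) (hV : ∀ v j, v ∈ V j ↔ cl v = j)
    (hcard : ∀ j, #(V j) = n) {m : β → ℕ} (hm : ∀ i j, ∑ v ∈ V i, m v ≤ ∑ v ∈ V j, m v + A * n)
    (hT : ∀ v, T + A ≤ m v) :
    ∃ c : β → ℕ, (∀ i j, ∑ v ∈ V i, c v = ∑ v ∈ V j, c v) ∧
      ∀ v, c v + T ≤ m v ∧ m v ≤ c v + (T + A) := by
  classical
  obtain ⟨i₀, -, hi₀⟩ := exists_min_image univ (fun i => ∑ v ∈ V i, m v) ⟨⟨0, hr⟩, mem_univ _⟩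
  choose t ht htA using fun i => exists_sum_eq_of_le_mul_card (V i)
    (N := ∑ v ∈ V i, m v - ∑ v ∈ V i₀, m v) (B := A) (by rw [hcard]; have := hm i i₀; omega)
  obtain ⟨c, hc⟩ : ∃ c : β → ℕ, ∀ v, c v + (T + t (cl v) v) = m v := by
    refine ⟨fun v => m v - (T + t (cl v) v), fun v => Nat.sub_add_cancel ?_⟩
    have := htA (cl v) v ((hV v _).2 rfl)
    have := hT v
    omega
  have hsum : ∀ i, ∑ v ∈ V i, c v + n * T = ∑ v ∈ V i₀, m v := by
    intro i
    have h : ∑ v ∈ V i, (c v + (T + t i v)) = ∑ v ∈ V i, m v :=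
      sum_congr rfl fun v hv => by rw [← (hV v i).1 hv, hc]
    rw [sum_add_distrib, sum_add_distrib, sum_const, hcard, smul_eq_mul, ht] at h
    have := hi₀ i (mem_univ _)
    omega
  refine ⟨c, fun i j => by have := hsum i; have := hsum j; omega, fun v => ?_⟩
  have := hc v
  have := htA (cl v) v ((hV v _).2 rfl)
  omega

lemma exists_balanced_target (hr : 2 ≤ r) (hV : ∀ v j, v ∈ V j ↔ cl v = j)
    (hcard : ∀ j, #(V j) = n) (d : β → Fin r → ℕ)
    (hsym : ∀ i j, i ≠ j → ∑ v ∈ V i, d v j = ∑ w ∈ V j, d w i)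
    (hD : ∀ v j, cl v ≠ j → D ≤ d v j)
    (hA : ∀ v j₁ j₂, cl v ≠ j₁ → cl v ≠ j₂ → d v j₁ ≤ d v j₂ + A) (hTD : T + A ≤ D) :
    ∃ c : β → ℕ, (∀ i j, ∑ v ∈ V i, c v = ∑ v ∈ V j, c v) ∧ (∀ v, D - (T + A) ≤ c v) ∧
      ∀ v j, cl v ≠ j → c v + T ≤ d v j ∧ d v j ≤ c v + (T + 2 * A) := by
  obtain ⟨m, hm⟩ := exists_base_degree hr d hD hA
  obtain ⟨c, hsum, hc⟩ := exists_sum_eq_of_sum_le_sum_add_mul (by omega) hV hcard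
    (sum_le_sum_add_mul hV hcard d hsym fun v => (hm v).2) fun v => hTD.trans (hm v).1
  refine ⟨c, hsum, fun v => ?_, fun v j hj => ?_⟩
  · have := hm v; have := hc v; omega
  · have := (hm v).2 j hj; have := hc v; omega

end Balancing

namespace SimpleGraph

variable {β : Type*} (G : SimpleGraph β)

lemma ncard_inter_neighborSet [DecidableRel G.Adj] (s : Finset β) (v : β) :
    ((s : Set β) ∩ G.neighborSet v).ncard = #{w ∈ s | G.Adj v w} := by
  rw [← Set.ncard_coe_finset, coe_filter]
  rfl

lemma sum_ncard_inter_neighborSet_comm (s t : Finset β) :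
    ∑ v ∈ s, ((t : Set β) ∩ G.neighborSet v).ncard =
      ∑ w ∈ t, ((s : Set β) ∩ G.neighborSet w).ncard := by
  classical
  have := sum_card_bipartiteAbove_eq_sum_card_bipartiteBelow (s := s) (t := t) G.Adj
  simp only [bipartiteAbove, bipartiteBelow] at this
  simpa only [G.ncard_inter_neighborSet, G.adj_comm] using this

lemma ncard_inter_neighborSet_sdiff_add {K : SimpleGraph β} (hKG : K ≤ G) (s : Finset β)
    (v : β) :
    ((s : Set β) ∩ (G \ K).neighborSet v).ncard + ((s : Set β) ∩ K.neighborSet v).ncard =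
      ((s : Set β) ∩ G.neighborSet v).ncard := by
  classical
  simp only [G.ncard_inter_neighborSet, K.ncard_inter_neighborSet, (G \ K).ncard_inter_neighborSet]
  rw [← card_filter_add_card_filter_not (s := {w ∈ s | G.Adj v w}) (K.Adj v),
    filter_filter, filter_filter, add_comm]
  congr 2
  exact filter_congr fun w _ => ⟨fun h => ⟨hKG h, h⟩, And.right⟩

lemma ncard_neighborSet_le_card_mul {ι : Type*} [Fintype ι] {V : ι → Finset β}
    (hcover : ∀ w, ∃ i, w ∈ V i) (v : β) {b : ℕ}
    (h : ∀ i, ((V i : Set β) ∩ G.neighborSet v).ncard ≤ b) :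
    (G.neighborSet v).ncard ≤ Fintype.card ι * b := by
  classical
  calc (G.neighborSet v).ncard ≤ #(univ.biUnion fun i => {w ∈ V i | G.Adj v w}) := by
        rw [← Set.ncard_coe_finset]
        refine Set.ncard_le_ncard (fun w hw => ?_) (finite_toSet _)
        obtain ⟨i, hi⟩ := hcover w
        exact mem_coe.2 (mem_biUnion.2 ⟨i, mem_univ _, mem_filter.2 ⟨hi, hw⟩⟩)
    _ ≤ ∑ i, #{w ∈ V i | G.Adj v w} := card_biUnion_le
    _ ≤ ∑ _i : ι, b := sum_le_sum fun i _ => by rw [← ncard_inter_neighborSet]; exact h i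
    _ = Fintype.card ι * b := by rw [sum_const, card_univ, smul_eq_mul]

variable [DecidableRel G.Adj] [DecidableEq β] {s t : Finset β}

lemma card_filter_interedges_fst {v : β} (hv : v ∈ s) :
    #{p ∈ G.interedges s t | p.1 = v} = ((t : Set β) ∩ G.neighborSet v).ncard := by
  rw [card_filter_fst_eq_s6 (fun p hp => (G.mem_interedges_iff.1 hp).2.1) v, ncard_inter_neighborSet]
  exact congrArg card (filter_congr fun w hw => by simp [G.mk_mem_interedges_iff, hv, hw])

lemma card_filter_interedges_snd {w : β} (hw : w ∈ t) :
    #{p ∈ G.interedges s t | p.2 = w} = ((s : Set β) ∩ G.neighborSet w).ncard := by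
  rw [card_filter_snd_eq_s6 (fun p hp => (G.mem_interedges_iff.1 hp).1) w, ncard_inter_neighborSet]
  exact congrArg card
    (filter_congr fun v hv => by simp [G.mk_mem_interedges_iff, hv, hw, G.adj_comm])

theorem exists_subset_interedges_card_filter_eq {c : β → ℕ} {K K' D : ℕ}
    (hsum : ∑ v ∈ s, c v = ∑ w ∈ t, c w)
    (hs : ∀ v ∈ s, c v ≤ ((t : Set β) ∩ G.neighborSet v).ncard ∧
      ((t : Set β) ∩ G.neighborSet v).ncard ≤ c v + K')
    (ht : ∀ w ∈ t, c w + K ≤ ((s : Set β) ∩ G.neighborSet w).ncard)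
    (hDs : ∀ v ∈ s, D ≤ c v) (hDt : ∀ w ∈ t, D ≤ c w) (hnum : K' * (#s - D) < K * (D + 1)) :
    ∃ E ⊆ G.interedges s t,
      (∀ v ∈ s, #{p ∈ E | p.1 = v} = c v) ∧ ∀ w ∈ t, #{p ∈ E | p.2 = w} = c w :=
  exists_subset_card_filter_eq (filter_subset _ _) hsum
    (fun v hv => (G.card_filter_interedges_fst hv).symm ▸ (hs v hv).1)
    (fun v hv => (G.card_filter_interedges_fst hv).symm ▸ (hs v hv).2)
    (fun w hw => (G.card_filter_interedges_snd hw).symm ▸ ht w hw) hDs hDt hnum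

end SimpleGraph

section Partite

variable {β : Type*} {r : ℕ} {V : Fin r → Finset β} {cl : β → Fin r}

lemma SimpleGraph.exists_interedges_family (G : SimpleGraph β) [DecidableRel G.Adj] [DecidableEq β]
    {n K K' D : ℕ} (hV : ∀ v j, v ∈ V j ↔ cl v = j) (hcard : ∀ j, #(V j) = n) {c : β → ℕ}
    (hsum : ∀ i j, ∑ v ∈ V i, c v = ∑ v ∈ V j, c v)
    (hc : ∀ v j, cl v ≠ j → c v + K ≤ ((V j : Set β) ∩ G.neighborSet v).ncard ∧
      ((V j : Set β) ∩ G.neighborSet v).ncard ≤ c v + K')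
    (hcD : ∀ v, D ≤ c v) (hnum : K' * (n - D) < K * (D + 1)) :
    ∃ E : Fin r → Fin r → Finset (β × β), ∀ i j, i < j → E i j ⊆ G.interedges (V i) (V j) ∧
      (∀ v ∈ V i, #{p ∈ E i j | p.1 = v} = c v) ∧ ∀ w ∈ V j, #{p ∈ E i j | p.2 = w} = c w := by
  have hpair : ∀ i j, ∃ E, i < j → E ⊆ G.interedges (V i) (V j) ∧
      (∀ v ∈ V i, #{p ∈ E | p.1 = v} = c v) ∧ ∀ w ∈ V j, #{p ∈ E | p.2 = w} = c w := by
    intro i j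
    by_cases hij : i < j
    · have hcl : ∀ {w k}, w ∈ V k → cl w = k := fun hw => (hV _ _).1 hw
      obtain ⟨E, hE⟩ := G.exists_subset_interedges_card_filter_eq (hsum i j)
        (fun v hv => ⟨by have := (hc v j (hcl hv ▸ hij.ne)).1; omega, (hc v j (hcl hv ▸ hij.ne)).2⟩)
        (fun w hw => (hc w i (hcl hw ▸ hij.ne')).1) (fun v _ => hcD v) (fun w _ => hcD w)
        (by rwa [hcard])
      exact ⟨E, fun _ => hE⟩
    · exact ⟨∅, fun h => absurd h hij⟩
  choose E hE using hpair
  exact ⟨E, hE⟩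

lemma SimpleGraph.exists_le_ncard_inter_neighborSet_eq (G : SimpleGraph β) [DecidableRel G.Adj]
    [DecidableEq β] (hV : ∀ v j, v ∈ V j ↔ cl v = j) (c : β → ℕ)
    (E : Fin r → Fin r → Finset (β × β))
    (hE : ∀ i j, i < j → E i j ⊆ G.interedges (V i) (V j) ∧
      (∀ v ∈ V i, #{p ∈ E i j | p.1 = v} = c v) ∧ ∀ w ∈ V j, #{p ∈ E i j | p.2 = w} = c w) :
    ∃ K ≤ G, ∀ v j, cl v ≠ j → ((V j : Set β) ∩ K.neighborSet v).ncard = c v := by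
  classical
  set K := SimpleGraph.fromRel fun v w => cl v < cl w ∧ (v, w) ∈ E (cl v) (cl w)
  have hmem : ∀ {i j p}, i < j → p ∈ E i j → p.1 ∈ V i ∧ p.2 ∈ V j ∧ G.Adj p.1 p.2 :=
    fun hij hp => G.mem_interedges_iff.1 ((hE _ _ hij).1 hp)
  have hKG : K ≤ G := by
    rintro v w ⟨-, ⟨hlt, h⟩ | ⟨hlt, h⟩⟩
    · exact (hmem hlt h).2.2
    · exact (hmem hlt h).2.2.symm
  have hK : ∀ v w, cl v < cl w → (K.Adj v w ↔ (v, w) ∈ E (cl v) (cl w)) := by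
    intro v w hlt
    rw [fromRel_adj]
    refine ⟨?_, fun h => ⟨fun hvw => hlt.ne (congrArg cl hvw), Or.inl ⟨hlt, h⟩⟩⟩
    rintro ⟨-, ⟨-, h⟩ | ⟨hgt, -⟩⟩
    · exact h
    · exact absurd hlt (lt_asymm hgt)
  have hVj : ∀ {w j}, w ∈ V j → cl w = j := fun hw => (hV _ _).1 hw
  refine ⟨K, hKG, fun v j hj => ?_⟩
  rw [K.ncard_inter_neighborSet]
  rcases lt_or_gt_of_ne hj with hlt | hlt
  · rw [← (hE _ _ hlt).2.1 v ((hV v _).2 rfl), card_filter_fst_eq_s6 fun p hp => (hmem hlt hp).2.1]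
    exact congrArg card (filter_congr fun w hw => by rw [hK v w (by rwa [hVj hw]), hVj hw])
  · rw [← (hE _ _ hlt).2.2 v ((hV v _).2 rfl), card_filter_snd_eq_s6 fun p hp => (hmem hlt hp).1]
    exact congrArg card (filter_congr fun w hw => by
      rw [K.adj_comm, hK w v (by rwa [hVj hw]), hVj hw])

theorem exists_divisible_subgraph {n A T D : ℕ} (hr : 2 ≤ r) (G : SimpleGraph β)
    (hdisj : ∀ j₁ j₂ : Fin r, j₁ ≠ j₂ → Disjoint (V j₁) (V j₂))
    (hcover : ∀ x : β, ∃ j, x ∈ V j) (hcard : ∀ j, #(V j) = n)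
    (hpart : ∀ x y : β, G.Adj x y → ∃ j₁ j₂ : Fin r, j₁ ≠ j₂ ∧ x ∈ V j₁ ∧ y ∈ V j₂)
    (hdeg : ∀ j v, v ∉ V j → D ≤ ((V j : Set β) ∩ G.neighborSet v).ncard)
    (hdiff : ∀ j₁ j₂ v, v ∉ V j₁ → v ∉ V j₂ →
      ((V j₁ : Set β) ∩ G.neighborSet v).ncard ≤ ((V j₂ : Set β) ∩ G.neighborSet v).ncard + A)
    (hTD : T + A ≤ D) (hnum : (T + 2 * A) * (n - (D - (T + A))) < T * (D - (T + A) + 1)) :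
    ∃ H ≤ G, (∀ v, (H.neighborSet v).ncard ≤ r * (T + 2 * A)) ∧
      ∀ j₁ j₂ v, v ∉ V j₁ → v ∉ V j₂ →
        ((V j₁ : Set β) ∩ (G \ H).neighborSet v).ncard =
          ((V j₂ : Set β) ∩ (G \ H).neighborSet v).ncard := by
  classical
  obtain ⟨cl, hV⟩ : ∃ cl : β → Fin r, ∀ v j, v ∈ V j ↔ cl v = j := by
    choose cl hcl using hcover
    refine ⟨cl, fun v j => ⟨fun hv => ?_, fun h => h ▸ hcl v⟩⟩
    by_contra hne
    exact disjoint_left.1 (hdisj _ _ hne) (hcl v) hv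
  have hout : ∀ {v j}, v ∉ V j ↔ cl v ≠ j := by simp [hV]
  have hinside : ∀ v, ((V (cl v) : Set β) ∩ G.neighborSet v) = ∅ := fun v =>
    Set.eq_empty_of_forall_notMem fun w ⟨hw, hvw⟩ => by
      obtain ⟨j₁, j₂, hne, hv₁, hw₂⟩ := hpart v w hvw
      exact hne ((((hV _ _).1 hv₁).symm.trans ((hV _ _).1 hw).symm).trans ((hV _ _).1 hw₂))
  obtain ⟨c, hsum, hcD, hc⟩ := exists_balanced_target hr hV hcard
    (fun v j => ((V j : Set β) ∩ G.neighborSet v).ncard)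
    (fun i j _ => G.sum_ncard_inter_neighborSet_comm _ _) (fun v j hj => hdeg j v (hout.2 hj))
    (fun v j₁ j₂ h₁ h₂ => hdiff j₁ j₂ v (hout.2 h₁) (hout.2 h₂)) hTD
  obtain ⟨E, hE⟩ := G.exists_interedges_family hV hcard hsum hc hcD hnum
  obtain ⟨K, hKG, hK⟩ := G.exists_le_ncard_inter_neighborSet_eq hV c E hE
  refine ⟨G \ K, sdiff_le, fun v => ?_, fun j₁ j₂ v h₁ h₂ => ?_⟩
  · have hclass : ∀ j, ((V j : Set β) ∩ (G \ K).neighborSet v).ncard ≤ T + 2 * A := fun j => by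
      have hsplit := G.ncard_inter_neighborSet_sdiff_add hKG (V j) v
      by_cases hj : cl v = j
      · subst hj
        rw [hinside, Set.ncard_empty] at hsplit
        omega
      · have := (hc v j hj).2
        rw [hK v j hj] at hsplit
        omega
    simpa using (G \ K).ncard_neighborSet_le_card_mul hcover v hclass
  · rw [sdiff_sdiff_right_self, inf_of_le_right hKG, hK v j₁ (hout.1 h₁), hK v j₂ (hout.1 h₂)]

end Partite

section Parameters

lemma le_add_ceil_of_abs_sub_lt {a b : ℕ} {x : ℝ} (h : |(a : ℝ) - b| < x) : a ≤ b + ⌈x⌉₊ := by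
  have := (abs_lt.1 h).2
  have := Nat.le_ceil x
  exact_mod_cast (show (a : ℝ) ≤ b + ⌈x⌉₊ by linarith)

lemma add_le_and_mul_sub_lt_mul {n A T D : ℕ} {δ : ℝ} (hδ : 0 ≤ δ) (hT : 1 ≤ T)
    (hAT : (A : ℝ) ≤ δ * T) (hK : 2 * ((T : ℝ) + 2 * A) ≤ δ * n) (hD : (1 / 2 + δ) * n ≤ D) :
    T + A ≤ D ∧ (T + 2 * A) * (n - (D - (T + A))) < T * (D - (T + A) + 1) := by
  have hn : (0 : ℝ) ≤ n := n.cast_nonneg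
  have hA : (0 : ℝ) ≤ A := A.cast_nonneg
  have hTA : T + A ≤ D := by
    have : ((T + A : ℕ) : ℝ) ≤ D := by push_cast; nlinarith [mul_nonneg hδ hn]
    exact_mod_cast this
  refine ⟨hTA, ?_⟩
  have hD' : (1 / 2 + δ / 2) * n ≤ ((D - (T + A) : ℕ) : ℝ) := by
    rw [Nat.cast_sub hTA]
    push_cast
    nlinarith
  rcases le_or_gt n (D - (T + A)) with h | h
  · rw [Nat.sub_eq_zero_of_le h, mul_zero]
    positivity
  · rw [← Nat.cast_lt (α := ℝ)]
    push_cast [Nat.cast_sub h.le]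
    have hT' : (1 : ℝ) ≤ T := by exact_mod_cast hT
    nlinarith [mul_le_mul_of_nonneg_left hD' (T.cast_nonneg (α := ℝ)),
      mul_le_mul_of_nonneg_left hD' hA, mul_le_mul_of_nonneg_right hAT hn,
      mul_nonneg (mul_nonneg hδ hA) hn]

lemma exists_integer_parameters {r n L D : ℕ} {α γ : ℝ} (hr : 1 ≤ r) (hγ : 0 < γ) (hα : 0 < α)
    (hL : (r : ℝ) / γ ≤ L) (hαL : α ≤ γ / (2 * (r * (L + 2))))
    (hn : 2 * (r * (L + 2)) / γ ≤ n) (hD : (1 / 2 + 2 * γ / r) * n ≤ D) :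
    ∃ A T : ℕ, α * n ≤ A ∧ T + A ≤ D ∧
      (T + 2 * A) * (n - (D - (T + A))) < T * (D - (T + A) + 1) ∧
      (r : ℝ) * (T + 2 * A) ≤ γ * n := by
  have hr0 : (0 : ℝ) < r := by exact_mod_cast hr
  have hM : (0 : ℝ) < r * (L + 2) := by positivity
  have hn0 : (0 : ℝ) < n := (by positivity : (0 : ℝ) < 2 * (r * (L + 2)) / γ).trans_le hn
  set A := ⌈α * n⌉₊
  have hA : 1 ≤ A := Nat.one_le_iff_ne_zero.2 (Nat.ceil_pos.2 (by positivity)).ne'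
  have hMA : r * (L + 2) * (A : ℝ) ≤ γ * n := by
    have h₁ : (A : ℝ) < α * n + 1 := Nat.ceil_lt_add_one (by positivity)
    have h₂ : r * (L + 2) * α ≤ γ / 2 := by
      rw [le_div_iff₀ (by positivity)] at hαL
      linarith
    have h₃ : r * (L + 2) ≤ γ * n / 2 := by
      rw [div_le_iff₀ hγ] at hn
      linarith
    nlinarith
  have hL2 : 2 ≤ 2 * γ / r * L := by
    calc (2 : ℝ) = 2 * γ / r * (r / γ) := by field_simp
      _ ≤ 2 * γ / r * L := by gcongr
  have hL1 : 1 ≤ L := by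
    have : (0 : ℝ) < L := (by positivity : (0 : ℝ) < r / γ).trans_le hL
    exact_mod_cast this
  obtain ⟨hTD, hnum⟩ := add_le_and_mul_sub_lt_mul (n := n) (A := A) (T := A * L) (D := D)
    (δ := 2 * γ / r) (by positivity) (one_le_mul hA hL1)
    (by push_cast; nlinarith [(A.cast_nonneg : (0 : ℝ) ≤ A)])
    (by
      push_cast
      rw [div_mul_eq_mul_div, le_div_iff₀ hr0]
      nlinarith)
    hD
  refine ⟨A, A * L, Nat.le_ceil _, hTD, hnum, ?_⟩
  push_cast
  linarith

end Parameters

/-- Let `1/n ≪ α ≪ γ ≪ 1/r`.  If `G` is an `r`-partite graph on `(V 1, ..., V r)` with all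
classes of size `n`, every vertex `v ∉ V j` satisfies `d(v, V j) ≥ (1/2 + 2γ/r)n`, and
`|d(v, V j₁) - d(v, V j₂)| < αn` for all `j₁, j₂` and `v ∉ V j₁ ∪ V j₂`, then there is a
subgraph `H ⊆ G` with `Δ(H) ≤ γn` such that `G - H` is `K_r`-divisible. -/
theorem stmt6 :
    ∀ r : ℕ, 1 ≤ r →
    ∃ γ₀ : ℝ, 0 < γ₀ ∧ ∀ γ : ℝ, 0 < γ → γ ≤ γ₀ →
    ∃ α₀ : ℝ, 0 < α₀ ∧ ∀ α : ℝ, 0 < α → α ≤ α₀ →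
    ∃ n₀ : ℕ, ∀ n : ℕ, n₀ ≤ n →
    ∀ (β : Type) [Fintype β] [DecidableEq β],
    ∀ (V : Fin r → Finset β) (G : SimpleGraph β),
      (∀ j₁ j₂ : Fin r, j₁ ≠ j₂ → Disjoint (V j₁) (V j₂)) →
      (∀ x : β, ∃ j, x ∈ V j) →
      (∀ j, (V j).card = n) →
      (∀ x y : β, G.Adj x y → ∃ j₁ j₂ : Fin r, j₁ ≠ j₂ ∧ x ∈ V j₁ ∧ y ∈ V j₂) →
      (∀ (j : Fin r) (v : β), v ∉ V j →
        ((1 : ℝ)/2 + 2*γ/r) * n ≤ (((V j : Set β) ∩ G.neighborSet v).ncard : ℝ)) →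
      (∀ j₁ j₂ : Fin r, ∀ v : β, v ∉ V j₁ → v ∉ V j₂ →
        |(((V j₁ : Set β) ∩ G.neighborSet v).ncard : ℝ) -
          (((V j₂ : Set β) ∩ G.neighborSet v).ncard : ℝ)| < α * n) →
      ∃ H : SimpleGraph β, H ≤ G ∧
        (∀ v : β, ((H.neighborSet v).ncard : ℝ) ≤ γ * n) ∧
        (∀ j₁ j₂ : Fin r, ∀ v : β, v ∉ V j₁ → v ∉ V j₂ →
          ((V j₁ : Set β) ∩ (G \ H).neighborSet v).ncard =
            ((V j₂ : Set β) ∩ (G \ H).neighborSet v).ncard) := by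
  intro r hr
  refine ⟨1, one_pos, fun γ hγ _ => ?_⟩
  set L := ⌈(r : ℝ) / γ⌉₊
  refine ⟨γ / (2 * (r * (L + 2))), by positivity, fun α hα hαL => ⟨⌈2 * (r * (L + 2)) / γ⌉₊,
    fun n hn β _ _ V G hdisj hcover hcard hpart hdeg hdiff => ?_⟩⟩
  obtain rfl | hr2 : r = 1 ∨ 2 ≤ r := by omega
  · refine ⟨⊥, bot_le, fun v => by simpa using mul_nonneg hγ.le n.cast_nonneg,
      fun j₁ j₂ v h₁ _ => absurd ?_ h₁⟩
    obtain ⟨j, hj⟩ := hcover v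
    rwa [Subsingleton.elim j₁ j]
  obtain ⟨A, T, hA, hTD, hnum, hHdeg⟩ := exists_integer_parameters hr hγ hα (Nat.le_ceil _) hαL
    ((Nat.le_ceil _).trans (Nat.cast_le.2 hn)) (Nat.le_ceil _)
  obtain ⟨H, hHG, hH, hdiv⟩ := exists_divisible_subgraph hr2 G hdisj hcover hcard hpart
    (fun j v hv => Nat.ceil_le.2 (hdeg j v hv))
    (fun j₁ j₂ v h₁ h₂ => (le_add_ceil_of_abs_sub_lt (hdiff j₁ j₂ v h₁ h₂)).trans
      (Nat.add_le_add_left (Nat.ceil_le.2 hA) _)) hTD hnum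
  refine ⟨H, hHG, fun v => le_trans ?_ hHdeg, hdiv⟩
  exact_mod_cast hH v
end

section
/- Let r≥3 and h∈ℕ. Define M_h as follows: take a copy of K_r with one vertex in each class V_j, replace each edge by h parallel edges to obtain a multigraph M, and let M_h be the graph obtained from M by K_r-expanding every (multi-)edge using pairwise vertex-disjoint expansion cliques. Then |M_h| = r + h·r·C(r,2) and M_h has degeneracy r−1. -/
/-!
List the original vertices `w j` first and the clique vertices `u p t j` afterwards. The original
vertices are pairwise non-adjacent, since every edge of `M` was expanded away, so none of them has
an earlier neighbour. A clique vertex `u p t j` is adjacent to exactly one vertex for each other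
class `j'`: to `u p t j'`, except that the deleted edge `u_{p.1} u_{p.2}` is replaced by the edge
to the original vertex `w j'`. So its whole degree is at most `r - 1`.
-/

open Finset

namespace SimpleGraph

variable {V : Type*} (G : SimpleGraph V) [DecidableRel G.Adj]

lemma length_filter_adj_le_degree [Fintype V] {l : List V} (hl : l.Nodup) (v : V) :
    (l.filter fun b => G.Adj v b).length ≤ G.degree v := by
  classical
  rw [← List.toFinset_card_of_nodup (hl.filter _), ← card_neighborFinset_eq_degree]
  refine card_le_card fun b hb => ?_
  rw [List.mem_toFinset, List.mem_filter, decide_eq_true_eq] at hb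
  exact (mem_neighborFinset _ _ _).2 hb.2

lemma length_filter_adj_take_le [Fintype V] {l₁ l₂ : List V} (hl : (l₁ ++ l₂).Nodup)
    (hind : ∀ a ∈ l₁, ∀ b ∈ l₁, ¬G.Adj a b) {d : ℕ} (hdeg : ∀ b ∈ l₂, G.degree b ≤ d)
    (i : Fin (l₁ ++ l₂).length) :
    (((l₁ ++ l₂).take i).filter fun b => G.Adj ((l₁ ++ l₂).get i) b).length ≤ d := by
  obtain ⟨i, hi⟩ := i
  by_cases h₁ : i < l₁.length
  · have hnil : ((l₁ ++ l₂).take i).filter (fun b => G.Adj ((l₁ ++ l₂).get ⟨i, hi⟩) b) = [] := by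
      rw [List.filter_eq_nil_iff, List.take_append_of_le_length h₁.le]
      intro b hb
      simpa [List.getElem_append_left h₁] using
        hind _ (List.getElem_mem h₁) b (List.mem_of_mem_take hb)
    rw [hnil, List.length_nil]
    exact d.zero_le
  · have hmem : (l₁ ++ l₂).get ⟨i, hi⟩ ∈ l₂ := by
      simp only [List.get_eq_getElem, List.getElem_append_right (Nat.le_of_not_lt h₁)]
      exact List.getElem_mem _
    calc _ ≤ ((l₁ ++ l₂).filter fun b => G.Adj ((l₁ ++ l₂).get ⟨i, hi⟩) b).length :=
          ((List.take_sublist _ _).filter _).length_le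
      _ ≤ d := (G.length_filter_adj_le_degree hl _).trans (hdeg _ hmem)

end SimpleGraph

open SimpleGraph

section Expansion

variable {β : Type*} {r h : ℕ} (w : Fin r → β) (u : Fin r × Fin r → Fin h → Fin r → β)

def ExpansionAdj (a b : β) : Prop :=
  ∃ p : Fin r × Fin r, p.1 < p.2 ∧ ∃ t : Fin h,
    ((∃ j j' : Fin r, j ≠ j' ∧ ¬((j = p.1 ∧ j' = p.2) ∨ (j = p.2 ∧ j' = p.1)) ∧
        a = u p t j ∧ b = u p t j') ∨
     (a = w p.1 ∧ b = u p t p.2) ∨ (b = w p.1 ∧ a = u p t p.2) ∨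
     (a = w p.2 ∧ b = u p t p.1) ∨ (b = w p.2 ∧ a = u p t p.1))

variable {w u}

lemma not_expansionAdj_original (hwu : ∀ p t j, p.1 < p.2 → ∀ j', u p t j ≠ w j')
    (j j' : Fin r) : ¬ExpansionAdj w u (w j) (w j') := by
  rintro ⟨p, hp, t, ⟨_, _, _, _, he, _⟩ | ⟨-, he⟩ | ⟨-, he⟩ | ⟨-, he⟩ | ⟨-, he⟩⟩
  all_goals exact hwu p t _ hp _ he.symm

lemma mem_image_of_expansionAdj [DecidableEq β]
    (huinj : ∀ p t j p' t' j', p.1 < p.2 → p'.1 < p'.2 →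
      u p t j = u p' t' j' → p = p' ∧ t = t' ∧ j = j')
    (hwu : ∀ p t j, p.1 < p.2 → ∀ j', u p t j ≠ w j')
    {p : Fin r × Fin r} {t : Fin h} {j : Fin r} {b : β} (hp : p.1 < p.2)
    (hadj : ExpansionAdj w u (u p t j) b) :
    b ∈ (univ.erase j).image fun j' =>
      if (j = p.1 ∧ j' = p.2) ∨ (j = p.2 ∧ j' = p.1) then w j' else u p t j' := by
  obtain ⟨p', hp', t', ⟨j₁, j₂, hne, hnp, he, rfl⟩ | ⟨he, -⟩ | ⟨rfl, he⟩ | ⟨he, -⟩ | ⟨rfl, he⟩⟩ :=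
    hadj
  · obtain ⟨rfl, rfl, rfl⟩ := huinj _ _ _ _ _ _ hp hp' he
    exact mem_image.2 ⟨j₂, mem_erase.2 ⟨hne.symm, mem_univ _⟩, if_neg hnp⟩
  · exact absurd he (hwu _ _ _ hp _)
  · obtain ⟨rfl, rfl, rfl⟩ := huinj _ _ _ _ _ _ hp hp' he
    exact mem_image.2 ⟨p.1, by simp [hp.ne], by simp⟩
  · exact absurd he (hwu _ _ _ hp _)
  · obtain ⟨rfl, rfl, rfl⟩ := huinj _ _ _ _ _ _ hp hp' he
    exact mem_image.2 ⟨p.2, by simp [hp.ne'], by simp⟩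

lemma degree_expansionVertex_le [Fintype β] (G : SimpleGraph β) [DecidableRel G.Adj]
    (hG : ∀ a b, G.Adj a b ↔ ExpansionAdj w u a b)
    (huinj : ∀ p t j p' t' j', p.1 < p.2 → p'.1 < p'.2 →
      u p t j = u p' t' j' → p = p' ∧ t = t' ∧ j = j')
    (hwu : ∀ p t j, p.1 < p.2 → ∀ j', u p t j ≠ w j')
    {p : Fin r × Fin r} (t : Fin h) (j : Fin r) (hp : p.1 < p.2) :
    G.degree (u p t j) ≤ r - 1 := by
  classical
  rw [← card_neighborFinset_eq_degree]
  calc _ ≤ #((univ.erase j).image fun j' =>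
          if (j = p.1 ∧ j' = p.2) ∨ (j = p.2 ∧ j' = p.1) then w j' else u p t j') :=
        card_le_card fun b hb =>
          mem_image_of_expansionAdj huinj hwu hp ((hG _ _).1 ((mem_neighborFinset _ _ _).1 hb))
    _ ≤ #(univ.erase j) := card_image_le
    _ = r - 1 := by rw [card_erase_of_mem (mem_univ _), card_univ, Fintype.card_fin]

variable (w u)

def originalVertices : List β := (List.finRange r).map w

noncomputable def expansionVertices : List β :=
  (({p : Fin r × Fin r | p.1 < p.2} : Finset _) ×ˢ (univ : Finset (Fin h × Fin r))).toList.map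
    fun x => u x.1 x.2.1 x.2.2

variable {w u}

lemma mem_originalVertices {a : β} : a ∈ originalVertices w ↔ ∃ j, a = w j := by
  simp [originalVertices, eq_comm]

lemma mem_expansionVertices {a : β} :
    a ∈ expansionVertices u ↔ ∃ p t j, p.1 < p.2 ∧ a = u p t j := by
  simp [expansionVertices, eq_comm]

lemma length_expansionVertices : (expansionVertices u).length = h * r * r.choose 2 := by
  simp [expansionVertices, Fintype.card_product_filter_lt, mul_comm]

lemma nodup_originalVertices_append_expansionVertices (hwinj : Function.Injective w)
    (huinj : ∀ p t j p' t' j', p.1 < p.2 → p'.1 < p'.2 →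
      u p t j = u p' t' j' → p = p' ∧ t = t' ∧ j = j')
    (hwu : ∀ p t j, p.1 < p.2 → ∀ j', u p t j ≠ w j') :
    (originalVertices w ++ expansionVertices u).Nodup := by
  refine List.nodup_append.2 ⟨(List.nodup_finRange r).map hwinj, ?_, ?_⟩
  · refine List.Nodup.map_on ?_ (nodup_toList _)
    rintro ⟨p, t, j⟩ hx ⟨p', t', j'⟩ hy he
    simp only [mem_toList, mem_product, mem_filter, mem_univ, true_and, and_true] at hx hy
    obtain ⟨rfl, rfl, rfl⟩ := huinj p t j p' t' j' hx hy he
    rfl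
  · rintro a ha b hb rfl
    obtain ⟨j, rfl⟩ := mem_originalVertices.1 ha
    obtain ⟨p, t, j', hp, he⟩ := mem_expansionVertices.1 hb
    exact hwu p t j' hp j he.symm

end Expansion

theorem stmt12_general {β : Type*} [Fintype β] {r h : ℕ}
    (w : Fin r → β) (u : Fin r × Fin r → Fin h → Fin r → β)
    (hwinj : Function.Injective w)
    (huinj : ∀ p t j p' t' j', p.1 < p.2 → p'.1 < p'.2 →
      u p t j = u p' t' j' → p = p' ∧ t = t' ∧ j = j')
    (hwu : ∀ p t j, p.1 < p.2 → ∀ j', u p t j ≠ w j')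
    (hcov : ∀ a : β, (∃ j, a = w j) ∨ ∃ p t j, p.1 < p.2 ∧ a = u p t j)
    (G : SimpleGraph β) [DecidableRel G.Adj]
    (hG : ∀ a b : β, G.Adj a b ↔ ∃ p : Fin r × Fin r, p.1 < p.2 ∧ ∃ t : Fin h,
      ((∃ j j' : Fin r, j ≠ j' ∧ ¬((j = p.1 ∧ j' = p.2) ∨ (j = p.2 ∧ j' = p.1)) ∧
          a = u p t j ∧ b = u p t j') ∨
       (a = w p.1 ∧ b = u p t p.2) ∨ (b = w p.1 ∧ a = u p t p.2) ∨
       (a = w p.2 ∧ b = u p t p.1) ∨ (b = w p.2 ∧ a = u p t p.1))) :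
    Fintype.card β = r + h * r * r.choose 2 ∧
    ∃ L : List β, L.Nodup ∧ (∀ a : β, a ∈ L) ∧
      ∀ i : Fin L.length,
        ((L.take (i : ℕ)).filter fun b => G.Adj (L.get i) b).length ≤ r - 1 := by
  classical
  have hnd := nodup_originalVertices_append_expansionVertices hwinj huinj hwu
  have hmem : ∀ a, a ∈ originalVertices w ++ expansionVertices u := fun a =>
    List.mem_append.2 ((hcov a).imp mem_originalVertices.2 mem_expansionVertices.2)
  refine ⟨?_, _, hnd, hmem, G.length_filter_adj_take_le hnd ?_ ?_⟩
  · rw [← Fintype.card_congr (hnd.getEquivOfForallMemList _ hmem), Fintype.card_fin,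
      List.length_append, length_expansionVertices]
    simp [originalVertices]
  · intro a ha b hb hadj
    obtain ⟨j, rfl⟩ := mem_originalVertices.1 ha
    obtain ⟨j', rfl⟩ := mem_originalVertices.1 hb
    exact not_expansionAdj_original hwu j j' ((hG _ _).1 hadj)
  · intro b hb
    obtain ⟨p, t, j, hp, rfl⟩ := mem_expansionVertices.1 hb
    exact degree_expansionVertex_le G hG huinj hwu t j hp

/-- Let `r ≥ 3`, `h ∈ ℕ` and let `M_h` be the graph obtained from the multigraph `M`
(a copy of `K_r` with one vertex `w j` in each class, each edge replaced by `h` parallel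
edges) by `K_r`-expanding every multiedge using pairwise disjoint expansion cliques
`u p t : Fin r → β` (for each pair `p` with `p.1 < p.2` and each copy `t : Fin h`).
Then `|M_h| = r + h·r·C(r,2)` and `M_h` has degeneracy `r - 1`: there is an ordering of the
vertices in which every vertex has at most `r - 1` neighbours preceding it. -/
theorem stmt12 {β : Type*} [Fintype β] [DecidableEq β] {r h : ℕ} (hr : 3 ≤ r)
    (V : Fin r → Set β)
    (w : Fin r → β) (u : Fin r × Fin r → Fin h → Fin r → β)
    (hwV : ∀ j, w j ∈ V j)
    (huV : ∀ p t j, p.1 < p.2 → u p t j ∈ V j)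
    (hwinj : Function.Injective w)
    (huinj : ∀ p t j p' t' j', p.1 < p.2 → p'.1 < p'.2 →
      u p t j = u p' t' j' → p = p' ∧ t = t' ∧ j = j')
    (hwu : ∀ p t j, p.1 < p.2 → ∀ j', u p t j ≠ w j')
    (hcov : ∀ a : β, (∃ j, a = w j) ∨ ∃ p t j, p.1 < p.2 ∧ a = u p t j)
    (G : SimpleGraph β) [DecidableRel G.Adj]
    (hG : ∀ a b : β, G.Adj a b ↔ ∃ p : Fin r × Fin r, p.1 < p.2 ∧ ∃ t : Fin h,
      ((∃ j j' : Fin r, j ≠ j' ∧ ¬((j = p.1 ∧ j' = p.2) ∨ (j = p.2 ∧ j' = p.1)) ∧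
          a = u p t j ∧ b = u p t j') ∨
       (a = w p.1 ∧ b = u p t p.2) ∨ (b = w p.1 ∧ a = u p t p.2) ∨
       (a = w p.2 ∧ b = u p t p.1) ∨ (b = w p.2 ∧ a = u p t p.1))) :
    Fintype.card β = r + h * r * r.choose 2 ∧
    ∃ L : List β, L.Nodup ∧ (∀ a : β, a ∈ L) ∧
      ∀ i : Fin L.length,
        ((L.take (i : ℕ)).filter fun b => G.Adj (L.get i) b).length ≤ r - 1 :=
  stmt12_general w u hwinj huinj hwu hcov G hG
end

section
/- Let T be the transformer graph constructed from K_r-divisible graphs H and H' (with edge-bijective homomorphism φ: H→H') as follows: vertex sets Z^{xy} of size r−2 for each edge xy∈E(H) and S^x of size (r−1)s for each x∈V(H), all disjoint; edge sets E_H = {xz : x∈V(H), z∈Z^x}, E_{H'} = {φ(x)z : x∈V(H), z∈Z^x}, E_Z = all pairs within each Z^e, E_S = {xv : v∈S^x}, E_S' = {φ(x)v : v∈S^x}; and for each x, edge-disjoint perfect K_{r−1}-matchings F^x_1 on S^x∪Z^x (with Z^x independent in F^x_1) and F^x_2 on S^x. Then both T∪H and T∪H' have K_r-decompositions, i.e.,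 T is an (H,H')_r-transformer. -/
open Finset

/-- `G` has a `K_r`-decomposition: a collection of `r`-cliques which are pairwise
edge-disjoint and cover all edges of `G`. -/
def HasKrDecomp {β : Type*} [DecidableEq β] (r : ℕ) (G : SimpleGraph β) : Prop :=
  ∃ D : Finset (Finset β),
    (∀ S ∈ D, S.card = r) ∧
    (∀ S ∈ D, ∀ x ∈ S, ∀ y ∈ S, x ≠ y → G.Adj x y) ∧
    (∀ S ∈ D, ∀ T ∈ D, S ≠ T → (S ∩ T).card ≤ 1) ∧
    (∀ x y : β, G.Adj x y → ∃ S ∈ D, x ∈ S ∧ y ∈ S)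

/-- `F` restricted to `A` is a perfect `K_t`-matching: a collection of vertex-disjoint
`t`-cliques of `F` partitioning `A` and containing all edges of `F`. -/
def IsPerfectCliqueMatching {β : Type*} [DecidableEq β]
    (F : SimpleGraph β) (A : Finset β) (t : ℕ) : Prop :=
  ∃ M : Finset (Finset β),
    (∀ Q ∈ M, Q.card = t) ∧
    (∀ Q ∈ M, ∀ x ∈ Q, ∀ y ∈ Q, x ≠ y → F.Adj x y) ∧
    (∀ Q ∈ M, ∀ Q' ∈ M, Q ≠ Q' → Disjoint Q Q') ∧
    (M.biUnion id = A) ∧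
    (∀ x y : β, F.Adj x y → ∃ Q ∈ M, x ∈ Q ∧ y ∈ Q)

private lemma pairs_aux {β : Type*} {a b u v u' v' : β} (hab : a ≠ b)
    (h1 : a = u ∨ a = v) (h2 : b = u ∨ b = v) (h3 : a = u' ∨ a = v')
    (h4 : b = u' ∨ b = v') : (u = u' ∧ v = v') ∨ (u = v' ∧ v = u') := by
  rcases h1 with rfl | rfl <;> rcases h2 with rfl | rfl <;>
    rcases h3 with h3 | h3 <;> rcases h4 with h4 | h4 <;> simp_all <;> tauto

/-- The transformer construction: given vertex-disjoint `K_r`-divisible graphs `H`, `H'`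
with an edge-bijective homomorphism `φ : H → H'`, sets `Z^{xy}` of size `r-2` for each edge
`xy ∈ H` and `S^x` of size `(r-1)s` for each `x ∈ V(H)` (all disjoint and avoiding
`V(H ∪ H')`), edge-disjoint perfect `K_{r-1}`-matchings `F¹_x` on `S^x ∪ Z^x` (with `Z^x`
independent in `F¹_x`) and `F²_x` on `S^x`, the graph `T` with edge set
`E_H ∪ E_{H'} ∪ E_Z ∪ E_S ∪ E_S' ∪ ⋃_x (F¹_x ∪ F²_x)` is an `(H,H')_r`-transformer:
both `T ⊔ H` and `T ⊔ H'` have `K_r`-decompositions. -/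
theorem stmt13 {β : Type*} [Fintype β] [DecidableEq β] {r s : ℕ} (hr : 3 ≤ r) (hs : 1 ≤ s)
    (V : Fin r → Finset β) (H H' : SimpleGraph β) (φ : β → β)
    (hVdisj : ∀ j₁ j₂ : Fin r, j₁ ≠ j₂ → Disjoint (V j₁) (V j₂))
    (hdivH : ∀ j₁ j₂ : Fin r, ∀ v : β, v ∉ V j₁ → v ∉ V j₂ →
      fdeg H v (V j₁) = fdeg H v (V j₂))
    (hdivH' : ∀ j₁ j₂ : Fin r, ∀ v : β, v ∉ V j₁ → v ∉ V j₂ →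
      fdeg H' v (V j₁) = fdeg H' v (V j₂))
    (hvd : Disjoint H.support H'.support)
    (hhom : ∀ a b : β, H.Adj a b → H'.Adj (φ a) (φ b))
    (hbij : Set.BijOn (Sym2.map φ) H.edgeSet H'.edgeSet)
    (hφcls : ∀ (j : Fin r) (a : β), a ∈ V j → φ a ∈ V j)
    (Z : β → β → Finset β) (S : β → Finset β) (Zx : β → Finset β)
    (hZsym : ∀ a b, Z a b = Z b a)
    (hZcard : ∀ a b, H.Adj a b → (Z a b).card = r - 2)
    (hScard : ∀ x ∈ H.support, (S x).card = (r - 1) * s)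
    (hZxsub : ∀ a b, H.Adj a b → Z a b ⊆ Zx a)
    (hZxsup : ∀ a z, z ∈ Zx a → ∃ b, H.Adj a b ∧ z ∈ Z a b)
    (hZdisj : ∀ a b c d, H.Adj a b → H.Adj c d →
      ¬((a = c ∧ b = d) ∨ (a = d ∧ b = c)) → Disjoint (Z a b) (Z c d))
    (hSdisj : ∀ a b, a ≠ b → Disjoint (S a) (S b))
    (hZS : ∀ a b c, H.Adj a b → Disjoint (Z a b) (S c))
    (hZV : ∀ a b, H.Adj a b → ∀ z ∈ Z a b, z ∉ H.support ∧ z ∉ H'.support)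
    (hSV : ∀ a, ∀ v ∈ S a, v ∉ H.support ∧ v ∉ H'.support)
    (F1 F2 : β → SimpleGraph β)
    (hF1 : ∀ x ∈ H.support, IsPerfectCliqueMatching (F1 x) (S x ∪ Zx x) (r - 1))
    (hF2 : ∀ x ∈ H.support, IsPerfectCliqueMatching (F2 x) (S x) (r - 1))
    (hF12 : ∀ x, Disjoint (F1 x) (F2 x))
    (hZind : ∀ x, ∀ a ∈ Zx x, ∀ b ∈ Zx x, ¬ (F1 x).Adj a b)
    (T : SimpleGraph β)
    (hT : ∀ a b : β, T.Adj a b ↔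
      ((a ∈ H.support ∧ b ∈ Zx a) ∨ (b ∈ H.support ∧ a ∈ Zx b) ∨
       (∃ x ∈ H.support, (a = φ x ∧ b ∈ Zx x) ∨ (b = φ x ∧ a ∈ Zx x)) ∨
       (∃ x y, H.Adj x y ∧ a ∈ Z x y ∧ b ∈ Z x y ∧ a ≠ b) ∨
       (a ∈ H.support ∧ b ∈ S a) ∨ (b ∈ H.support ∧ a ∈ S b) ∨
       (∃ x ∈ H.support, (a = φ x ∧ b ∈ S x) ∨ (b = φ x ∧ a ∈ S x)) ∨
       (∃ x ∈ H.support, (F1 x).Adj a b ∨ (F2 x).Adj a b))) :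
    HasKrDecomp r (T ⊔ H) ∧ HasKrDecomp r (T ⊔ H') := by
  classical
  have hsupp : ∀ {a b : β}, H.Adj a b → a ∈ H.support := fun h => ⟨_, h⟩
  have hφsupp : ∀ {x : β}, x ∈ H.support → φ x ∈ H'.support := by
    rintro x ⟨y, hy⟩; exact ⟨_, hhom _ _ hy⟩
  have hns : ∀ {a : β}, a ∈ H.support → a ∉ H'.support := fun h => Set.disjoint_left.mp hvd h
  simp only [IsPerfectCliqueMatching] at hF1 hF2
  choose M1 hM1card hM1adj hM1disj hM1cov hM1edge using hF1
  choose M2 hM2card hM2adj hM2disj hM2cov hM2edge using hF2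
  have hZxgood : ∀ x, ∀ z ∈ Zx x, z ∉ H.support ∧ z ∉ H'.support := by
    intro x z hz
    obtain ⟨b, hb, hzb⟩ := hZxsup x z hz
    exact hZV x b hb z hzb
  have hZxnS : ∀ x, ∀ z ∈ Zx x, ∀ c, z ∉ S c := by
    intro x z hz c
    obtain ⟨b, hb, hzb⟩ := hZxsup x z hz
    exact Finset.disjoint_left.mp (hZS x b c hb) hzb
  have hQ1sub : ∀ x (hx : x ∈ H.support), ∀ Q ∈ M1 x hx, Q ⊆ S x ∪ Zx x := by
    intro x hx Q hQ
    rw [← hM1cov x hx]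
    exact Finset.subset_biUnion_of_mem id hQ
  have hQ2sub : ∀ x (hx : x ∈ H.support), ∀ Q ∈ M2 x hx, Q ⊆ S x := by
    intro x hx Q hQ
    rw [← hM2cov x hx]
    exact Finset.subset_biUnion_of_mem id hQ
  have hQ1good : ∀ x (hx : x ∈ H.support), ∀ Q ∈ M1 x hx, ∀ v ∈ Q,
      v ∉ H.support ∧ v ∉ H'.support := by
    intro x hx Q hQ v hv
    rcases Finset.mem_union.mp (hQ1sub x hx Q hQ hv) with h | h
    · exact hSV x v h
    · exact hZxgood x v h
  have hQ2good : ∀ x (hx : x ∈ H.support), ∀ Q ∈ M2 x hx, ∀ v ∈ Q,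
      v ∉ H.support ∧ v ∉ H'.support := by
    intro x hx Q hQ v hv
    exact hSV x v (hQ2sub x hx Q hQ hv)
  have hQZ1 : ∀ x (hx : x ∈ H.support), ∀ Q ∈ M1 x hx, ∀ a ∈ Q, ∀ b ∈ Q,
      a ∈ Zx x → b ∈ Zx x → a = b := by
    intro x hx Q hQ a ha b hb haz hbz
    by_contra hne
    exact hZind x a haz b hbz (hM1adj x hx Q hQ a ha b hb hne)
  have hQ12 : ∀ x (hx : x ∈ H.support), ∀ Q ∈ M1 x hx, ∀ Q' ∈ M2 x hx,
      ∀ a, a ∈ Q → a ∈ Q' → ∀ b, b ∈ Q → b ∈ Q' → a = b := by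
    intro x hx Q hQ Q' hQ' a haQ haQ' b hbQ hbQ'
    by_contra hne
    exact (hF12 x).le_bot ⟨hM1adj x hx Q hQ a haQ b hbQ hne,
      hM2adj x hx Q' hQ' a haQ' b hbQ' hne⟩
  have hZZ : ∀ {x y x' y' z : β}, H.Adj x y → H.Adj x' y' → z ∈ Z x y → z ∈ Z x' y' →
      (x = x' ∧ y = y') ∨ (x = y' ∧ y = x') := by
    intro x y x' y' z h h' hz hz'
    by_contra hc
    exact Finset.disjoint_left.mp (hZdisj x y x' y' h h' hc) hz hz'
  have hZxZx : ∀ {x x' z : β}, x ≠ x' → z ∈ Zx x → z ∈ Zx x' → H.Adj x x' ∧ z ∈ Z x x' := by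
    intro x x' z hne hz hz'
    obtain ⟨b, hb, hzb⟩ := hZxsup x z hz
    obtain ⟨b', hb', hzb'⟩ := hZxsup x' z hz'
    rcases hZZ hb hb' hzb hzb' with ⟨h1, _⟩ | ⟨_, h2⟩
    · exact absurd h1 hne
    · subst h2; exact ⟨hb, hzb⟩
  have hZxmem : ∀ {x y z : β}, H.Adj x y → z ∈ Z x y → z ∈ Zx x :=
    fun h hz => hZxsub _ _ h hz
  have hZxmem' : ∀ {x y z : β}, H.Adj x y → z ∈ Z x y → z ∈ Zx y := by
    intro x y z h hz
    exact hZxsub y x h.symm (by rw [hZsym]; exact hz)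
  have hcardA : ∀ {x y : β}, H.Adj x y → (insert x (insert y (Z x y))).card = r := by
    intro x y h
    have hxZ : x ∉ Z x y := fun hx => (hZV x y h x hx).1 (hsupp h)
    have hyZ : y ∉ Z x y := fun hy => (hZV x y h y hy).1 (hsupp h.symm)
    rw [Finset.card_insert_of_notMem (by simp [h.ne, hxZ]),
      Finset.card_insert_of_notMem hyZ, hZcard x y h]
    omega
  have hAeq : ∀ {x y x' y' : β}, (x = x' ∧ y = y') ∨ (x = y' ∧ y = x') →
      insert x (insert y (Z x y)) = insert x' (insert y' (Z x' y')) := by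
    rintro x y x' y' (⟨rfl, rfl⟩ | ⟨rfl, rfl⟩)
    · rfl
    · ext w; rw [hZsym]; simp; tauto

  -- elements in two M1-cliques for different centers lie in both Zx's
  have hQQZ : ∀ x (hx : x ∈ H.support) Q, Q ∈ M1 x hx → ∀ x' (hx' : x' ∈ H.support) Q',
      Q' ∈ M1 x' hx' → x ≠ x' → ∀ c, c ∈ Q → c ∈ Q' → c ∈ Zx x ∧ c ∈ Zx x' := by
    intro x hx Q hQ x' hx' Q' hQ' hxx c h1 h2
    have e1 : c ∈ Zx x := by
      rcases Finset.mem_union.mp (hQ1sub x hx Q hQ h1) with h | h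
      · exfalso
        rcases Finset.mem_union.mp (hQ1sub x' hx' Q' hQ' h2) with h' | h'
        · exact Finset.disjoint_left.mp (hSdisj x x' hxx) h h'
        · exact hZxnS x' c h' x h
      · exact h
    have e2 : c ∈ Zx x' := by
      rcases Finset.mem_union.mp (hQ1sub x' hx' Q' hQ' h2) with h | h
      · exact absurd h (hZxnS x c e1 x')
      · exact h
    exact ⟨e1, e2⟩
  -- Worker: two M1-type cliques (used for both decompositions, abstracting the apex)
  have W_BB : ∀ (p : β → β), (∀ u, u ∈ H.support → (p u ∈ H.support → False) ∨ True) → True := fun _ _ => trivial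
  clear W_BB
  -- A-vs-B worker (decomposition 1)
  have K1_AB : ∀ {x y x' : β} (hxy : H.Adj x y) (hx' : x' ∈ H.support) {Q' : Finset β},
      Q' ∈ M1 x' hx' → ∀ {c : β}, (c = x ∨ c = y ∨ c ∈ Z x y) → (c = φ x' ∨ c ∈ Q') →
      c ∈ Q' ∧ c ∈ Zx x' := by
    intro x y x' hxy hx' Q' hQ' c h1 h2
    have hcZ : c ∈ Z x y := by
      rcases h1 with rfl | rfl | h1
      · exfalso; rcases h2 with heq | hc
        · exact hns (hsupp hxy) (by rw [heq]; exact hφsupp hx')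
        · exact (hQ1good x' hx' Q' hQ' c hc).1 (hsupp hxy)
      · exfalso; rcases h2 with heq | hc
        · exact hns (hsupp hxy.symm) (by rw [heq]; exact hφsupp hx')
        · exact (hQ1good x' hx' Q' hQ' c hc).1 (hsupp hxy.symm)
      · exact h1
    have hnc := hZV x y hxy c hcZ
    rcases h2 with heq | hc
    · exact absurd (by rw [heq]; exact hφsupp hx') hnc.2
    · refine ⟨hc, ?_⟩
      rcases Finset.mem_union.mp (hQ1sub x' hx' Q' hQ' hc) with h | h
      · exact absurd h (hZxnS x c (hZxmem hxy hcZ) x')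
      · exact h
  -- A-vs-C worker (decomposition 1)
  have K1_AC : ∀ {x y x' : β} (hxy : H.Adj x y) (hx' : x' ∈ H.support) {Q' : Finset β},
      Q' ∈ M2 x' hx' → ∀ {c : β}, (c = x ∨ c = y ∨ c ∈ Z x y) → (c = x' ∨ c ∈ Q') →
      c = x' := by
    intro x y x' hxy hx' Q' hQ' c h1 h2
    rcases h2 with rfl | hc
    · rfl
    · exfalso
      have hcS := hQ2sub x' hx' Q' hQ' hc
      rcases h1 with rfl | rfl | h1
      · exact (hSV x' c hcS).1 (hsupp hxy)
      · exact (hSV x' c hcS).1 (hsupp hxy.symm)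
      · exact hZxnS x c (hZxmem hxy h1) x' hcS
  -- B-vs-C worker (decomposition 1): M1 x clique with apex φ x vs M2 x' clique with apex x'
  have K1_BC : ∀ {x : β} (hx : x ∈ H.support) {Q : Finset β}, Q ∈ M1 x hx →
      ∀ {x' : β} (hx' : x' ∈ H.support) {Q' : Finset β}, Q' ∈ M2 x' hx' →
      ∀ {a b : β}, (a = φ x ∨ a ∈ Q) → (a = x' ∨ a ∈ Q') →
      (b = φ x ∨ b ∈ Q) → (b = x' ∨ b ∈ Q') → a = b := by
    intro x hx Q hQ x' hx' Q' hQ' a b ha1 ha2 hb1 hb2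
    have key : ∀ {c : β}, (c = φ x ∨ c ∈ Q) → (c = x' ∨ c ∈ Q') → c ∈ Q ∧ c ∈ Q' := by
      intro c h1 h2
      rcases h1 with rfl | h1
      · exfalso; rcases h2 with heq | h2
        · exact hns hx' (by rw [← heq]; exact hφsupp hx)
        · exact (hQ2good x' hx' Q' hQ' _ h2).2 (hφsupp hx)
      · rcases h2 with rfl | h2
        · exact absurd hx' (hQ1good x hx Q hQ _ h1).1
        · exact ⟨h1, h2⟩
    obtain ⟨ha3, ha4⟩ := key ha1 ha2
    obtain ⟨hb3, hb4⟩ := key hb1 hb2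
    by_cases hxx : x = x'
    · subst hxx
      exact hQ12 x hx Q hQ Q' hQ' a ha3 ha4 b hb3 hb4
    · exfalso
      rcases Finset.mem_union.mp (hQ1sub x hx Q hQ ha3) with h | h
      · exact Finset.disjoint_left.mp (hSdisj x x' hxx) h (hQ2sub x' hx' Q' hQ' ha4)
      · exact hZxnS x a h x' (hQ2sub x' hx' Q' hQ' ha4)
  constructor
  · -- decomposition of T ⊔ H
    refine ⟨Finset.univ.filter (fun S0 =>
      (∃ x y, H.Adj x y ∧ S0 = insert x (insert y (Z x y))) ∨
      (∃ x, ∃ hx : x ∈ H.support, ∃ Q ∈ M1 x hx, S0 = insert (φ x) Q) ∨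
      (∃ x, ∃ hx : x ∈ H.support, ∃ Q ∈ M2 x hx, S0 = insert x Q)), ?_, ?_, ?_, ?_⟩
    · -- cards
      intro S0 hS0
      simp only [Finset.mem_filter, Finset.mem_univ, true_and] at hS0
      rcases hS0 with ⟨x, y, hxy, rfl⟩ | ⟨x, hx, Q, hQ, rfl⟩ | ⟨x, hx, Q, hQ, rfl⟩
      · exact hcardA hxy
      · rw [Finset.card_insert_of_notMem (fun hm => (hQ1good x hx Q hQ _ hm).2 (hφsupp hx)),
          hM1card x hx Q hQ]
        omega
      · rw [Finset.card_insert_of_notMem (fun hm => (hQ2good x hx Q hQ _ hm).1 hx),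
          hM2card x hx Q hQ]
        omega
    · -- cliques
      intro S0 hS0 a ha b hb hne
      simp only [Finset.mem_filter, Finset.mem_univ, true_and] at hS0
      rw [SimpleGraph.sup_adj]
      rcases hS0 with ⟨x, y, hxy, rfl⟩ | ⟨x, hx, Q, hQ, rfl⟩ | ⟨x, hx, Q, hQ, rfl⟩
      · simp only [Finset.mem_insert] at ha hb
        rcases ha with rfl | rfl | ha <;> rcases hb with rfl | rfl | hb
        · exact absurd rfl hne
        · exact Or.inr hxy
        · exact Or.inl ((hT a b).mpr (Or.inl ⟨hsupp hxy, hZxmem hxy hb⟩))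
        · exact Or.inr hxy.symm
        · exact absurd rfl hne
        · exact Or.inl ((hT a b).mpr (Or.inl ⟨hsupp hxy.symm, hZxmem' hxy hb⟩))
        · exact Or.inl ((hT a b).mpr (Or.inr (Or.inl ⟨hsupp hxy, hZxmem hxy ha⟩)))
        · exact Or.inl ((hT a b).mpr (Or.inr (Or.inl ⟨hsupp hxy.symm, hZxmem' hxy ha⟩)))
        · exact Or.inl ((hT a b).mpr (Or.inr (Or.inr (Or.inr (Or.inl ⟨x, y, hxy, ha, hb, hne⟩)))))
      · simp only [Finset.mem_insert] at ha hb
        rcases ha with heqa | ha <;> rcases hb with heqb | hb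
        · exact absurd (heqa.trans heqb.symm) hne
        · refine Or.inl ((hT a b).mpr ?_)
          rcases Finset.mem_union.mp (hQ1sub x hx Q hQ hb) with hbS | hbZ
          · exact Or.inr (Or.inr (Or.inr (Or.inr (Or.inr (Or.inr (Or.inl
              ⟨x, hx, Or.inl ⟨heqa, hbS⟩⟩))))))
          · exact Or.inr (Or.inr (Or.inl ⟨x, hx, Or.inl ⟨heqa, hbZ⟩⟩))
        · refine Or.inl ((hT a b).mpr ?_)
          rcases Finset.mem_union.mp (hQ1sub x hx Q hQ ha) with haS | haZ
          · exact Or.inr (Or.inr (Or.inr (Or.inr (Or.inr (Or.inr (Or.inl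
              ⟨x, hx, Or.inr ⟨heqb, haS⟩⟩))))))
          · exact Or.inr (Or.inr (Or.inl ⟨x, hx, Or.inr ⟨heqb, haZ⟩⟩))
        · exact Or.inl ((hT a b).mpr (Or.inr (Or.inr (Or.inr (Or.inr (Or.inr (Or.inr (Or.inr
            ⟨x, hx, Or.inl (hM1adj x hx Q hQ a ha b hb hne)⟩))))))))
      · simp only [Finset.mem_insert] at ha hb
        rcases ha with heqa | ha <;> rcases hb with heqb | hb
        · exact absurd (heqa.trans heqb.symm) hne
        · exact Or.inl ((hT a b).mpr (Or.inr (Or.inr (Or.inr (Or.inr (Or.inl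
            (show a ∈ H.support ∧ b ∈ S a by
              rw [heqa]; exact ⟨hx, hQ2sub x hx Q hQ hb⟩)))))))
        · exact Or.inl ((hT a b).mpr (Or.inr (Or.inr (Or.inr (Or.inr (Or.inr (Or.inl
            (show b ∈ H.support ∧ a ∈ S b by
              rw [heqb]; exact ⟨hx, hQ2sub x hx Q hQ ha⟩))))))))
        · exact Or.inl ((hT a b).mpr (Or.inr (Or.inr (Or.inr (Or.inr (Or.inr (Or.inr (Or.inr
            ⟨x, hx, Or.inr (hM2adj x hx Q hQ a ha b hb hne)⟩))))))))
    · -- pairwise edge-disjoint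
      intro S0 hS0 T0 hT0 hST
      simp only [Finset.mem_filter, Finset.mem_univ, true_and] at hS0 hT0
      rw [Finset.card_le_one]
      intro a ha b hb
      rw [Finset.mem_inter] at ha hb
      obtain ⟨haS, haT⟩ := ha
      obtain ⟨hbS, hbT⟩ := hb
      rcases hS0 with ⟨x, y, hxy, rfl⟩ | ⟨x, hx, Q, hQ, rfl⟩ | ⟨x, hx, Q, hQ, rfl⟩ <;>
        rcases hT0 with ⟨x', y', hxy', rfl⟩ | ⟨x', hx', Q', hQ', rfl⟩ | ⟨x', hx', Q', hQ', rfl⟩ <;>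
        simp only [Finset.mem_insert] at haS haT hbS hbT
      · -- A vs A
        by_cases hedge : (x = x' ∧ y = y') ∨ (x = y' ∧ y = x')
        · exact absurd (hAeq hedge) hST
        · by_contra hab
          have key : ∀ {c : β}, (c = x ∨ c = y ∨ c ∈ Z x y) →
              (c = x' ∨ c = y' ∨ c ∈ Z x' y') → (c = x ∨ c = y) ∧ (c = x' ∨ c = y') := by
            intro c h1 h2
            rcases h1 with rfl | rfl | h1
            · refine ⟨Or.inl rfl, ?_⟩
              rcases h2 with h | h | h
              · exact Or.inl h
              · exact Or.inr h
              · exact absurd (hsupp hxy) (hZV x' y' hxy' _ h).1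
            · refine ⟨Or.inr rfl, ?_⟩
              rcases h2 with h | h | h
              · exact Or.inl h
              · exact Or.inr h
              · exact absurd (hsupp hxy.symm) (hZV x' y' hxy' _ h).1
            · exfalso
              rcases h2 with rfl | rfl | h2
              · exact (hZV x y hxy _ h1).1 (hsupp hxy')
              · exact (hZV x y hxy _ h1).1 (hsupp hxy'.symm)
              · exact hedge (hZZ hxy hxy' h1 h2)
          obtain ⟨ha1, ha2⟩ := key haS haT
          obtain ⟨hb1, hb2⟩ := key hbS hbT
          exact hedge (pairs_aux hab ha1 hb1 ha2 hb2)
      · -- A vs B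
        obtain ⟨haQ, haZ⟩ := K1_AB hxy hx' hQ' haS haT
        obtain ⟨hbQ, hbZ⟩ := K1_AB hxy hx' hQ' hbS hbT
        exact hQZ1 x' hx' Q' hQ' a haQ b hbQ haZ hbZ
      · -- A vs C
        exact (K1_AC hxy hx' hQ' haS haT).trans (K1_AC hxy hx' hQ' hbS hbT).symm
      · -- B vs A
        obtain ⟨haQ, haZ⟩ := K1_AB hxy' hx hQ haT haS
        obtain ⟨hbQ, hbZ⟩ := K1_AB hxy' hx hQ hbT hbS
        exact hQZ1 x hx Q hQ a haQ b hbQ haZ hbZ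
      · -- B vs B
        by_cases hxx : x = x'
        · subst hxx
          by_cases hQQ : Q = Q'
          · exact absurd (by rw [hQQ]) hST
          · have hd := hM1disj x hx Q hQ Q' hQ' hQQ
            have key : ∀ {c : β}, (c = φ x ∨ c ∈ Q) → (c = φ x ∨ c ∈ Q') → c = φ x := by
              intro c h1 h2
              rcases h1 with rfl | h1
              · rfl
              · rcases h2 with rfl | h2
                · rfl
                · exact absurd h2 (Finset.disjoint_left.mp hd h1)
            rw [key haS haT, key hbS hbT]
        · have key : ∀ {c : β}, (c = φ x ∨ c ∈ Q) → (c = φ x' ∨ c ∈ Q') →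
              (c ∈ Q ∧ c ∈ Q') ∨ (c = φ x ∧ c = φ x') := by
            intro c h1 h2
            rcases h1 with rfl | h1
            · rcases h2 with h2 | h2
              · exact Or.inr ⟨rfl, h2⟩
              · exact absurd (hφsupp hx) ((hQ1good x' hx' Q' hQ' _ h2).2)
            · rcases h2 with rfl | h2
              · exact absurd (hφsupp hx') ((hQ1good x hx Q hQ _ h1).2)
              · exact Or.inl ⟨h1, h2⟩
          rcases key haS haT with ⟨ha1, ha2⟩ | ⟨ha1, ha2⟩ <;>
            rcases key hbS hbT with ⟨hb1, hb2⟩ | ⟨hb1, hb2⟩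
          · obtain ⟨haZ, haZ'⟩ := hQQZ x hx Q hQ x' hx' Q' hQ' hxx a ha1 ha2
            obtain ⟨hbZ, hbZ'⟩ := hQQZ x hx Q hQ x' hx' Q' hQ' hxx b hb1 hb2
            exact hQZ1 x hx Q hQ a ha1 b hb1 haZ hbZ
          · obtain ⟨haZ, haZ'⟩ := hQQZ x hx Q hQ x' hx' Q' hQ' hxx a ha1 ha2
            exact absurd (hb1.symm.trans hb2) (hhom x x' (hZxZx hxx haZ haZ').1).ne
          · obtain ⟨hbZ, hbZ'⟩ := hQQZ x hx Q hQ x' hx' Q' hQ' hxx b hb1 hb2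
            exact absurd (ha1.symm.trans ha2) (hhom x x' (hZxZx hxx hbZ hbZ').1).ne
          · exact ha1.trans hb1.symm
      · -- B vs C
        exact K1_BC hx hQ hx' hQ' haS haT hbS hbT
      · -- C vs A
        exact (K1_AC hxy' hx hQ haT haS).trans (K1_AC hxy' hx hQ hbT hbS).symm
      · -- C vs B
        exact K1_BC hx' hQ' hx hQ haT haS hbT hbS
      · -- C vs C
        by_cases hxx : x = x'
        · subst hxx
          by_cases hQQ : Q = Q'
          · exact absurd (by rw [hQQ]) hST
          · have hd := hM2disj x hx Q hQ Q' hQ' hQQ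
            have key : ∀ {c : β}, (c = x ∨ c ∈ Q) → (c = x ∨ c ∈ Q') → c = x := by
              intro c h1 h2
              rcases h1 with rfl | h1
              · rfl
              · rcases h2 with rfl | h2
                · rfl
                · exact absurd h2 (Finset.disjoint_left.mp hd h1)
            rw [key haS haT, key hbS hbT]
        · exfalso
          have key : ∀ {c : β}, (c = x ∨ c ∈ Q) → (c = x' ∨ c ∈ Q') → False := by
            intro c h1 h2
            rcases h1 with rfl | h1
            · rcases h2 with rfl | h2
              · exact hxx rfl
              · exact (hSV x' c (hQ2sub x' hx' Q' hQ' h2)).1 hx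
            · rcases h2 with rfl | h2
              · exact (hSV x c (hQ2sub x hx Q hQ h1)).1 hx'
              · exact Finset.disjoint_left.mp (hSdisj x x' hxx) (hQ2sub x hx Q hQ h1)
                  (hQ2sub x' hx' Q' hQ' h2)
          exact key haS haT
    · -- coverage
      intro a b hab
      rw [SimpleGraph.sup_adj] at hab
      rcases hab with hab | hab
      · rw [hT] at hab
        rcases hab with ⟨ha, hb⟩ | ⟨hb, ha⟩ | ⟨x, hx, ⟨rfl, hb⟩ | ⟨rfl, ha⟩⟩ |
          ⟨x, y, hxy, ha, hb, hne⟩ | ⟨ha, hb⟩ | ⟨hb, ha⟩ | ⟨x, hx, ⟨rfl, hb⟩ | ⟨rfl, ha⟩⟩ |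
          ⟨x, hx, hF | hF⟩
        · obtain ⟨y, hy, hby⟩ := hZxsup a b hb
          refine ⟨insert a (insert y (Z a y)), ?_, by simp, by simp [hby]⟩
          simp only [Finset.mem_filter, Finset.mem_univ, true_and]
          exact Or.inl ⟨a, y, hy, rfl⟩
        · obtain ⟨y, hy, hay⟩ := hZxsup b a ha
          refine ⟨insert b (insert y (Z b y)), ?_, by simp [hay], by simp⟩
          simp only [Finset.mem_filter, Finset.mem_univ, true_and]
          exact Or.inl ⟨b, y, hy, rfl⟩
        · have hbm : b ∈ (M1 x hx).biUnion id := by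
            rw [hM1cov]; exact Finset.mem_union_right _ hb
          obtain ⟨Q, hQ, hbQ⟩ := Finset.mem_biUnion.mp hbm
          refine ⟨insert (φ x) Q, ?_, Finset.mem_insert_self _ _, Finset.mem_insert_of_mem hbQ⟩
          simp only [Finset.mem_filter, Finset.mem_univ, true_and]
          exact Or.inr (Or.inl ⟨x, hx, Q, hQ, rfl⟩)
        · have ham : a ∈ (M1 x hx).biUnion id := by
            rw [hM1cov]; exact Finset.mem_union_right _ ha
          obtain ⟨Q, hQ, haQ⟩ := Finset.mem_biUnion.mp ham
          refine ⟨insert (φ x) Q, ?_, Finset.mem_insert_of_mem haQ, Finset.mem_insert_self _ _⟩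
          simp only [Finset.mem_filter, Finset.mem_univ, true_and]
          exact Or.inr (Or.inl ⟨x, hx, Q, hQ, rfl⟩)
        · refine ⟨insert x (insert y (Z x y)), ?_, by simp [ha], by simp [hb]⟩
          simp only [Finset.mem_filter, Finset.mem_univ, true_and]
          exact Or.inl ⟨x, y, hxy, rfl⟩
        · have hbm : b ∈ (M2 a ha).biUnion id := by rw [hM2cov]; exact hb
          obtain ⟨Q, hQ, hbQ⟩ := Finset.mem_biUnion.mp hbm
          refine ⟨insert a Q, ?_, Finset.mem_insert_self _ _, Finset.mem_insert_of_mem hbQ⟩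
          simp only [Finset.mem_filter, Finset.mem_univ, true_and]
          exact Or.inr (Or.inr ⟨a, ha, Q, hQ, rfl⟩)
        · have ham : a ∈ (M2 b hb).biUnion id := by rw [hM2cov]; exact ha
          obtain ⟨Q, hQ, haQ⟩ := Finset.mem_biUnion.mp ham
          refine ⟨insert b Q, ?_, Finset.mem_insert_of_mem haQ, Finset.mem_insert_self _ _⟩
          simp only [Finset.mem_filter, Finset.mem_univ, true_and]
          exact Or.inr (Or.inr ⟨b, hb, Q, hQ, rfl⟩)
        · have hbm : b ∈ (M1 x hx).biUnion id := by
            rw [hM1cov]; exact Finset.mem_union_left _ hb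
          obtain ⟨Q, hQ, hbQ⟩ := Finset.mem_biUnion.mp hbm
          refine ⟨insert (φ x) Q, ?_, Finset.mem_insert_self _ _, Finset.mem_insert_of_mem hbQ⟩
          simp only [Finset.mem_filter, Finset.mem_univ, true_and]
          exact Or.inr (Or.inl ⟨x, hx, Q, hQ, rfl⟩)
        · have ham : a ∈ (M1 x hx).biUnion id := by
            rw [hM1cov]; exact Finset.mem_union_left _ ha
          obtain ⟨Q, hQ, haQ⟩ := Finset.mem_biUnion.mp ham
          refine ⟨insert (φ x) Q, ?_, Finset.mem_insert_of_mem haQ, Finset.mem_insert_self _ _⟩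
          simp only [Finset.mem_filter, Finset.mem_univ, true_and]
          exact Or.inr (Or.inl ⟨x, hx, Q, hQ, rfl⟩)
        · obtain ⟨Q, hQ, haQ, hbQ⟩ := hM1edge x hx a b hF
          refine ⟨insert (φ x) Q, ?_, Finset.mem_insert_of_mem haQ, Finset.mem_insert_of_mem hbQ⟩
          simp only [Finset.mem_filter, Finset.mem_univ, true_and]
          exact Or.inr (Or.inl ⟨x, hx, Q, hQ, rfl⟩)
        · obtain ⟨Q, hQ, haQ, hbQ⟩ := hM2edge x hx a b hF
          refine ⟨insert x Q, ?_, Finset.mem_insert_of_mem haQ, Finset.mem_insert_of_mem hbQ⟩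
          simp only [Finset.mem_filter, Finset.mem_univ, true_and]
          exact Or.inr (Or.inr ⟨x, hx, Q, hQ, rfl⟩)
      · refine ⟨insert a (insert b (Z a b)), ?_, by simp, by simp⟩
        simp only [Finset.mem_filter, Finset.mem_univ, true_and]
        exact Or.inl ⟨a, b, hab, rfl⟩
  · -- decomposition of T ⊔ H'
    have hA'eq : ∀ {x y x' y' : β},
        (x = x' ∧ y = y') ∨ (x = y' ∧ y = x') →
        insert (φ x) (insert (φ y) (Z x y)) = insert (φ x') (insert (φ y') (Z x' y')) := by
      rintro x y x' y' (⟨rfl, rfl⟩ | ⟨rfl, rfl⟩)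
      · rfl
      · ext w; rw [hZsym]; simp; tauto
    have hcardA' : ∀ {x y : β}, H.Adj x y → (insert (φ x) (insert (φ y) (Z x y))).card = r := by
      intro x y h
      have h1 : φ x ∉ Z x y := fun hm => (hZV x y h _ hm).2 (hφsupp (hsupp h))
      have h2 : φ y ∉ Z x y := fun hm => (hZV x y h _ hm).2 (hφsupp (hsupp h.symm))
      rw [Finset.card_insert_of_notMem (by simp [(hhom x y h).ne, h1]),
        Finset.card_insert_of_notMem h2, hZcard x y h]
      omega
    have K2_AB : ∀ {x y x' : β} (hxy : H.Adj x y) (hx' : x' ∈ H.support) {Q' : Finset β},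
        Q' ∈ M1 x' hx' → ∀ {c : β}, (c = φ x ∨ c = φ y ∨ c ∈ Z x y) → (c = x' ∨ c ∈ Q') →
        c ∈ Q' ∧ c ∈ Zx x' := by
      intro x y x' hxy hx' Q' hQ' c h1 h2
      have hcZ : c ∈ Z x y := by
        rcases h1 with heq | heq | h1
        · exfalso; rcases h2 with heq2 | hc
          · exact hns hx' (by rw [← heq2, heq]; exact hφsupp (hsupp hxy))
          · exact (hQ1good x' hx' Q' hQ' c hc).2 (by rw [heq]; exact hφsupp (hsupp hxy))
        · exfalso; rcases h2 with heq2 | hc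
          · exact hns hx' (by rw [← heq2, heq]; exact hφsupp (hsupp hxy.symm))
          · exact (hQ1good x' hx' Q' hQ' c hc).2 (by rw [heq]; exact hφsupp (hsupp hxy.symm))
        · exact h1
      have hnc := hZV x y hxy c hcZ
      rcases h2 with heq | hc
      · exact absurd (by rw [heq]; exact hx') hnc.1
      · refine ⟨hc, ?_⟩
        rcases Finset.mem_union.mp (hQ1sub x' hx' Q' hQ' hc) with h | h
        · exact absurd h (hZxnS x c (hZxmem hxy hcZ) x')
        · exact h
    have K2_AC : ∀ {x y x' : β} (hxy : H.Adj x y) (hx' : x' ∈ H.support) {Q' : Finset β},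
        Q' ∈ M2 x' hx' → ∀ {c : β}, (c = φ x ∨ c = φ y ∨ c ∈ Z x y) → (c = φ x' ∨ c ∈ Q') →
        c = φ x' := by
      intro x y x' hxy hx' Q' hQ' c h1 h2
      rcases h2 with heq | hc
      · exact heq
      · exfalso
        have hcS := hQ2sub x' hx' Q' hQ' hc
        rcases h1 with heq | heq | h1
        · exact (hSV x' c hcS).2 (by rw [heq]; exact hφsupp (hsupp hxy))
        · exact (hSV x' c hcS).2 (by rw [heq]; exact hφsupp (hsupp hxy.symm))
        · exact hZxnS x c (hZxmem hxy h1) x' hcS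
    have K2_BC : ∀ {x : β} (hx : x ∈ H.support) {Q : Finset β}, Q ∈ M1 x hx →
        ∀ {x' : β} (hx' : x' ∈ H.support) {Q' : Finset β}, Q' ∈ M2 x' hx' →
        ∀ {a b : β}, (a = x ∨ a ∈ Q) → (a = φ x' ∨ a ∈ Q') →
        (b = x ∨ b ∈ Q) → (b = φ x' ∨ b ∈ Q') → a = b := by
      intro x hx Q hQ x' hx' Q' hQ' a b ha1 ha2 hb1 hb2
      have key : ∀ {c : β}, (c = x ∨ c ∈ Q) → (c = φ x' ∨ c ∈ Q') → c ∈ Q ∧ c ∈ Q' := by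
        intro c h1 h2
        rcases h1 with rfl | h1
        · exfalso; rcases h2 with heq | h2
          · exact hns hx (by rw [heq]; exact hφsupp hx')
          · exact (hQ2good x' hx' Q' hQ' _ h2).1 hx
        · rcases h2 with heq | h2
          · exact absurd (show c ∈ H'.support by rw [heq]; exact hφsupp hx')
              ((hQ1good x hx Q hQ _ h1).2)
          · exact ⟨h1, h2⟩
      obtain ⟨ha3, ha4⟩ := key ha1 ha2
      obtain ⟨hb3, hb4⟩ := key hb1 hb2
      by_cases hxx : x = x'
      · subst hxx
        exact hQ12 x hx Q hQ Q' hQ' a ha3 ha4 b hb3 hb4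
      · exfalso
        rcases Finset.mem_union.mp (hQ1sub x hx Q hQ ha3) with h | h
        · exact Finset.disjoint_left.mp (hSdisj x x' hxx) h (hQ2sub x' hx' Q' hQ' ha4)
        · exact hZxnS x a h x' (hQ2sub x' hx' Q' hQ' ha4)
    refine ⟨Finset.univ.filter (fun S0 =>
      (∃ x y, H.Adj x y ∧ S0 = insert (φ x) (insert (φ y) (Z x y))) ∨
      (∃ x, ∃ hx : x ∈ H.support, ∃ Q ∈ M1 x hx, S0 = insert x Q) ∨
      (∃ x, ∃ hx : x ∈ H.support, ∃ Q ∈ M2 x hx, S0 = insert (φ x) Q)), ?_, ?_, ?_, ?_⟩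
    · -- cards
      intro S0 hS0
      simp only [Finset.mem_filter, Finset.mem_univ, true_and] at hS0
      rcases hS0 with ⟨x, y, hxy, rfl⟩ | ⟨x, hx, Q, hQ, rfl⟩ | ⟨x, hx, Q, hQ, rfl⟩
      · exact hcardA' hxy
      · rw [Finset.card_insert_of_notMem (fun hm => (hQ1good x hx Q hQ _ hm).1 hx),
          hM1card x hx Q hQ]
        omega
      · rw [Finset.card_insert_of_notMem (fun hm => (hQ2good x hx Q hQ _ hm).2 (hφsupp hx)),
          hM2card x hx Q hQ]
        omega
    · -- cliques
      intro S0 hS0 a ha b hb hne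
      simp only [Finset.mem_filter, Finset.mem_univ, true_and] at hS0
      rw [SimpleGraph.sup_adj]
      rcases hS0 with ⟨x, y, hxy, rfl⟩ | ⟨x, hx, Q, hQ, rfl⟩ | ⟨x, hx, Q, hQ, rfl⟩
      · simp only [Finset.mem_insert] at ha hb
        rcases ha with heqa | heqa | ha <;> rcases hb with heqb | heqb | hb
        · exact absurd (heqa.trans heqb.symm) hne
        · exact Or.inr (by rw [heqa, heqb]; exact hhom x y hxy)
        · exact Or.inl ((hT a b).mpr (Or.inr (Or.inr (Or.inl
            ⟨x, hsupp hxy, Or.inl ⟨heqa, hZxmem hxy hb⟩⟩))))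
        · exact Or.inr (by rw [heqa, heqb]; exact (hhom x y hxy).symm)
        · exact absurd (heqa.trans heqb.symm) hne
        · exact Or.inl ((hT a b).mpr (Or.inr (Or.inr (Or.inl
            ⟨y, hsupp hxy.symm, Or.inl ⟨heqa, hZxmem' hxy hb⟩⟩))))
        · exact Or.inl ((hT a b).mpr (Or.inr (Or.inr (Or.inl
            ⟨x, hsupp hxy, Or.inr ⟨heqb, hZxmem hxy ha⟩⟩))))
        · exact Or.inl ((hT a b).mpr (Or.inr (Or.inr (Or.inl
            ⟨y, hsupp hxy.symm, Or.inr ⟨heqb, hZxmem' hxy ha⟩⟩))))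
        · exact Or.inl ((hT a b).mpr (Or.inr (Or.inr (Or.inr (Or.inl ⟨x, y, hxy, ha, hb, hne⟩)))))
      · simp only [Finset.mem_insert] at ha hb
        rcases ha with heqa | ha <;> rcases hb with heqb | hb
        · exact absurd (heqa.trans heqb.symm) hne
        · refine Or.inl ((hT a b).mpr ?_)
          rcases Finset.mem_union.mp (hQ1sub x hx Q hQ hb) with hbS | hbZ
          · exact Or.inr (Or.inr (Or.inr (Or.inr (Or.inl
              (show a ∈ H.support ∧ b ∈ S a by rw [heqa]; exact ⟨hx, hbS⟩)))))
          · exact Or.inl (show a ∈ H.support ∧ b ∈ Zx a by rw [heqa]; exact ⟨hx, hbZ⟩)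
        · refine Or.inl ((hT a b).mpr ?_)
          rcases Finset.mem_union.mp (hQ1sub x hx Q hQ ha) with haS | haZ
          · exact Or.inr (Or.inr (Or.inr (Or.inr (Or.inr (Or.inl
              (show b ∈ H.support ∧ a ∈ S b by rw [heqb]; exact ⟨hx, haS⟩))))))
          · exact Or.inr (Or.inl (show b ∈ H.support ∧ a ∈ Zx b by rw [heqb]; exact ⟨hx, haZ⟩))
        · exact Or.inl ((hT a b).mpr (Or.inr (Or.inr (Or.inr (Or.inr (Or.inr (Or.inr (Or.inr
            ⟨x, hx, Or.inl (hM1adj x hx Q hQ a ha b hb hne)⟩))))))))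
      · simp only [Finset.mem_insert] at ha hb
        rcases ha with heqa | ha <;> rcases hb with heqb | hb
        · exact absurd (heqa.trans heqb.symm) hne
        · exact Or.inl ((hT a b).mpr (Or.inr (Or.inr (Or.inr (Or.inr (Or.inr (Or.inr (Or.inl
            ⟨x, hx, Or.inl ⟨heqa, hQ2sub x hx Q hQ hb⟩⟩))))))))
        · exact Or.inl ((hT a b).mpr (Or.inr (Or.inr (Or.inr (Or.inr (Or.inr (Or.inr (Or.inl
            ⟨x, hx, Or.inr ⟨heqb, hQ2sub x hx Q hQ ha⟩⟩))))))))
        · exact Or.inl ((hT a b).mpr (Or.inr (Or.inr (Or.inr (Or.inr (Or.inr (Or.inr (Or.inr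
            ⟨x, hx, Or.inr (hM2adj x hx Q hQ a ha b hb hne)⟩))))))))
    · -- pairwise edge-disjoint
      intro S0 hS0 T0 hT0 hST
      simp only [Finset.mem_filter, Finset.mem_univ, true_and] at hS0 hT0
      rw [Finset.card_le_one]
      intro a ha b hb
      rw [Finset.mem_inter] at ha hb
      obtain ⟨haS, haT⟩ := ha
      obtain ⟨hbS, hbT⟩ := hb
      rcases hS0 with ⟨x, y, hxy, rfl⟩ | ⟨x, hx, Q, hQ, rfl⟩ | ⟨x, hx, Q, hQ, rfl⟩ <;>
        rcases hT0 with ⟨x', y', hxy', rfl⟩ | ⟨x', hx', Q', hQ', rfl⟩ | ⟨x', hx', Q', hQ', rfl⟩ <;>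
        simp only [Finset.mem_insert] at haS haT hbS hbT
      · -- A' vs A'
        by_cases hedge : (x = x' ∧ y = y') ∨ (x = y' ∧ y = x')
        · exact absurd (hA'eq hedge) hST
        · by_contra hab
          have key : ∀ {c : β}, (c = φ x ∨ c = φ y ∨ c ∈ Z x y) →
              (c = φ x' ∨ c = φ y' ∨ c ∈ Z x' y') →
              (c = φ x ∨ c = φ y) ∧ (c = φ x' ∨ c = φ y') := by
            intro c h1 h2
            rcases h1 with heq | heq | h1
            · refine ⟨Or.inl heq, ?_⟩
              rcases h2 with h | h | h
              · exact Or.inl h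
              · exact Or.inr h
              · exact absurd (show c ∈ H'.support by rw [heq]; exact hφsupp (hsupp hxy))
                  (hZV x' y' hxy' _ h).2
            · refine ⟨Or.inr heq, ?_⟩
              rcases h2 with h | h | h
              · exact Or.inl h
              · exact Or.inr h
              · exact absurd (show c ∈ H'.support by rw [heq]; exact hφsupp (hsupp hxy.symm))
                  (hZV x' y' hxy' _ h).2
            · exfalso
              have hnc := hZV x y hxy _ h1
              rcases h2 with heq | heq | h2
              · exact hnc.2 (by rw [heq]; exact hφsupp (hsupp hxy'))
              · exact hnc.2 (by rw [heq]; exact hφsupp (hsupp hxy'.symm))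
              · exact hedge (hZZ hxy hxy' h1 h2)
          obtain ⟨ha1, ha2⟩ := key haS haT
          obtain ⟨hb1, hb2⟩ := key hbS hbT
          have hsym := pairs_aux hab ha1 hb1 ha2 hb2
          have hinj := hbij.injOn (H.mem_edgeSet.mpr hxy) (H.mem_edgeSet.mpr hxy')
            (by rw [Sym2.map_pair_eq, Sym2.map_pair_eq]; exact Sym2.eq_iff.mpr hsym)
          exact hedge (Sym2.eq_iff.mp hinj)
      · -- A' vs B'
        obtain ⟨haQ, haZ⟩ := K2_AB hxy hx' hQ' haS haT
        obtain ⟨hbQ, hbZ⟩ := K2_AB hxy hx' hQ' hbS hbT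
        exact hQZ1 x' hx' Q' hQ' a haQ b hbQ haZ hbZ
      · -- A' vs C'
        exact (K2_AC hxy hx' hQ' haS haT).trans (K2_AC hxy hx' hQ' hbS hbT).symm
      · -- B' vs A'
        obtain ⟨haQ, haZ⟩ := K2_AB hxy' hx hQ haT haS
        obtain ⟨hbQ, hbZ⟩ := K2_AB hxy' hx hQ hbT hbS
        exact hQZ1 x hx Q hQ a haQ b hbQ haZ hbZ
      · -- B' vs B'
        by_cases hxx : x = x'
        · subst hxx
          by_cases hQQ : Q = Q'
          · exact absurd (by rw [hQQ]) hST
          · have hd := hM1disj x hx Q hQ Q' hQ' hQQ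
            have key : ∀ {c : β}, (c = x ∨ c ∈ Q) → (c = x ∨ c ∈ Q') → c = x := by
              intro c h1 h2
              rcases h1 with heq | h1
              · exact heq
              · rcases h2 with heq | h2
                · exact heq
                · exact absurd h2 (Finset.disjoint_left.mp hd h1)
            rw [key haS haT, key hbS hbT]
        · have key : ∀ {c : β}, (c = x ∨ c ∈ Q) → (c = x' ∨ c ∈ Q') → c ∈ Q ∧ c ∈ Q' := by
            intro c h1 h2
            rcases h1 with rfl | h1
            · exfalso; rcases h2 with heq | h2
              · exact hxx heq
              · exact (hQ1good x' hx' Q' hQ' _ h2).1 hx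
            · rcases h2 with rfl | h2
              · exact absurd hx' ((hQ1good x hx Q hQ _ h1).1)
              · exact ⟨h1, h2⟩
          obtain ⟨ha1, ha2⟩ := key haS haT
          obtain ⟨hb1, hb2⟩ := key hbS hbT
          obtain ⟨haZ, -⟩ := hQQZ x hx Q hQ x' hx' Q' hQ' hxx a ha1 ha2
          obtain ⟨hbZ, -⟩ := hQQZ x hx Q hQ x' hx' Q' hQ' hxx b hb1 hb2
          exact hQZ1 x hx Q hQ a ha1 b hb1 haZ hbZ
      · -- B' vs C'
        exact K2_BC hx hQ hx' hQ' haS haT hbS hbT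
      · -- C' vs A'
        exact (K2_AC hxy' hx hQ haT haS).trans (K2_AC hxy' hx hQ hbT hbS).symm
      · -- C' vs B'
        exact K2_BC hx' hQ' hx hQ haT haS hbT hbS
      · -- C' vs C'
        by_cases hxx : x = x'
        · subst hxx
          by_cases hQQ : Q = Q'
          · exact absurd (by rw [hQQ]) hST
          · have hd := hM2disj x hx Q hQ Q' hQ' hQQ
            have key : ∀ {c : β}, (c = φ x ∨ c ∈ Q) → (c = φ x ∨ c ∈ Q') → c = φ x := by
              intro c h1 h2
              rcases h1 with heq | h1
              · exact heq
              · rcases h2 with heq | h2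
                · exact heq
                · exact absurd h2 (Finset.disjoint_left.mp hd h1)
            rw [key haS haT, key hbS hbT]
        · have key : ∀ {c : β}, (c = φ x ∨ c ∈ Q) → (c = φ x' ∨ c ∈ Q') →
              c = φ x ∧ c = φ x' := by
            intro c h1 h2
            rcases h1 with heq | h1
            · rcases h2 with heq2 | h2
              · exact ⟨heq, heq2⟩
              · exact absurd (show c ∈ H'.support by rw [heq]; exact hφsupp hx)
                  ((hSV x' c (hQ2sub x' hx' Q' hQ' h2)).2)
            · rcases h2 with heq2 | h2
              · exact absurd (show c ∈ H'.support by rw [heq2]; exact hφsupp hx')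
                  ((hSV x c (hQ2sub x hx Q hQ h1)).2)
              · exact absurd (hQ2sub x' hx' Q' hQ' h2) (Finset.disjoint_left.mp
                  (hSdisj x x' hxx) (hQ2sub x hx Q hQ h1))
          exact ((key haS haT).1).trans ((key hbS hbT).1).symm
    · -- coverage
      intro a b hab
      rw [SimpleGraph.sup_adj] at hab
      rcases hab with hab | hab
      · rw [hT] at hab
        rcases hab with ⟨ha, hb⟩ | ⟨hb, ha⟩ | ⟨x, hx, ⟨rfl, hb⟩ | ⟨rfl, ha⟩⟩ |
          ⟨x, y, hxy, ha, hb, hne⟩ | ⟨ha, hb⟩ | ⟨hb, ha⟩ | ⟨x, hx, ⟨rfl, hb⟩ | ⟨rfl, ha⟩⟩ |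
          ⟨x, hx, hF | hF⟩
        · have hbm : b ∈ (M1 a ha).biUnion id := by
            rw [hM1cov]; exact Finset.mem_union_right _ hb
          obtain ⟨Q, hQ, hbQ⟩ := Finset.mem_biUnion.mp hbm
          refine ⟨insert a Q, ?_, Finset.mem_insert_self _ _, Finset.mem_insert_of_mem hbQ⟩
          simp only [Finset.mem_filter, Finset.mem_univ, true_and]
          exact Or.inr (Or.inl ⟨a, ha, Q, hQ, rfl⟩)
        · have ham : a ∈ (M1 b hb).biUnion id := by
            rw [hM1cov]; exact Finset.mem_union_right _ ha
          obtain ⟨Q, hQ, haQ⟩ := Finset.mem_biUnion.mp ham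
          refine ⟨insert b Q, ?_, Finset.mem_insert_of_mem haQ, Finset.mem_insert_self _ _⟩
          simp only [Finset.mem_filter, Finset.mem_univ, true_and]
          exact Or.inr (Or.inl ⟨b, hb, Q, hQ, rfl⟩)
        · obtain ⟨y, hy, hby⟩ := hZxsup x b hb
          refine ⟨insert (φ x) (insert (φ y) (Z x y)), ?_, Finset.mem_insert_self _ _,
            Finset.mem_insert_of_mem (Finset.mem_insert_of_mem hby)⟩
          simp only [Finset.mem_filter, Finset.mem_univ, true_and]
          exact Or.inl ⟨x, y, hy, rfl⟩
        · obtain ⟨y, hy, hay⟩ := hZxsup x a ha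
          refine ⟨insert (φ x) (insert (φ y) (Z x y)), ?_,
            Finset.mem_insert_of_mem (Finset.mem_insert_of_mem hay), Finset.mem_insert_self _ _⟩
          simp only [Finset.mem_filter, Finset.mem_univ, true_and]
          exact Or.inl ⟨x, y, hy, rfl⟩
        · refine ⟨insert (φ x) (insert (φ y) (Z x y)), ?_,
            Finset.mem_insert_of_mem (Finset.mem_insert_of_mem ha),
            Finset.mem_insert_of_mem (Finset.mem_insert_of_mem hb)⟩
          simp only [Finset.mem_filter, Finset.mem_univ, true_and]
          exact Or.inl ⟨x, y, hxy, rfl⟩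
        · have hbm : b ∈ (M1 a ha).biUnion id := by
            rw [hM1cov]; exact Finset.mem_union_left _ hb
          obtain ⟨Q, hQ, hbQ⟩ := Finset.mem_biUnion.mp hbm
          refine ⟨insert a Q, ?_, Finset.mem_insert_self _ _, Finset.mem_insert_of_mem hbQ⟩
          simp only [Finset.mem_filter, Finset.mem_univ, true_and]
          exact Or.inr (Or.inl ⟨a, ha, Q, hQ, rfl⟩)
        · have ham : a ∈ (M1 b hb).biUnion id := by
            rw [hM1cov]; exact Finset.mem_union_left _ ha
          obtain ⟨Q, hQ, haQ⟩ := Finset.mem_biUnion.mp ham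
          refine ⟨insert b Q, ?_, Finset.mem_insert_of_mem haQ, Finset.mem_insert_self _ _⟩
          simp only [Finset.mem_filter, Finset.mem_univ, true_and]
          exact Or.inr (Or.inl ⟨b, hb, Q, hQ, rfl⟩)
        · have hbm : b ∈ (M2 x hx).biUnion id := by rw [hM2cov]; exact hb
          obtain ⟨Q, hQ, hbQ⟩ := Finset.mem_biUnion.mp hbm
          refine ⟨insert (φ x) Q, ?_, Finset.mem_insert_self _ _, Finset.mem_insert_of_mem hbQ⟩
          simp only [Finset.mem_filter, Finset.mem_univ, true_and]
          exact Or.inr (Or.inr ⟨x, hx, Q, hQ, rfl⟩)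
        · have ham : a ∈ (M2 x hx).biUnion id := by rw [hM2cov]; exact ha
          obtain ⟨Q, hQ, haQ⟩ := Finset.mem_biUnion.mp ham
          refine ⟨insert (φ x) Q, ?_, Finset.mem_insert_of_mem haQ, Finset.mem_insert_self _ _⟩
          simp only [Finset.mem_filter, Finset.mem_univ, true_and]
          exact Or.inr (Or.inr ⟨x, hx, Q, hQ, rfl⟩)
        · obtain ⟨Q, hQ, haQ, hbQ⟩ := hM1edge x hx a b hF
          refine ⟨insert x Q, ?_, Finset.mem_insert_of_mem haQ, Finset.mem_insert_of_mem hbQ⟩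
          simp only [Finset.mem_filter, Finset.mem_univ, true_and]
          exact Or.inr (Or.inl ⟨x, hx, Q, hQ, rfl⟩)
        · obtain ⟨Q, hQ, haQ, hbQ⟩ := hM2edge x hx a b hF
          refine ⟨insert (φ x) Q, ?_, Finset.mem_insert_of_mem haQ, Finset.mem_insert_of_mem hbQ⟩
          simp only [Finset.mem_filter, Finset.mem_univ, true_and]
          exact Or.inr (Or.inr ⟨x, hx, Q, hQ, rfl⟩)
      · have hsur := hbij.surjOn (H'.mem_edgeSet.mpr hab)
        rw [Set.mem_image] at hsur
        obtain ⟨e, he, hme⟩ := hsur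
        revert he hme
        induction e using Sym2.ind with
        | _ x y =>
          intro he hme
          rw [SimpleGraph.mem_edgeSet] at he
          rw [Sym2.map_pair_eq, Sym2.eq_iff] at hme
          refine ⟨insert (φ x) (insert (φ y) (Z x y)), ?_, ?_, ?_⟩
          · simp only [Finset.mem_filter, Finset.mem_univ, true_and]
            exact Or.inl ⟨x, y, he, rfl⟩
          · rcases hme with ⟨h1, h2⟩ | ⟨h1, h2⟩
            · exact by rw [← h1]; exact Finset.mem_insert_self _ _
            · exact by rw [← h2]; exact Finset.mem_insert_of_mem (Finset.mem_insert_self _ _)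
          · rcases hme with ⟨h1, h2⟩ | ⟨h1, h2⟩
            · exact by rw [← h2]; exact Finset.mem_insert_of_mem (Finset.mem_insert_self _ _)
            · exact by rw [← h1]; exact Finset.mem_insert_self _ _
end

section
/- Let P = {U^1, U^2} be a 2-partition of V = (V_1,...,V_r), fix j_1≠j_2, and x,y distinct vertices in U^1_{j_1}. Let D_2 = φ(θ(D^{j_2}_{x→y})) be a copy of the labelled gadget graph θ(D^{j_2}_{x→y}), compatible with its labelling. Then D_2 is K_r-divisible and, for any j_3,j_4 with j_4≠j_2 and any vertex v ∈ U^1∖(V_{j_3}∪V_{j_4}): d_{D_2}(v,U^2_{j_3}) − d_{D_2}(v,U^2_{j_4}) equals −1 if v=x and j_3=j_2; equals +1 if v=y and j_3=j_2; and equals 0 otherwise. -/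
/-!
`θ(D^{j₂}_{x→y})` is encoded by its neighbour function `nbr`: a vertex has at most one neighbour
in each class, and exactly one in every class other than its own, which is `K_r`-divisibility.
A vertex labelled `U¹` other than `x`, `y` has either all or none of its neighbours on the side
labelled `U²`, so its degrees into `U² ∩ V j₃` and `U² ∩ V j₄` agree. The vertex `x = w¹_{j₁}`
has its neighbour on that side in every class except `j₂` (there it is joined to a copy of
`w¹_{j₂}`), while `y = w²_{j₁}` has it only in class `j₂` (a copy of `w³_{j₂}`).
-/

open Finset

/-- Vertex type for the gadget graph `θ(D^{j₂}_{x→y})`: base vertices `w^i_j`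
(for `i ∈ {1,2,3}`, `j ∈ [r]`) together with, for each (potential) edge `e f` of
`D^{j₂}_{x→y}`, the inner vertices of its expansion gadget `D_{ef}`, indexed by a side
`c ∈ Fin 2` and a class `j ∈ Fin r`.  (Unused indices are isolated vertices.) -/
abbrev TV (r : ℕ) :=
  (Fin 3 × Fin r) ⊕ (((Fin 3 × Fin r) × (Fin 3 × Fin r)) × (Fin 2 × Fin r))

def enc {r : ℕ} (e : Fin 3 × Fin r) : ℕ := e.1.val * r + e.2.val

/-- The edges of the labelled graph `D^{j₂}_{x→y}` on the base vertices `w^i_j`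
(here `i = 0` codes `W¹`, `i = 1` codes `w²_{j₁}`, `i = 2` codes `W³`): all edges inside
`W¹ \ {w¹_{j₁}}`, all edges inside `W³ \ {w³_{j₁}}`, the edges `w¹_{j₁} w³_j` and
`w¹_j w²_{j₁}` for `j ≠ j₁, j₂`, and the edges `w¹_{j₁} w¹_{j₂}` and `w²_{j₁} w³_{j₂}`. -/
def DEdge {r : ℕ} (j₁ j₂ : Fin r) (e f : Fin 3 × Fin r) : Prop :=
  (e.1 = 0 ∧ f.1 = 0 ∧ ((e.2 ≠ j₁ ∧ f.2 ≠ j₁ ∧ e.2 ≠ f.2) ∨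
      (e.2 = j₁ ∧ f.2 = j₂) ∨ (e.2 = j₂ ∧ f.2 = j₁))) ∨
  (e.1 = 0 ∧ f.1 = 2 ∧ e.2 = j₁ ∧ f.2 ≠ j₁ ∧ f.2 ≠ j₂) ∨
  (e.1 = 2 ∧ f.1 = 0 ∧ f.2 = j₁ ∧ e.2 ≠ j₁ ∧ e.2 ≠ j₂) ∨
  (e.1 = 0 ∧ f.1 = 1 ∧ f.2 = j₁ ∧ e.2 ≠ j₁ ∧ e.2 ≠ j₂) ∨
  (e.1 = 1 ∧ f.1 = 0 ∧ e.2 = j₁ ∧ f.2 ≠ j₁ ∧ f.2 ≠ j₂) ∨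
  (e.1 = 1 ∧ f.1 = 2 ∧ e.2 = j₁ ∧ f.2 = j₂) ∨
  (e.1 = 2 ∧ f.1 = 1 ∧ f.2 = j₁ ∧ e.2 = j₂) ∨
  (e.1 = 2 ∧ f.1 = 2 ∧ e.2 ≠ j₁ ∧ f.2 ≠ j₁ ∧ e.2 ≠ f.2)

/-- `(e, f)` indexes an actual gadget (one per unordered edge of `D^{j₂}_{x→y}`). -/
def Active {r : ℕ} (j₁ j₂ : Fin r) (e f : Fin 3 × Fin r) : Prop :=
  DEdge j₁ j₂ e f ∧ enc e < enc f

/-- The adjacency generating relation of `θ(D^{j₂}_{x→y})`: for each edge `e f` of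
`D^{j₂}_{x→y}` take a copy `D_{ef}` of `D₀[W^{i₁}, W^{i₂}]` minus that edge (a `K_r` minus an
edge if `e, f` lie in the same `W^i`, a `K_{r,r}` minus a perfect matching minus the edge
otherwise), join `e` to the copy of `f` in `D_{ef}` and `f` to the copy of `e`. -/
def thetaRel {r : ℕ} (j₁ j₂ : Fin r) : TV r → TV r → Prop
  | Sum.inl v, Sum.inr ⟨⟨e, f⟩, ⟨c, j⟩⟩ =>
      Active j₁ j₂ e f ∧
      ((e.1 = f.1 ∧ c = 0 ∧ ((v = e ∧ j = f.2) ∨ (v = f ∧ j = e.2))) ∨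
       (e.1 ≠ f.1 ∧ ((v = e ∧ c = 1 ∧ j = f.2) ∨ (v = f ∧ c = 0 ∧ j = e.2))))
  | Sum.inr ⟨⟨e, f⟩, ⟨c, j⟩⟩, Sum.inr ⟨⟨e', f'⟩, ⟨c', j'⟩⟩ =>
      e = e' ∧ f = f' ∧ Active j₁ j₂ e f ∧
      ((e.1 = f.1 ∧ c = 0 ∧ c' = 0 ∧ j ≠ j' ∧
          ¬((j = e.2 ∧ j' = f.2) ∨ (j = f.2 ∧ j' = e.2))) ∨
       (e.1 ≠ f.1 ∧ c = 0 ∧ c' = 1 ∧ j ≠ j' ∧ ¬(j = e.2 ∧ j' = f.2)))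
  | _, _ => False

/-- The gadget graph `θ(D^{j₂}_{x→y})` (up to isolated vertices). -/
def thetaGraph {r : ℕ} (j₁ j₂ : Fin r) : SimpleGraph (TV r) :=
  SimpleGraph.fromRel (thetaRel j₁ j₂)

lemma SimpleGraph.ncard_inter_neighborSet_map {α β : Type*} (G : SimpleGraph α) (ψ : α ↪ β)
    (S : Set β) (a : α) :
    (S ∩ (G.map ψ).neighborSet (ψ a)).ncard = {b | G.Adj a b ∧ ψ b ∈ S}.ncard := by
  rw [SimpleGraph.neighborSet_map, Set.inter_comm, ← Set.image_inter_preimage,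
    Set.ncard_image_of_injective _ ψ.injective]
  rfl

lemma Option.ncard_setOf_eq_some {α : Type*} (o : Option α) :
    {a | o = some a}.ncard = if o.isSome then 1 else 0 := by
  cases o <;> simp

lemma Option.ncard_setOf_eq_some_and {α : Type*} (o : Option α) (p : α → Prop)
    [DecidablePred p] :
    {a | o = some a ∧ p a}.ncard = if ∃ a, o = some a ∧ p a then 1 else 0 := by
  cases o with
  | none => simp
  | some a =>
    by_cases h : p a
    · rw [if_pos ⟨a, rfl, h⟩, ← Set.ncard_singleton a]
      exact congrArg Set.ncard (Set.eq_singleton_iff_unique_mem.mpr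
        ⟨⟨rfl, h⟩, fun b hb => (Option.some_injective _ hb.1).symm⟩)
    · rw [if_neg (by simpa using h), ← Set.ncard_empty α]
      exact congrArg Set.ncard (Set.eq_empty_of_forall_notMem fun b hb =>
        h (Option.some_injective _ hb.1 ▸ hb.2))

namespace ThetaGadget

variable {r : ℕ} {j₁ j₂ : Fin r}

instance (j₁ j₂ : Fin r) (e f : Fin 3 × Fin r) : Decidable (DEdge j₁ j₂ e f) := by
  unfold DEdge; infer_instance

instance (j₁ j₂ : Fin r) (e f : Fin 3 × Fin r) : Decidable (Active j₁ j₂ e f) := by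
  unfold Active; infer_instance

def cls : TV r → Fin r
  | Sum.inl (_, j) => j
  | Sum.inr (_, (_, j)) => j

/-- Which of `W¹`, `{w²_{j₁}}`, `W³` a vertex is a copy of; side `2` is the one labelled `U²`. -/
def side : TV r → Fin 3
  | Sum.inl (i, _) => i
  | Sum.inr ((e, f), (c, _)) => if c = 0 then e.1 else f.1

/-- The vertices of `θ(D^{j₂}_{x→y})`; the other elements of `TV r` are isolated. -/
def IsVertex (j₁ j₂ : Fin r) : TV r → Prop
  | Sum.inl p => (p.1 = 1 → p.2 = j₁) ∧ (p.1 = 2 → p.2 ≠ j₁)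
  | Sum.inr ((e, f), (c, _)) => Active j₁ j₂ e f ∧ (c = 1 → e.1 ≠ f.1)

/-- The copy of `u` in the gadget of the edge `wu`, i.e. the neighbour of `w` in that gadget.
The gadget of `(e, f)` is stored once, with `enc e < enc f`; its side `0` copies the part of `e`
and its side `1` the part of `f` (side `1` is unused when `e.1 = f.1`). -/
def gadgetCopy (w u : Fin 3 × Fin r) : TV r :=
  if enc w < enc u then Sum.inr ((w, u), (if w.1 = u.1 then 0 else 1, u.2))
  else Sum.inr ((u, w), (0, u.2))

/-- The neighbour in class `j` of a base vertex `w` in `D^{j₂}_{x→y}`. -/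
def baseNbr (j₁ j₂ : Fin r) (w : Fin 3 × Fin r) (j : Fin r) : Option (Fin 3 × Fin r) :=
  if w.2 = j then none else
  if w.1 = 0 then
    (if w.2 = j₁ then (if j = j₂ then some (0, j₂) else some (2, j))
     else if j = j₁ then (if w.2 = j₂ then some (0, j₁) else some (1, j₁)) else some (0, j))
  else if w.1 = 1 then
    (if w.2 = j₁ then (if j = j₂ then some (2, j₂) else some (0, j)) else none)
  else
    (if w.2 = j₁ then none
     else if j = j₁ then (if w.2 = j₂ then some (1, j₁) else some (0, j₁)) else some (2, j))

/-- The neighbour of `w` in class `j` in `θ(D^{j₂}_{x→y})`; a vertex has at most one. -/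
def nbr (j₁ j₂ : Fin r) : TV r → Fin r → Option (TV r)
  | Sum.inl w, j => (baseNbr j₁ j₂ w j).map (gadgetCopy w)
  | Sum.inr ((e, f), (c, j')), j =>
    if Active j₁ j₂ e f then
      if j = j' then none else
      if e.1 = f.1 then
        if c = 0 then
          if j' = e.2 ∧ j = f.2 then some (Sum.inl f)
          else if j' = f.2 ∧ j = e.2 then some (Sum.inl e)
          else some (Sum.inr ((e, f), (0, j)))
        else none
      else
        if c = 0 then
          if j' = e.2 ∧ j = f.2 then some (Sum.inl f)
          else some (Sum.inr ((e, f), (1, j)))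
        else
          if j' = f.2 ∧ j = e.2 then some (Sum.inl e)
          else some (Sum.inr ((e, f), (0, j)))
    else none

def NbrOnSide2 (j₁ j₂ : Fin r) (w : TV r) (j : Fin r) : Prop :=
  ∃ u, nbr j₁ j₂ w j = some u ∧ side u = 2

instance (j₁ j₂ : Fin r) (w : TV r) (j : Fin r) : Decidable (NbrOnSide2 j₁ j₂ w j) :=
  inferInstanceAs (Decidable (∃ u, nbr j₁ j₂ w j = some u ∧ side u = 2))

lemma enc_injective : Function.Injective (enc (r := r)) := by
  rintro ⟨⟨a₁, ha₁⟩, ⟨a₂, ha₂⟩⟩ ⟨⟨b₁, hb₁⟩, ⟨b₂, hb₂⟩⟩ h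
  simp only [enc] at h
  simp only [Prod.mk.injEq, Fin.mk.injEq]
  interval_cases a₁ <;> interval_cases b₁ <;> omega

lemma fin_three_cases (a : Fin 3) : a = 0 ∨ a = 1 ∨ a = 2 := by
  fin_cases a <;> simp

lemma DEdge.symm {e f : Fin 3 × Fin r} (h : DEdge j₁ j₂ e f) : DEdge j₁ j₂ f e := by
  unfold DEdge at h ⊢
  aesop

lemma DEdge.snd_ne (hj : j₁ ≠ j₂) {e f : Fin 3 × Fin r} (h : DEdge j₁ j₂ e f) :
    e.2 ≠ f.2 := by
  unfold DEdge at h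
  grind

lemma baseNbr_spec {w d : Fin 3 × Fin r} {j : Fin r}
    (h : baseNbr j₁ j₂ w j = some d) : d.2 = j ∧ DEdge j₁ j₂ w d := by
  obtain ⟨w₁, w₂⟩ := w
  unfold baseNbr at h
  unfold DEdge
  rcases fin_three_cases w₁ with rfl | rfl | rfl <;> split_ifs at h <;> grind

lemma baseNbr_of_dEdge (hj : j₁ ≠ j₂) {e f : Fin 3 × Fin r} (h : DEdge j₁ j₂ e f) :
    baseNbr j₁ j₂ e f.2 = some f := by
  obtain ⟨e₁, e₂⟩ := e; obtain ⟨f₁, f₂⟩ := f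
  unfold DEdge at h
  rcases h with ⟨rfl, rfl, _ | ⟨rfl, rfl⟩ | ⟨rfl, rfl⟩⟩ | ⟨rfl, rfl, rfl, _⟩ | ⟨rfl, rfl, rfl, _⟩ |
    ⟨rfl, rfl, rfl, _⟩ | ⟨rfl, rfl, rfl, _⟩ | ⟨rfl, rfl, rfl, rfl⟩ | ⟨rfl, rfl, rfl, rfl⟩ |
    ⟨rfl, rfl, _⟩ <;>
    simp_all [baseNbr, eq_comm]

lemma side_gadgetCopy (w u : Fin 3 × Fin r) : side (gadgetCopy w u) = u.1 := by
  unfold gadgetCopy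
  split_ifs <;> simp_all [side]

lemma cls_gadgetCopy (w u : Fin 3 × Fin r) : cls (gadgetCopy w u) = u.2 := by
  unfold gadgetCopy
  split_ifs <;> rfl

lemma nbr_cls_self (w : TV r) : nbr j₁ j₂ w (cls w) = none := by
  rcases w with ⟨_, _⟩ | ⟨⟨e, f⟩, _, _⟩ <;> simp [nbr, baseNbr, cls]

lemma cls_of_nbr_eq_some {w u : TV r} {j : Fin r}
    (h : nbr j₁ j₂ w j = some u) : cls u = j := by
  rcases w with p | ⟨⟨e, f⟩, c, j'⟩
  · obtain ⟨d, hd, rfl⟩ := Option.map_eq_some_iff.mp h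
    rw [cls_gadgetCopy, (baseNbr_spec hd).1]
  · simp only [nbr] at h
    split_ifs at h <;> cases h <;> simp_all [cls]

lemma nbr_eq_some_of_thetaRel (hj : j₁ ≠ j₂) {w u : TV r} (h : thetaRel j₁ j₂ w u) :
    nbr j₁ j₂ w (cls u) = some u ∧ nbr j₁ j₂ u (cls w) = some w := by
  rcases w with p | ⟨⟨e, f⟩, c, j⟩ <;> rcases u with q | ⟨⟨e', f'⟩, c', j'⟩
  · exact h.elim
  · obtain ⟨hA, hcase⟩ := h
    have hef := DEdge.snd_ne hj hA.1
    have hlt := hA.2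
    rcases hcase with ⟨hs, rfl, ⟨rfl, rfl⟩ | ⟨rfl, rfl⟩⟩ | ⟨hs, ⟨rfl, rfl, rfl⟩ | ⟨rfl, rfl, rfl⟩⟩
    · simp [nbr, cls, baseNbr_of_dEdge hj hA.1, gadgetCopy, hlt, hs, hA, hef]
    · simp [nbr, cls, baseNbr_of_dEdge hj (DEdge.symm hA.1), gadgetCopy, hlt.not_gt, hA, hs,
        hef.symm]
    · simp [nbr, cls, baseNbr_of_dEdge hj hA.1, gadgetCopy, hlt, hs, hA, hef]
    · simp [nbr, cls, baseNbr_of_dEdge hj (DEdge.symm hA.1), gadgetCopy, hlt.not_gt, hA, hs,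
        hef.symm]
  · exact h.elim
  · obtain ⟨rfl, rfl, hA, hcase⟩ := h
    rcases hcase with ⟨hs, rfl, rfl, hne, hpair⟩ | ⟨hs, rfl, rfl, hne, hpair⟩
    · have h₁ : ¬(j' = e.2 ∧ j = f.2) := fun h => hpair (Or.inr h.symm)
      have h₂ : ¬(j' = f.2 ∧ j = e.2) := fun h => hpair (Or.inl h.symm)
      have h₃ : ¬(j = e.2 ∧ j' = f.2) := fun h => hpair (Or.inl h)
      have h₄ : ¬(j = f.2 ∧ j' = e.2) := fun h => hpair (Or.inr h)
      simp [nbr, cls, hA, hs, hne, Ne.symm hne, h₁, h₂, h₃, h₄]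
    · have h₁ : ¬(j' = f.2 ∧ j = e.2) := fun h => hpair h.symm
      simp [nbr, cls, hA, hs, hne, Ne.symm hne, hpair, h₁]

lemma thetaRel_of_nbr_eq_some (hj : j₁ ≠ j₂) {w u : TV r} {j : Fin r}
    (h : nbr j₁ j₂ w j = some u) : thetaRel j₁ j₂ w u ∨ thetaRel j₁ j₂ u w := by
  rcases w with p | ⟨⟨e, f⟩, c, jc⟩
  · obtain ⟨d, hd, rfl⟩ := Option.map_eq_some_iff.mp h
    obtain ⟨rfl, hDE⟩ := baseNbr_spec hd
    have henc : enc p ≠ enc d := fun h => DEdge.snd_ne hj hDE (congrArg Prod.snd (enc_injective h))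
    left
    unfold gadgetCopy
    by_cases hlt : enc p < enc d
    · rw [if_pos hlt]
      by_cases hs : p.1 = d.1
      · exact ⟨⟨hDE, hlt⟩, Or.inl ⟨hs, if_pos hs, Or.inl ⟨rfl, rfl⟩⟩⟩
      · exact ⟨⟨hDE, hlt⟩, Or.inr ⟨hs, Or.inl ⟨rfl, if_neg hs, rfl⟩⟩⟩
    · rw [if_neg hlt]
      refine ⟨⟨DEdge.symm hDE, by omega⟩, ?_⟩
      by_cases hs : d.1 = p.1
      · exact Or.inl ⟨hs, rfl, Or.inr ⟨rfl, rfl⟩⟩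
      · exact Or.inr ⟨hs, Or.inr ⟨rfl, rfl, rfl⟩⟩
  · fin_cases c <;>
    · simp only [nbr] at h
      split_ifs at h <;> cases h <;> simp_all [thetaRel, eq_comm] <;> tauto

theorem thetaGraph_adj_iff (hj : j₁ ≠ j₂) {w u : TV r} :
    (thetaGraph j₁ j₂).Adj w u ↔ ∃ j, nbr j₁ j₂ w j = some u := by
  constructor
  · rintro ⟨-, h | h⟩
    · exact ⟨_, (nbr_eq_some_of_thetaRel hj h).1⟩
    · exact ⟨_, (nbr_eq_some_of_thetaRel hj h).2⟩
  · rintro ⟨j, h⟩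
    refine ⟨?_, thetaRel_of_nbr_eq_some hj h⟩
    rintro rfl
    have hself := nbr_cls_self (j₁ := j₁) (j₂ := j₂) w
    rw [cls_of_nbr_eq_some h, h] at hself
    exact Option.some_ne_none w hself

/-- The local form of `K_r`-divisibility: every vertex of `θ(D^{j₂}_{x→y})` has exactly one
neighbour in each class other than its own. -/
theorem nbr_isSome_iff {w : TV r} {j : Fin r} :
    (nbr j₁ j₂ w j).isSome ↔ IsVertex j₁ j₂ w ∧ j ≠ cls w := by
  rcases w with ⟨i, k⟩ | ⟨⟨e, f⟩, c, k⟩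
  · rcases fin_three_cases i with rfl | rfl | rfl <;>
      simp only [nbr, baseNbr, IsVertex, cls, Option.isSome_map] <;> split_ifs <;>
      simp_all [eq_comm]
  · fin_cases c <;> simp only [nbr, IsVertex, cls] <;> split_ifs <;> simp_all [eq_comm]

lemma isVertex_of_adj (hj : j₁ ≠ j₂) {w u : TV r} (h : (thetaGraph j₁ j₂).Adj w u) :
    IsVertex j₁ j₂ w := by
  obtain ⟨j, hju⟩ := (thetaGraph_adj_iff hj).mp h
  exact (nbr_isSome_iff.mp (Option.isSome_iff_exists.mpr ⟨u, hju⟩)).1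

lemma isVertex_of_nbr_eq_some (hj : j₁ ≠ j₂) {w u : TV r} {j : Fin r}
    (h : nbr j₁ j₂ w j = some u) : IsVertex j₁ j₂ u :=
  isVertex_of_adj hj ((thetaGraph_adj_iff hj).mpr ⟨j, h⟩).symm

lemma nbrOnSide2_x_iff (hj : j₁ ≠ j₂) {j : Fin r} (h : j ≠ j₁) :
    NbrOnSide2 j₁ j₂ (Sum.inl (0, j₁)) j ↔ j ≠ j₂ := by
  by_cases h₂ : j = j₂ <;>
    simp [NbrOnSide2, nbr, baseNbr, side_gadgetCopy, Ne.symm h, h₂, hj]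

lemma nbrOnSide2_y_iff (hj : j₁ ≠ j₂) {j : Fin r} (h : j ≠ j₁) :
    NbrOnSide2 j₁ j₂ (Sum.inl (1, j₁)) j ↔ j = j₂ := by
  by_cases h₂ : j = j₂ <;>
    simp [NbrOnSide2, nbr, baseNbr, side_gadgetCopy, Ne.symm h, h₂, hj]

lemma side_nbr_eq_two_iff {w u u' : TV r} {j j' : Fin r} (hw : side w ≠ 2)
    (hx : w ≠ Sum.inl (0, j₁)) (hy : w ≠ Sum.inl (1, j₁))
    (h : nbr j₁ j₂ w j = some u) (h' : nbr j₁ j₂ w j' = some u') :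
    side u = 2 ↔ side u' = 2 := by
  rcases w with ⟨i, k⟩ | ⟨⟨e, f⟩, c, k⟩
  · obtain ⟨d, hd, rfl⟩ := Option.map_eq_some_iff.mp h
    obtain ⟨d', hd', rfl⟩ := Option.map_eq_some_iff.mp h'
    rw [side_gadgetCopy, side_gadgetCopy]
    rcases fin_three_cases i with rfl | rfl | rfl
    · have hk : k ≠ j₁ := fun hk => hx (by rw [hk])
      simp only [baseNbr, hk, ↓reduceIte] at hd hd'
      split_ifs at hd hd' <;> cases hd <;> cases hd' <;> simp
    · have hk : k ≠ j₁ := fun hk => hy (by rw [hk])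
      simp [baseNbr, hk] at hd
    · exact absurd rfl hw
  · simp only [nbr] at h h'
    split_ifs at h h' <;> cases h <;> cases h' <;> simp_all [side]

lemma nbrOnSide2_iff_of_ne {w : TV r} {j j' : Fin r} (hw : side w ≠ 2)
    (hx : w ≠ Sum.inl (0, j₁)) (hy : w ≠ Sum.inl (1, j₁)) (h : j ≠ cls w) (h' : j' ≠ cls w) :
    NbrOnSide2 j₁ j₂ w j ↔ NbrOnSide2 j₁ j₂ w j' := by
  by_cases hv : IsVertex j₁ j₂ w
  · obtain ⟨u, hu⟩ := Option.isSome_iff_exists.mp (nbr_isSome_iff.mpr ⟨hv, h⟩)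
    obtain ⟨u', hu'⟩ := Option.isSome_iff_exists.mp (nbr_isSome_iff.mpr ⟨hv, h'⟩)
    simp only [NbrOnSide2, hu, hu', Option.some.injEq, exists_eq_left']
    exact side_nbr_eq_two_iff hw hx hy hu hu'
  · have hnone : ∀ j, nbr j₁ j₂ w j = none := fun j =>
      Option.not_isSome_iff_eq_none.mp fun hs => hv (nbr_isSome_iff.mp hs).1
    simp [NbrOnSide2, hnone]

theorem indicator_nbrOnSide2_sub (hj : j₁ ≠ j₂) {w : TV r} (hw : side w ≠ 2) {j₃ j₄ : Fin r}
    (h₃ : j₃ ≠ cls w) (h₄ : j₄ ≠ cls w) (h₄₂ : j₄ ≠ j₂) :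
    ((if NbrOnSide2 j₁ j₂ w j₃ then 1 else 0 : ℤ) - if NbrOnSide2 j₁ j₂ w j₄ then 1 else 0) =
      if w = Sum.inl (0, j₁) ∧ j₃ = j₂ then -1
      else if w = Sum.inl (1, j₁) ∧ j₃ = j₂ then 1 else 0 := by
  by_cases hx : w = Sum.inl (0, j₁)
  · subst hx
    simp only [nbrOnSide2_x_iff hj h₃, nbrOnSide2_x_iff hj h₄]
    by_cases h₃₂ : j₃ = j₂ <;> simp [h₃₂, h₄₂]
  by_cases hy : w = Sum.inl (1, j₁)
  · subst hy
    simp only [nbrOnSide2_y_iff hj h₃, nbrOnSide2_y_iff hj h₄]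
    by_cases h₃₂ : j₃ = j₂ <;> simp [h₃₂, h₄₂]
  simp only [nbrOnSide2_iff_of_ne hw hx hy h₃ h₄]
  simp [hx, hy]

lemma neighborSet_map_eq_empty {γ : Type*} {ψ : TV r ↪ γ} (hj : j₁ ≠ j₂) {v : γ}
    (hv : ¬∃ w, ψ w = v ∧ IsVertex j₁ j₂ w) :
    ((thetaGraph j₁ j₂).map ψ).neighborSet v = ∅ := by
  refine Set.eq_empty_of_forall_notMem fun z hz => hv ?_
  obtain ⟨a, b, hab, rfl, -⟩ := (SimpleGraph.map_adj ψ _ v z).mp hz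
  exact ⟨a, rfl, isVertex_of_adj hj hab⟩

section Labelling

variable {γ : Type*} [DecidableEq γ] {V : Fin r → Finset γ} {U1 U2 : Finset γ} {ψ : TV r ↪ γ}

def Located (ψ : TV r ↪ γ) (V : Fin r → Finset γ) (U1 U2 : Finset γ) (u : TV r) : Prop :=
  ψ u ∈ (if side u = 2 then U2 else U1) ∩ V (cls u)

lemma Located.mem_V {u : TV r} (h : Located ψ V U1 U2 u) : ψ u ∈ V (cls u) :=
  (Finset.mem_inter.mp h).2

lemma Located.mem_U2_iff (hU : Disjoint U1 U2) {u : TV r} (h : Located ψ V U1 U2 u) :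
    ψ u ∈ U2 ↔ side u = 2 := by
  have hmem := (Finset.mem_inter.mp h).1
  split_ifs at hmem with hs
  · exact iff_of_true hmem hs
  · exact iff_of_false (Finset.disjoint_left.mp hU hmem) hs

lemma located_of_isVertex (hx : ψ (Sum.inl (0, j₁)) ∈ U1 ∩ V j₁)
    (hy : ψ (Sum.inl (1, j₁)) ∈ U1 ∩ V j₁)
    (hψ1 : ∀ j : Fin r, j ≠ j₁ → ψ (Sum.inl (0, j)) ∈ U1 ∩ V j)
    (hψ3 : ∀ j : Fin r, j ≠ j₁ → ψ (Sum.inl (2, j)) ∈ U2 ∩ V j)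
    (hψin : ∀ e f : Fin 3 × Fin r, Active j₁ j₂ e f → ∀ j : Fin r,
      (ψ (Sum.inr ⟨⟨e, f⟩, ⟨0, j⟩⟩) ∈ (if e.1 = 2 then U2 else U1) ∩ V j) ∧
      (e.1 ≠ f.1 → ψ (Sum.inr ⟨⟨e, f⟩, ⟨1, j⟩⟩) ∈ (if f.1 = 2 then U2 else U1) ∩ V j))
    {u : TV r} (hu : IsVertex j₁ j₂ u) : Located ψ V U1 U2 u := by
  rcases u with ⟨i, k⟩ | ⟨⟨e, f⟩, c, k⟩
  · obtain ⟨h₁, h₂⟩ := hu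
    rcases fin_three_cases i with rfl | rfl | rfl
    · by_cases hk : k = j₁
      · subst hk; exact hx
      · exact hψ1 k hk
    · obtain rfl := h₁ rfl; exact hy
    · exact hψ3 k (h₂ rfl)
  · obtain ⟨hA, hc⟩ := hu
    fin_cases c
    · exact (hψin e f hA k).1
    · exact (hψin e f hA k).2 (hc rfl)

lemma adj_and_mem_V_iff (hj : j₁ ≠ j₂) (hVdisj : ∀ j j' : Fin r, j ≠ j' → Disjoint (V j) (V j'))
    (hloc : ∀ u, IsVertex j₁ j₂ u → Located ψ V U1 U2 u) {w u : TV r} {j : Fin r} :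
    (thetaGraph j₁ j₂).Adj w u ∧ ψ u ∈ V j ↔ nbr j₁ j₂ w j = some u := by
  rw [thetaGraph_adj_iff hj]
  constructor
  · rintro ⟨⟨j', h⟩, hV⟩
    have hV' := (hloc u (isVertex_of_nbr_eq_some hj h)).mem_V
    rw [cls_of_nbr_eq_some h] at hV'
    obtain rfl : j = j' := by
      by_contra hne
      exact Finset.disjoint_left.mp (hVdisj j j' hne) hV hV'
    exact h
  · intro h
    have hV := (hloc u (isVertex_of_nbr_eq_some hj h)).mem_V
    rw [cls_of_nbr_eq_some h] at hV
    exact ⟨⟨j, h⟩, hV⟩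

lemma adj_and_mem_U2_inter_V_iff (hj : j₁ ≠ j₂)
    (hVdisj : ∀ j j' : Fin r, j ≠ j' → Disjoint (V j) (V j')) (hU : Disjoint U1 U2)
    (hloc : ∀ u, IsVertex j₁ j₂ u → Located ψ V U1 U2 u) {w u : TV r} {j : Fin r} :
    (thetaGraph j₁ j₂).Adj w u ∧ ψ u ∈ U2 ∩ V j ↔ nbr j₁ j₂ w j = some u ∧ side u = 2 := by
  rw [Finset.mem_inter, and_comm (a := ψ u ∈ U2), ← and_assoc,
    adj_and_mem_V_iff hj hVdisj hloc]
  exact and_congr_right fun h => (hloc u (isVertex_of_nbr_eq_some hj h)).mem_U2_iff hU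

theorem ncard_inter_neighborSet_map_eq (hj : j₁ ≠ j₂)
    (hVdisj : ∀ j j' : Fin r, j ≠ j' → Disjoint (V j) (V j'))
    (hloc : ∀ u, IsVertex j₁ j₂ u → Located ψ V U1 U2 u) {j j' : Fin r} {v : γ}
    (h : v ∉ V j) (h' : v ∉ V j') :
    ((V j : Set γ) ∩ ((thetaGraph j₁ j₂).map ψ).neighborSet v).ncard =
      ((V j' : Set γ) ∩ ((thetaGraph j₁ j₂).map ψ).neighborSet v).ncard := by
  by_cases hv : ∃ w, ψ w = v ∧ IsVertex j₁ j₂ w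
  · obtain ⟨w, rfl, hw⟩ := hv
    have hV := (hloc w hw).mem_V
    have hjw : j ≠ cls w := fun hc => h (by rw [hc]; exact hV)
    have hjw' : j' ≠ cls w := fun hc => h' (by rw [hc]; exact hV)
    simp only [SimpleGraph.ncard_inter_neighborSet_map, Finset.mem_coe,
      adj_and_mem_V_iff hj hVdisj hloc, Option.ncard_setOf_eq_some]
    rw [if_pos (nbr_isSome_iff.mpr ⟨hw, hjw⟩), if_pos (nbr_isSome_iff.mpr ⟨hw, hjw'⟩)]
  · simp [neighborSet_map_eq_empty hj hv]

theorem ncard_U2_inter_neighborSet_map_sub (hj : j₁ ≠ j₂)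
    (hVdisj : ∀ j j' : Fin r, j ≠ j' → Disjoint (V j) (V j')) (hU : Disjoint U1 U2)
    (hloc : ∀ u, IsVertex j₁ j₂ u → Located ψ V U1 U2 u) {j₃ j₄ : Fin r} (h₄₂ : j₄ ≠ j₂)
    {v : γ} (hv : v ∈ U1) (h₃ : v ∉ V j₃) (h₄ : v ∉ V j₄) :
    ((((U2 ∩ V j₃ : Finset γ) : Set γ) ∩ ((thetaGraph j₁ j₂).map ψ).neighborSet v).ncard : ℤ) -
        ((((U2 ∩ V j₄ : Finset γ) : Set γ) ∩ ((thetaGraph j₁ j₂).map ψ).neighborSet v).ncard : ℤ) =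
      if v = ψ (Sum.inl (0, j₁)) ∧ j₃ = j₂ then -1
      else if v = ψ (Sum.inl (1, j₁)) ∧ j₃ = j₂ then 1 else 0 := by
  by_cases hvw : ∃ w, ψ w = v ∧ IsVertex j₁ j₂ w
  · obtain ⟨w, rfl, hw⟩ := hvw
    have hV := (hloc w hw).mem_V
    have hside : side w ≠ 2 := fun hs =>
      Finset.disjoint_left.mp hU hv (((hloc w hw).mem_U2_iff hU).mpr hs)
    simp only [SimpleGraph.ncard_inter_neighborSet_map, Finset.mem_coe,
      adj_and_mem_U2_inter_V_iff hj hVdisj hU hloc, Option.ncard_setOf_eq_some_and,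
      ψ.injective.eq_iff]
    push_cast
    have hj₃ : j₃ ≠ cls w := fun hc => h₃ (by rw [hc]; exact hV)
    have hj₄ : j₄ ≠ cls w := fun hc => h₄ (by rw [hc]; exact hV)
    exact indicator_nbrOnSide2_sub hj hside hj₃ hj₄ h₄₂
  · have hx : v ≠ ψ (Sum.inl (0, j₁)) := fun hc => hvw ⟨_, hc.symm, by simp [IsVertex]⟩
    have hy : v ≠ ψ (Sum.inl (1, j₁)) := fun hc => hvw ⟨_, hc.symm, by simp [IsVertex]⟩
    simp [neighborSet_map_eq_empty hj hvw, hx, hy]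

end Labelling

end ThetaGadget

theorem stmt17_general {γ : Type*} [DecidableEq γ] {r : ℕ}
    (V : Fin r → Finset γ) (U1 U2 : Finset γ)
    (hVdisj : ∀ j₁ j₂ : Fin r, j₁ ≠ j₂ → Disjoint (V j₁) (V j₂))
    (hU : Disjoint U1 U2)
    (j₁ j₂ : Fin r) (hj : j₁ ≠ j₂)
    (x y : γ) (hx : x ∈ U1 ∩ V j₁) (hy : y ∈ U1 ∩ V j₁)
    (ψ : TV r ↪ γ)
    (hψx : ψ (Sum.inl (0, j₁)) = x) (hψy : ψ (Sum.inl (1, j₁)) = y)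
    (hψ1 : ∀ j : Fin r, j ≠ j₁ → ψ (Sum.inl (0, j)) ∈ U1 ∩ V j)
    (hψ3 : ∀ j : Fin r, j ≠ j₁ → ψ (Sum.inl (2, j)) ∈ U2 ∩ V j)
    (hψin : ∀ e f : Fin 3 × Fin r, Active j₁ j₂ e f → ∀ j : Fin r,
      (ψ (Sum.inr ⟨⟨e, f⟩, ⟨0, j⟩⟩) ∈ (if e.1 = 2 then U2 else U1) ∩ V j) ∧
      (e.1 ≠ f.1 → ψ (Sum.inr ⟨⟨e, f⟩, ⟨1, j⟩⟩) ∈ (if f.1 = 2 then U2 else U1) ∩ V j))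
    (D₂ : SimpleGraph γ) (hD₂ : D₂ = (thetaGraph j₁ j₂).map ψ) :
    (∀ j j' : Fin r, ∀ v : γ, v ∉ V j → v ∉ V j' →
      ((V j : Set γ) ∩ D₂.neighborSet v).ncard =
        ((V j' : Set γ) ∩ D₂.neighborSet v).ncard) ∧
    (∀ j₃ j₄ : Fin r, j₄ ≠ j₂ → ∀ v ∈ U1, v ∉ V j₃ → v ∉ V j₄ →
      ((((U2 ∩ V j₃ : Finset γ) : Set γ) ∩ D₂.neighborSet v).ncard : ℤ) -
        ((((U2 ∩ V j₄ : Finset γ) : Set γ) ∩ D₂.neighborSet v).ncard : ℤ) =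
      if v = x ∧ j₃ = j₂ then -1 else if v = y ∧ j₃ = j₂ then 1 else 0) := by
  subst hD₂ hψx hψy
  have hloc : ∀ u, ThetaGadget.IsVertex j₁ j₂ u → ThetaGadget.Located ψ V U1 U2 u :=
    fun u => ThetaGadget.located_of_isVertex hx hy hψ1 hψ3 hψin
  exact ⟨fun j j' v => ThetaGadget.ncard_inter_neighborSet_map_eq hj hVdisj hloc,
    fun j₃ j₄ h₄₂ v hv => ThetaGadget.ncard_U2_inter_neighborSet_map_sub hj hVdisj hU hloc h₄₂ hv⟩

/-- Let `P = {U¹, U²}` be a 2-partition of `V = (V 1, ..., V r)`, `j₁ ≠ j₂` and let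
`x ≠ y ∈ U¹ ∩ V j₁`.  If `D₂ = ψ(θ(D^{j₂}_{x→y}))` is a copy of the gadget graph compatible
with its labelling, then `D₂` is `K_r`-divisible, and for all `j₃, j₄` with `j₄ ≠ j₂` and all
`v ∈ U¹ \ (V j₃ ∪ V j₄)` the difference `d_{D₂}(v, U² ∩ V j₃) - d_{D₂}(v, U² ∩ V j₄)` equals
`-1` if `v = x ∧ j₃ = j₂`, `+1` if `v = y ∧ j₃ = j₂`, and `0` otherwise. -/
theorem stmt17 {γ : Type*} [DecidableEq γ] {r : ℕ} (hr : 3 ≤ r)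
    (V : Fin r → Finset γ) (U1 U2 : Finset γ)
    (hVdisj : ∀ j₁ j₂ : Fin r, j₁ ≠ j₂ → Disjoint (V j₁) (V j₂))
    (hU : Disjoint U1 U2) (hUcov : ∀ z : γ, z ∈ U1 ∨ z ∈ U2)
    (j₁ j₂ : Fin r) (hj : j₁ ≠ j₂)
    (x y : γ) (hx : x ∈ U1 ∩ V j₁) (hy : y ∈ U1 ∩ V j₁) (hxy : x ≠ y)
    (ψ : TV r ↪ γ)
    (hψx : ψ (Sum.inl (0, j₁)) = x) (hψy : ψ (Sum.inl (1, j₁)) = y)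
    (hψ1 : ∀ j : Fin r, j ≠ j₁ → ψ (Sum.inl (0, j)) ∈ U1 ∩ V j)
    (hψ3 : ∀ j : Fin r, j ≠ j₁ → ψ (Sum.inl (2, j)) ∈ U2 ∩ V j)
    (hψin : ∀ e f : Fin 3 × Fin r, Active j₁ j₂ e f → ∀ j : Fin r,
      (ψ (Sum.inr ⟨⟨e, f⟩, ⟨0, j⟩⟩) ∈ (if e.1 = 2 then U2 else U1) ∩ V j) ∧
      (e.1 ≠ f.1 → ψ (Sum.inr ⟨⟨e, f⟩, ⟨1, j⟩⟩) ∈ (if f.1 = 2 then U2 else U1) ∩ V j))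
    (D₂ : SimpleGraph γ) (hD₂ : D₂ = (thetaGraph j₁ j₂).map ψ) :
    (∀ j j' : Fin r, ∀ v : γ, v ∉ V j → v ∉ V j' →
      ((V j : Set γ) ∩ D₂.neighborSet v).ncard =
        ((V j' : Set γ) ∩ D₂.neighborSet v).ncard) ∧
    (∀ j₃ j₄ : Fin r, j₄ ≠ j₂ → ∀ v ∈ U1, v ∉ V j₃ → v ∉ V j₄ →
      ((((U2 ∩ V j₃ : Finset γ) : Set γ) ∩ D₂.neighborSet v).ncard : ℤ) -
        ((((U2 ∩ V j₄ : Finset γ) : Set γ) ∩ D₂.neighborSet v).ncard : ℤ) =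
      if v = x ∧ j₃ = j₂ then -1 else if v = y ∧ j₃ = j₂ then 1 else 0) :=
  stmt17_general V U1 U2 hVdisj hU j₁ j₂ hj x y hx hy ψ hψx hψy hψ1 hψ3 hψin D₂ hD₂
end
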